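/- arXiv:2411.08924 — 5 statements merged into one kernel-verified Lean document; each statement's English description precedes it below -/
import Mathlib

section
/- For all integers x ≥ 3, Σ_{s=3}^{x+1} 2·C(x, s−1)·x / C(6x−1, s) = [2x(x−1)(x+1)x(16x−2)] / [(x+1)(6x−1)(6x−2)·5x·(5x−1)]. -/
open Finset

/-- Hockey-stick: `∑_{T=0}^{m} C(r+T, T) = C(r+m+1, m)`. -/
lemma aux_hs (r m : ℕ) : ∑ T ∈ range (m+1), (r+T).choose T = (r+m+1).choose m := by
  induction m with
  | zero => simp
  | succ n ih =>
      rw [sum_range_succ, ih]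
      have h : r + (n+1) + 1 = (r+n+1) + 1 := by ring
      rw [h, Nat.choose_succ_succ (r+n+1) n]
      congr 1

/-- Weighted hockey-stick: `∑_{T=0}^{m+1} T·C(r+T, T) = (r+1)·C(r+m+2, m)`. -/
lemma aux_ht (r m : ℕ) :
    ∑ T ∈ range (m+2), T * ((r+T).choose T) = (r+1) * ((r+m+2).choose m) := by
  rw [Finset.sum_range_succ']
  have hterm : ∀ i : ℕ, (i+1) * ((r+(i+1)).choose (i+1)) = (r+1) * ((r+1+i).choose i) := by
    intro i
    have h := Nat.choose_succ_right_eq (r+i+1) i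
    have h2 : r + i + 1 - i = r + 1 := by omega
    have h3 : r + (i+1) = r + i + 1 := by ring
    rw [h2] at h
    rw [h3]
    have h4 : r + 1 + i = r + i + 1 := by ring
    rw [h4]
    simpa [Nat.mul_comm] using h
  have : (∑ i ∈ range (m+1), (i+1) * ((r+(i+1)).choose (i+1)))
      = ∑ i ∈ range (m+1), (r+1) * ((r+1+i).choose i) := by
    exact Finset.sum_congr rfl fun i _ => hterm i
  rw [this, ← Finset.mul_sum, aux_hs (r+1) m]
  have : r + 1 + m + 1 = r + m + 2 := by ring
  rw [this]
  simp

set_option maxHeartbeats 4000000 in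
/-- The closed-form identity
`∑_{s=3}^{x+1} 2·C(x,s-1)·x / C(6x-1,s)
  = 2x(x-1)(x+1)x(16x-2) / [(x+1)(6x-1)(6x-2)·5x·(5x-1)]`. -/
theorem stmt12 (x : ℕ) (hx : 3 ≤ x) :
    ∑ s ∈ Finset.Icc 3 (x + 1),
        2 * (x.choose (s - 1) : ℝ) * (x : ℝ) / ((6 * x - 1).choose s : ℝ) =
      2 * (x : ℝ) * ((x : ℝ) - 1) * ((x : ℝ) + 1) * (x : ℝ) * (16 * (x : ℝ) - 2) /
        (((x : ℝ) + 1) * (6 * (x : ℝ) - 1) * (6 * (x : ℝ) - 2) * (5 * (x : ℝ)) *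
          (5 * (x : ℝ) - 1)) := by
  obtain ⟨y, rfl⟩ : ∃ y, x = y + 3 := ⟨x - 3, by omega⟩
  have hidx : 6 * (y + 3) - 1 = 6 * y + 17 := by omega
  rw [hidx]
  set Y : ℝ := (y : ℝ) with hY
  clear_value Y
  -- cast of x
  have hxc : ((y + 3 : ℕ) : ℝ) = Y + 3 := by rw [hY]; push_cast; ring
  rw [hxc]
  set A : ℝ := ((6*y+17).choose (y+4) : ℝ) with hA
  clear_value A
  have hApos : (0:ℝ) < A := by
    rw [hA]; exact_mod_cast Nat.choose_pos (by omega)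
  -- Step 1: termwise rewrite
  have key : ∀ s ∈ Finset.Icc 3 (y+4),
      2 * ((y+3).choose (s - 1) : ℝ) * (Y + 3) / ((6*y+17).choose s : ℝ)
        = (2 * (Y + 3) / ((Y + 4) * A)) *
            ((s : ℝ) * ((6*y+17-s).choose (y+4-s) : ℝ)) := by
    intro s hs
    rw [Finset.mem_Icc] at hs
    have h1 : (y+4) * ((y+3).choose (s-1)) = (y+4).choose s * s := by
      have h0 := Nat.add_one_mul_choose_eq (y+3) (s-1)
      have hss : s - 1 + 1 = s := by omega
      simp only [Nat.succ_eq_add_one, hss] at h0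
      simpa using h0
    have h2 : (6*y+17).choose (y+4) * ((y+4).choose s)
        = (6*y+17).choose s * ((6*y+17-s).choose (y+4-s)) := by
      exact Nat.choose_mul (n := 6*y+17) (k := y+4) (s := s) hs.2
    have hcs : (0:ℝ) < ((6*y+17).choose s : ℝ) := by
      exact_mod_cast Nat.choose_pos (by omega)
    have h1' : ((y:ℝ)+4) * ((y+3).choose (s-1) : ℝ) = ((y+4).choose s : ℝ) * s := by
      exact_mod_cast h1
    have h2' : A * ((y+4).choose s : ℝ)
        = ((6*y+17).choose s : ℝ) * ((6*y+17-s).choose (y+4-s) : ℝ) := by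
      rw [hA]; exact_mod_cast h2
    have hYpos : (0:ℝ) ≤ Y := hY ▸ Nat.cast_nonneg y
    have hY4 : (Y + 4) ≠ 0 := by intro hc; linarith
    rw [div_mul_eq_mul_div,
      div_eq_div_iff (ne_of_gt hcs) (mul_ne_zero hY4 (ne_of_gt hApos))]
    rw [hY]
    linear_combination (2*((y:ℝ)+3)*A)*h1' + (2*((y:ℝ)+3)*(s:ℝ))*h2'
  rw [Finset.sum_congr rfl key, ← Finset.mul_sum]
  -- Step 2: evaluate the inner sum
  have hsum : ∑ s ∈ Finset.Icc 3 (y+4), ((s : ℝ) * ((6*y+17-s).choose (y+4-s) : ℝ))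
      = (Y + 4) * ((6*y+15).choose (y+1) : ℝ) - (5*Y+14) * ((6*y+15).choose y : ℝ) := by
    rw [← Finset.Ico_add_one_right_eq_Icc, Finset.sum_Ico_eq_sum_range]
    have hn : y + 4 + 1 - 3 = y + 2 := by omega
    rw [hn]
    rw [← Finset.sum_range_reflect]
    have hcong : ∀ T ∈ range (y+2),
        ((3 + (y + 2 - 1 - T) : ℕ) : ℝ) *
            (((6*y+17 - (3 + (y + 2 - 1 - T))).choose (y+4 - (3 + (y + 2 - 1 - T)))) : ℝ)
          = ((Y + 4) - T) * (((5*y+13+T).choose T : ℝ)) := by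
      intro T hT
      rw [Finset.mem_range] at hT
      have e1 : 3 + (y + 2 - 1 - T) = y + 4 - T := by omega
      have e2 : 6*y+17 - (y+4-T) = 5*y+13+T := by omega
      have e3 : y+4 - (y+4-T) = T := by omega
      rw [e1, e2, e3]
      congr 1
      have : ((y + 4 - T : ℕ) : ℝ) = ((y:ℝ) + 4) - T := by
        have hT' : T ≤ y + 4 := by omega
        push_cast [Nat.cast_sub hT']
        ring
      rw [this, hY]
    rw [Finset.sum_congr rfl hcong]
    have hsplit : ∑ T ∈ range (y+2), (((Y + 4) - (T:ℝ)) * (((5*y+13+T).choose T : ℝ)))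
        = (Y+4) * (∑ T ∈ range (y+2), (((5*y+13+T).choose T : ℝ)))
          - ∑ T ∈ range (y+2), ((T:ℝ) * (((5*y+13+T).choose T : ℝ))) := by
      rw [Finset.mul_sum, ← Finset.sum_sub_distrib]
      exact Finset.sum_congr rfl fun T _ => by ring
    rw [hsplit]
    have hs1 : ∑ T ∈ range (y+2), (((5*y+13+T).choose T : ℝ))
        = ((6*y+15).choose (y+1) : ℝ) := by
      have := aux_hs (5*y+13) (y+1)
      have h : 5*y+13 + (y+1) + 1 = 6*y+15 := by omega
      rw [h] at this
      exact_mod_cast congrArg (Nat.cast : ℕ → ℝ) this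
    have hs2 : ∑ T ∈ range (y+2), ((T:ℝ) * (((5*y+13+T).choose T : ℝ)))
        = (5*Y+14) * ((6*y+15).choose y : ℝ) := by
      have := aux_ht (5*y+13) y
      have h : 5*y+13 + y + 2 = 6*y+15 := by omega
      rw [h] at this
      have := congrArg (Nat.cast : ℕ → ℝ) this
      push_cast at this ⊢
      rw [hY]
      linarith [this]
    rw [hs1, hs2]
  rw [hsum]
  clear key hsum hxc hidx hx
  -- Step 3: final algebra
  set C1 : ℝ := ((6*y+15).choose (y+1) : ℝ) with hC1
  set C2 : ℝ := ((6*y+15).choose y : ℝ) with hC2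
  set B : ℝ := ((6*y+16).choose (y+3) : ℝ) with hB
  set D : ℝ := ((6*y+15).choose (y+2) : ℝ) with hD
  clear_value C1 C2 B D
  have hC1pos : (0:ℝ) < C1 := by rw [hC1]; exact_mod_cast Nat.choose_pos (by omega)
  have f1 : C1 * (Y+1) = C2 * (5*Y+15) := by
    have h0 := Nat.choose_succ_right_eq (6*y+15) y
    have h : 6*y+15 - y = 5*y+15 := by omega
    rw [h] at h0
    rw [hC1, hC2, hY]
    exact_mod_cast h0
  have g1 : (6*Y+17) * B = A * (Y+4) := by
    have h0 := Nat.add_one_mul_choose_eq (6*y+16) (y+3)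
    simp only [Nat.succ_eq_add_one, show 6*y+16+1 = 6*y+17 from by ring,
      show y+3+1 = y+4 from by ring] at h0
    rw [hA, hB, hY]
    exact_mod_cast h0
  have g2 : (6*Y+16) * D = B * (Y+3) := by
    have h0 := Nat.add_one_mul_choose_eq (6*y+15) (y+2)
    simp only [Nat.succ_eq_add_one, show 6*y+15+1 = 6*y+16 from by ring,
      show y+2+1 = y+3 from by ring] at h0
    rw [hB, hD, hY]
    exact_mod_cast h0
  have g3 : D * (Y+2) = C1 * (5*Y+14) := by
    have h0 := Nat.choose_succ_right_eq (6*y+15) (y+1)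
    have h : 6*y+15 - (y+1) = 5*y+14 := by omega
    rw [h] at h0
    simp only [show y+1+1 = y+2 from by ring] at h0
    rw [hC1, hD, hY]
    exact_mod_cast h0
  have hYpos : (0:ℝ) ≤ Y := hY ▸ Nat.cast_nonneg y
  have h2 : (Y+2) ≠ 0 := by intro hc; linarith
  have h3 : (Y+3) ≠ 0 := by intro hc; linarith
  have h4 : (Y+4) ≠ 0 := by intro hc; linarith
  have h5 : (5*Y+15) ≠ 0 := by intro hc; linarith
  have h6 : (6*Y+16) ≠ 0 := by intro hc; linarith
  have h7 : (6*Y+17) ≠ 0 := by intro hc; linarith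
  have h8 : (5*Y+14) ≠ 0 := by intro hc; linarith
  have hC1ne : C1 ≠ 0 := ne_of_gt hC1pos
  have hC2e : C2 = C1 * (Y+1) / (5*Y+15) := by
    rw [eq_div_iff h5]; linarith
  have hAe : A = C1 * ((6*Y+17)*(6*Y+16)*(5*Y+14)) / ((Y+4)*(Y+3)*(Y+2)) := by
    rw [eq_div_iff (mul_ne_zero (mul_ne_zero h4 h3) h2)]
    linear_combination (-(Y+3)*(Y+2))*g1 + (-(6*Y+17)*(Y+2))*g2 + ((6*Y+17)*(6*Y+16))*g3
  rw [hC2e, hAe]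
  have k1 : (Y+3+1) ≠ 0 := by intro hc; linarith
  have k2 : (6*(Y+3)-1) ≠ 0 := by intro hc; linarith
  have k3 : (6*(Y+3)-2) ≠ 0 := by intro hc; linarith
  have k4 : (5*(Y+3)) ≠ 0 := by intro hc; linarith
  have k5 : (5*(Y+3)-1) ≠ 0 := by intro hc; linarith
  have k6 : (6*Y+17)*(6*Y+16)*(5*Y+14) ≠ 0 := mul_ne_zero (mul_ne_zero h7 h6) h8
  rw [eq_div_iff (mul_ne_zero (mul_ne_zero (mul_ne_zero (mul_ne_zero k1 k2) k3) k4) k5)]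
  field_simp
  ring
end

section
/- Let G_k ⊆ PG(k−1,2) (k ≥ 3) be the point set consisting of the k fundamental points E_1,...,E_k together with the k points E_{i,i+1} = E_i + E_{i+1} (indices mod k). Let β_F(G_k, s) be the number of s-subsets of G_k whose span does NOT contain E_1. Then for k ≥ 3 and 2 ≤ s ≤ 2k−3 with s ≠ k−1, β_F(G_k, s) = β_F(G_{k−1}, s−1) + Σ_{j=0}^{s} C(2k−2j−3, s−j), and for s = k−1 the same formula holds with an extra +1. Moreover β_F(G_k, s) = 0 for s ≥ 2k−2, β_F(G_k, 1) = 2k−1 for k > 1, β_F(G_2,2) = 1, β_F(G_2,3) = 0, and β_F(G_1, s) = 0. -/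
open scoped Classical

/-- The indexed family (multiset) of `2k` points of `PG(k-1,2)` consisting of
the `k` fundamental points `E_i` together with the cyclic consecutive sums
`E_i + E_{i+1}` (indices mod `k`). -/
def Gfam (k : ℕ) : Fin k ⊕ Fin k → (Fin k → ZMod 2) :=
  Sum.elim (fun i j => if (j : ℕ) = (i : ℕ) then 1 else 0)
    (fun i j => if (j : ℕ) = (i : ℕ) ∨ (j : ℕ) = ((i : ℕ) + 1) % k then 1 else 0)

/-- `betaF k s` is the number of `s`-element subsets of the multiset `G_k`
whose span does NOT contain the fundamental point `E_1`. -/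
noncomputable def betaF (k s : ℕ) : ℕ :=
  ((Finset.univ.powersetCard s).filter fun S : Finset (Fin k ⊕ Fin k) =>
    (fun j : Fin k => if (j : ℕ) = 0 then (1 : ZMod 2) else 0) ∉
      Submodule.span (ZMod 2) (Gfam k '' (S : Set (Fin k ⊕ Fin k)))).card

open Finset
open Fin.NatCast Fin.CommRing

section k2
variable {k : ℕ} [NeZero k]

def e0 (k : ℕ) [NeZero k] : Fin k → ZMod 2 := fun j => if (j : ℕ) = 0 then 1 else 0

lemma e0_eq : e0 k = Pi.single (0 : Fin k) 1 := by
  funext j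
  rw [Pi.single_apply, e0]
  congr 1
  exact propext Fin.val_eq_zero_iff

lemma gfam_inl (i : Fin k) : Gfam k (Sum.inl i) = Pi.single i 1 := by
  funext j
  rw [Gfam, Sum.elim_inl, Pi.single_apply]
  congr 1
  simp [Fin.ext_iff, eq_comm]

lemma val_add_one (hk : 2 ≤ k) (i : Fin k) : ((i+1 : Fin k) : ℕ) = ((i:ℕ)+1) % k := by
  rw [Fin.val_add, Fin.val_one']
  rw [Nat.one_mod_eq_one.mpr (by omega)]

lemma succ_ne (hk : 2 ≤ k) (i : Fin k) : i + 1 ≠ i := by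
  intro h
  have h2 := congrArg Fin.val h
  rw [val_add_one hk] at h2
  have hi := i.isLt
  rcases Nat.lt_or_ge ((i:ℕ)+1) k with h3 | h3
  · rw [Nat.mod_eq_of_lt h3] at h2; omega
  · have h4 : (i:ℕ)+1 = k := by omega
    rw [h4, Nat.mod_self] at h2
    omega

lemma gfam_inr (hk : 2 ≤ k) (i : Fin k) :
    Gfam k (Sum.inr i) = Pi.single i 1 + Pi.single (i+1) 1 := by
  funext j
  rw [Gfam, Sum.elim_inr, Pi.add_apply, Pi.single_apply, Pi.single_apply]
  have h1 : ((j : ℕ) = ((i : ℕ) + 1) % k) ↔ j = i + 1 := by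
    rw [← val_add_one hk, Fin.ext_iff]
  have h0 : ((j : ℕ) = (i : ℕ)) ↔ j = i := Fin.val_inj
  have hk1 : ¬ k = 1 := by omega
  by_cases h : j = i
  · have h2 : ¬ j = i + 1 := by rw [h]; exact fun hh => succ_ne hk i hh.symm
    simp [h0, h1, h, h2, hk1]
  · by_cases h2 : j = i + 1
    · subst h2
      simp [val_add_one hk i, succ_ne hk i, hk1]
    · simp [h0, h1, h, h2]

lemma zmod2_cases (x : ZMod 2) : x = 0 ∨ x = 1 := by revert x; decide

lemma zmod2_add_eq_zero (x y : ZMod 2) : x + y = 0 ↔ x = y := by revert x y; decide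

/-- The dual characterization. -/
lemma notmem_span_iff (hk : 2 ≤ k) (S : Finset (Fin k ⊕ Fin k)) :
    (e0 k ∉ Submodule.span (ZMod 2) (Gfam k '' (S : Set (Fin k ⊕ Fin k)))) ↔
    ∃ c : Fin k → ZMod 2, c 0 = 1 ∧ (∀ i, Sum.inl i ∈ S → c i = 0) ∧
      (∀ i, Sum.inr i ∈ S → c i = c (i+1)) := by
  constructor
  · intro h
    set W := Submodule.span (ZMod 2) (Gfam k '' (S : Set (Fin k ⊕ Fin k))) with hW
    have hq : W.mkQ (e0 k) ≠ 0 := by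
      rw [Submodule.mkQ_apply]
      exact fun hz => h ((Submodule.Quotient.mk_eq_zero W).mp hz)
    obtain ⟨ψ, hψ⟩ : ∃ ψ : Module.Dual (ZMod 2) (_ ⧸ W), ψ (W.mkQ (e0 k)) ≠ 0 := by
      by_contra hc
      push_neg at hc
      exact hq ((Module.forall_dual_apply_eq_zero_iff (ZMod 2) _).mp hc)
    set φ : (Fin k → ZMod 2) →ₗ[ZMod 2] ZMod 2 := ψ.comp W.mkQ with hφ
    have hvan : ∀ x ∈ S, φ (Gfam k x) = 0 := by
      intro x hx
      have : Gfam k x ∈ W := Submodule.subset_span ⟨x, hx, rfl⟩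
      simp [hφ, (Submodule.Quotient.mk_eq_zero W).mpr this]
    refine ⟨fun i => φ (Pi.single i 1), ?_, ?_, ?_⟩
    · have h0 : φ (e0 k) ≠ 0 := hψ
      rw [e0_eq] at h0
      rcases zmod2_cases (φ (Pi.single (0:Fin k) 1)) with h' | h'
      · exact absurd h' h0
      · exact h'
    · intro i hi
      have := hvan _ hi
      rwa [gfam_inl] at this
    · intro i hi
      have := hvan _ hi
      rw [gfam_inr hk, map_add] at this
      exact (zmod2_add_eq_zero _ _).mp this
  · rintro ⟨c, hc0, hcl, hcr⟩ hmem
    set φ : (Fin k → ZMod 2) →ₗ[ZMod 2] ZMod 2 :=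
      ∑ i : Fin k, c i • LinearMap.proj i with hφ
    have hsingle : ∀ j : Fin k, φ (Pi.single j 1) = c j := by
      intro j
      rw [hφ]
      simp only [LinearMap.sum_apply, LinearMap.smul_apply, LinearMap.proj_apply]
      rw [Finset.sum_eq_single j]
      · simp
      · intro b _ hb; simp [Pi.single_apply, hb.symm]
      · simp
    have hker : Submodule.span (ZMod 2) (Gfam k '' (S : Set (Fin k ⊕ Fin k))) ≤
        LinearMap.ker φ := by
      rw [Submodule.span_le]
      rintro _ ⟨x, hx, rfl⟩
      rcases x with i | i
      · simp only [SetLike.mem_coe, LinearMap.mem_ker]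
        rw [gfam_inl, hsingle]
        exact hcl i hx
      · simp only [SetLike.mem_coe, LinearMap.mem_ker]
        rw [gfam_inr hk, map_add, hsingle, hsingle]
        rw [zmod2_add_eq_zero]
        exact hcr i hx
    have : φ (e0 k) = 0 := hker hmem
    rw [e0_eq, hsingle, hc0] at this
    exact one_ne_zero this


lemma cast_inj_lt {x y : ℕ} (hx : x < k) (hy : y < k) (h : (x : Fin k) = (y : Fin k)) : x = y := by
  have := congrArg Fin.val h
  rwa [Fin.val_cast_of_lt hx, Fin.val_cast_of_lt hy] at this

lemma cast_mod (a : ℕ) : ((a % k : ℕ) : Fin k) = (a : Fin k) := by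
  conv_rhs => rw [← Nat.div_add_mod a k]
  rw [Nat.cast_add, Nat.cast_mul, Fin.natCast_self, zero_mul, zero_add]

lemma neg_cast_sub (t i : ℕ) (h : i ≤ t) : (-(t:Fin k) + (i:Fin k)) = -(((t-i : ℕ)) : Fin k) := by
  rw [Nat.cast_sub h]; ring

lemma neg_cast_add (t i : ℕ) (h : t ≤ i) : (-(t:Fin k) + (i:Fin k)) = (((i-t : ℕ)) : Fin k) := by
  rw [Nat.cast_sub h]; ring

/-- forced-in edges of the arc indexed by `p = (len, t)`. -/
noncomputable def Ain (k : ℕ) [NeZero k] (p : ℕ × ℕ) : Finset (Fin k ⊕ Fin k) :=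
  (range (p.1 - 1)).image fun i : ℕ => Sum.inr (-(p.2 : Fin k) + (i : Fin k))

/-- forced-out elements: spokes of the arc and the two boundary edges. -/
noncomputable def Aout (k : ℕ) [NeZero k] (p : ℕ × ℕ) : Finset (Fin k ⊕ Fin k) :=
  ((range p.1).image fun i : ℕ => Sum.inl (-(p.2 : Fin k) + (i : Fin k))) ∪
  {Sum.inr (-(p.2 : Fin k) - 1), Sum.inr (-(p.2 : Fin k) + ((p.1 - 1 : ℕ) : Fin k))}

def acond (k : ℕ) [NeZero k] (p : ℕ × ℕ) (S : Finset (Fin k ⊕ Fin k)) : Prop :=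
  if p.1 = k then (S ⊆ Finset.univ.image Sum.inr ∧ k - 1 ≤ S.card)
  else (Ain k p ⊆ S ∧ Disjoint (Aout k p) S)

def Pidx (k : ℕ) : Finset (ℕ × ℕ) :=
  insert (k, 0) ((range k ×ˢ range k).filter fun p => p.2 < p.1)

lemma card_Ain {len t : ℕ} (hlk : len < k) : (Ain k (len, t)).card = len - 1 := by
  rw [Ain]
  rw [Finset.card_image_of_injOn, Finset.card_range]
  intro x hx y hy hxy
  rw [Finset.mem_coe, Finset.mem_range] at hx hy
  have := add_left_cancel (Sum.inr_injective hxy)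
  exact cast_inj_lt (by omega) (by omega) this

lemma bdry_ne {len t : ℕ} (h1 : 1 ≤ len) (hlk : len < k) :
    (-(t : Fin k) - 1) ≠ (-(t : Fin k) + ((len - 1 : ℕ) : Fin k)) := by
  intro h
  have h2 : ((len - 1 : ℕ) : Fin k) + 1 = 0 := by linear_combination -h
  rw [Nat.cast_sub h1, Nat.cast_one, sub_add_cancel] at h2
  have := congrArg Fin.val h2
  rw [Fin.val_cast_of_lt hlk] at this
  simp at this
  omega

lemma card_Aout {len t : ℕ} (h1 : 1 ≤ len) (hlk : len < k) :
    (Aout k (len, t)).card = len + 2 := by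
  rw [Aout]
  rw [Finset.card_union_of_disjoint]
  · rw [Finset.card_image_of_injOn, Finset.card_range, Finset.card_insert_of_notMem,
      Finset.card_singleton]
    · simp only [Finset.mem_singleton]
      intro h
      exact bdry_ne h1 hlk (Sum.inr_injective h)
    · intro x hx y hy hxy
      rw [Finset.mem_coe, Finset.mem_range] at hx hy
      have := add_left_cancel (Sum.inl_injective hxy)
      exact cast_inj_lt (by omega) (by omega) this
  · rw [Finset.disjoint_left]
    rintro x hx
    rw [Finset.mem_image] at hx
    obtain ⟨i, -, rfl⟩ := hx
    simp

lemma disj_Ain_Aout {len t : ℕ} (hlt : t < len) (hlk : len < k) :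
    Disjoint (Ain k (len, t)) (Aout k (len, t)) := by
  rw [Finset.disjoint_left]
  intro x hx hx'
  rw [Ain, Finset.mem_image] at hx
  obtain ⟨i, hi, rfl⟩ := hx
  rw [Finset.mem_range] at hi
  rw [Aout, Finset.mem_union, Finset.mem_image] at hx'
  rcases hx' with ⟨j, -, hj⟩ | hx'
  · exact Sum.inl_ne_inr hj
  · simp only [Finset.mem_insert, Finset.mem_singleton] at hx'
    rcases hx' with h | h
    · have h2 := Sum.inr_injective h
      have h3 : ((i + 1 : ℕ) : Fin k) = 0 := by push_cast; linear_combination h2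
      have := congrArg Fin.val h3
      rw [Fin.val_cast_of_lt (by omega)] at this
      simp at this
    · have h2 := add_left_cancel (Sum.inr_injective h)
      have := cast_inj_lt (by omega) (by omega) h2
      omega


-- the backward direction
lemma cond_to_c (hk : 2 ≤ k) (S : Finset (Fin k ⊕ Fin k)) (p : ℕ × ℕ) (hp : p ∈ Pidx k)
    (hc : acond k p S) :
    ∃ c : Fin k → ZMod 2, c 0 = 1 ∧ (∀ i, Sum.inl i ∈ S → c i = 0) ∧
      (∀ i, Sum.inr i ∈ S → c i = c (i+1)) := by
  by_cases hfull : p.1 = k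
  · rw [acond, if_pos hfull] at hc
    refine ⟨fun _ => 1, rfl, ?_, fun _ _ => rfl⟩
    intro i hi
    have := hc.1 hi
    simp only [Finset.mem_image] at this
    obtain ⟨j, -, hj⟩ := this
    exact absurd hj (by simp)
  · rw [acond, if_neg hfull] at hc
    have hp' : p ∈ (range k ×ˢ range k).filter fun p => p.2 < p.1 := by
      rcases Finset.mem_insert.mp hp with h | h
      · exact absurd (congrArg Prod.fst h) hfull
      · exact h
    rw [Finset.mem_filter, Finset.mem_product, Finset.mem_range, Finset.mem_range] at hp'
    obtain ⟨⟨hlk, htk⟩, hlt⟩ := hp'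
    obtain ⟨len, t⟩ := p
    simp only at hlk htk hlt hc hfull
    obtain ⟨hin, hout⟩ := hc
    set a : Fin k := -(t : Fin k) with ha
    set arcF : Finset (Fin k) := (range len).image fun i : ℕ => a + (i : Fin k) with harc
    have mem_arcF : ∀ v : Fin k, v ∈ arcF ↔ ∃ i < len, a + (i : Fin k) = v := by
      intro v; simp [harc]
    refine ⟨fun v => if v ∈ arcF then 1 else 0, ?_, ?_, ?_⟩
    · beta_reduce
      rw [if_pos]
      rw [mem_arcF]
      exact ⟨t, hlt, by rw [ha]; ring⟩
    · intro i hi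
      beta_reduce
      rw [if_neg]
      intro hmem
      rw [mem_arcF] at hmem
      obtain ⟨j, hj, rfl⟩ := hmem
      have : Sum.inl (a + (j : Fin k)) ∈ Aout k (len, t) := by
        rw [Aout, Finset.mem_union]
        left
        exact Finset.mem_image.mpr ⟨j, Finset.mem_range.mpr hj, rfl⟩
      exact (Finset.disjoint_left.mp hout this) hi
    · intro v hv
      beta_reduce
      by_cases hvm : v ∈ arcF
      · rw [if_pos hvm]
        rw [mem_arcF] at hvm
        obtain ⟨i, hi, rfl⟩ := hvm
        by_cases hitop : i = len - 1
        · exfalso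
          have : Sum.inr (a + (i : Fin k)) ∈ Aout k (len, t) := by
            rw [Aout, Finset.mem_union]
            right
            simp only [Finset.mem_insert, Finset.mem_singleton]
            right
            rw [hitop]
          exact (Finset.disjoint_left.mp hout this) hv
        · rw [if_pos]
          rw [mem_arcF]
          refine ⟨i + 1, by omega, ?_⟩
          push_cast
          ring
      · rw [if_neg hvm, if_neg]
        intro hmem
        rw [mem_arcF] at hmem
        obtain ⟨i, hi, hieq⟩ := hmem
        by_cases hi0 : i = 0
        · subst hi0
          have hveq : v = a - 1 := by
            push_cast at hieq
            linear_combination -hieq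
          have : Sum.inr v ∈ Aout k (len, t) := by
            rw [Aout, Finset.mem_union]
            right
            simp only [Finset.mem_insert, Finset.mem_singleton]
            left
            rw [hveq]
          exact (Finset.disjoint_left.mp hout this) hv
        · apply hvm
          rw [mem_arcF]
          refine ⟨i - 1, by omega, ?_⟩
          rw [Nat.cast_sub (by omega), Nat.cast_one]
          linear_combination hieq


lemma c_to_cond (hk : 2 ≤ k) (S : Finset (Fin k ⊕ Fin k)) (c : Fin k → ZMod 2)
    (hc0 : c 0 = 1) (hcl : ∀ i, Sum.inl i ∈ S → c i = 0)
    (hcr : ∀ i, Sum.inr i ∈ S → c i = c (i+1)) :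
    ∃ p ∈ Pidx k, acond k p S := by
  by_cases hfull : ∃ m m' : Fin k, Sum.inr m ∉ S ∧ Sum.inr m' ∉ S ∧ m ≠ m'
  · -- at least two missing edges: arc case
    obtain ⟨m, m', hm, hm', hne⟩ := hfull
    have h1 : ∃ n : ℕ, Sum.inr ((n : Fin k)) ∉ S := ⟨m.val, by rwa [Fin.cast_val_eq_self]⟩
    have hf : Sum.inr ((Nat.find h1 : ℕ) : Fin k) ∉ S := Nat.find_spec h1
    have hfmin : ∀ n, n < Nat.find h1 → Sum.inr ((n : Fin k)) ∈ S :=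
      fun n hn => not_not.mp (Nat.find_min h1 hn)
    set f := Nat.find h1 with hfdef
    have hfk : f < k := by
      by_contra h
      push_neg at h
      have h2 : Sum.inr (((f % k : ℕ) : Fin k)) ∉ S := by rwa [cast_mod]
      have hlt : f % k < f := lt_of_lt_of_le (Nat.mod_lt _ (by omega)) h
      exact (Nat.find_min h1 hlt) h2
    have h2 : ∃ q : ℕ, Sum.inr (-(((1+q : ℕ) : Fin k))) ∉ S := by
      refine ⟨(-m' - 1).val, ?_⟩
      have heq : -((((1 : ℕ) + (-m'-1).val : ℕ)) : Fin k) = m' := by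
        push_cast [Fin.cast_val_eq_self]
        ring
      rw [heq]
      exact hm'
    have hq : Sum.inr (-(((1 + Nat.find h2 : ℕ)) : Fin k)) ∉ S := Nat.find_spec h2
    have hqmin : ∀ j, j < Nat.find h2 → Sum.inr (-(((1+j : ℕ)) : Fin k)) ∈ S :=
      fun j hj => not_not.mp (Nat.find_min h2 hj)
    set q := Nat.find h2 with hqdef
    have hqk : q < k := by
      by_contra h
      push_neg at h
      have heq : ((1 + (q - k) : ℕ) : Fin k) = ((1 + q : ℕ) : Fin k) := by
        have h3 : (1 + q) = (1 + (q - k)) + k := by omega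
        rw [h3]
        push_cast [Fin.natCast_self]
        ring
      have h4 : Sum.inr (-(((1 + (q - k) : ℕ)) : Fin k)) ∉ S := by rw [heq]; exact hq
      exact Nat.find_min h2 (show q - k < q by omega) h4
    have hlen : f + q + 2 ≤ k := by
      by_contra hcon
      push_neg at hcon
      have cover : ∀ e : Fin k, e ≠ ((f : ℕ) : Fin k) → Sum.inr e ∈ S := by
        intro e he
        rcases Nat.lt_or_ge (e.val) f with h | h
        · have := hfmin e.val h
          rwa [Fin.cast_val_eq_self] at this
        · have hev : e.val ≠ f := fun hh => he (by rw [← hh, Fin.cast_val_eq_self])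
          have h5 : f < e.val := by omega
          have helt := e.isLt
          have hj : k - 1 - e.val < q := by omega
          have h6 := hqmin (k - 1 - e.val) hj
          have heq : -(((1 + (k - 1 - e.val) : ℕ)) : Fin k) = e := by
            have h7 : (1 + (k - 1 - e.val)) = k - e.val := by omega
            rw [h7, Nat.cast_sub e.isLt.le, Fin.natCast_self, zero_sub, neg_neg,
              Fin.cast_val_eq_self]
          rwa [heq] at h6
      have hmf : m = ((f : ℕ) : Fin k) := by
        by_contra hh
        exact hm (cover m hh)
      have hmf' : m' = ((f : ℕ) : Fin k) := by
        by_contra hh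
        exact hm' (cover m' hh)
      exact hne (hmf.trans hmf'.symm)
    refine ⟨(f + q + 1, q), ?_, ?_⟩
    · apply Finset.mem_insert_of_mem
      rw [Finset.mem_filter, Finset.mem_product, Finset.mem_range, Finset.mem_range]
      exact ⟨⟨by omega, by omega⟩, by omega⟩
    · rw [acond, if_neg (by simp; omega)]
      have hin : Ain k (f + q + 1, q) ⊆ S := by
        intro x hx
        rw [Ain, Finset.mem_image] at hx
        obtain ⟨i, hi, rfl⟩ := hx
        rw [Finset.mem_range] at hi
        simp only at hi ⊢
        rcases Nat.lt_or_ge i q with h | h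
        · have heq : -((q : ℕ) : Fin k) + (i : Fin k) = -(((1 + (q - i - 1) : ℕ)) : Fin k) := by
            have h3 : (1 + (q - i - 1) : ℕ) = q - i := by omega
            rw [h3, Nat.cast_sub h.le]
            ring
          rw [heq]
          exact hqmin (q - i - 1) (by omega)
        · have heq : -((q : ℕ) : Fin k) + (i : Fin k) = ((i - q : ℕ) : Fin k) := by
            rw [Nat.cast_sub h]
            ring
          rw [heq]
          exact hfmin (i - q) (by omega)
      refine ⟨hin, ?_⟩
      have carc : ∀ i, i < f + q + 1 → c (-((q:ℕ) : Fin k) + (i : Fin k)) = 1 := by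
        have aux : ∀ i, i < f + q + 1 → c (-((q:ℕ) : Fin k) + (i : Fin k)) = c (-((q:ℕ) : Fin k)) := by
          intro i
          induction i with
          | zero => intro _; norm_num
          | succ n ih =>
            intro h
            have hedge : Sum.inr (-((q:ℕ) : Fin k) + (n : Fin k)) ∈ S := by
              apply hin
              rw [Ain, Finset.mem_image]
              exact ⟨n, Finset.mem_range.mpr (by simp; omega), rfl⟩
            have := hcr _ hedge
            have heq : -((q:ℕ) : Fin k) + (n : Fin k) + 1 = -((q:ℕ) : Fin k) + ((n+1 : ℕ) : Fin k) := by
              push_cast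
              ring
            rw [heq] at this
            rw [← this]
            exact ih (by omega)
        have hq1 : c (-((q:ℕ) : Fin k)) = 1 := by
          have := aux q (by omega)
          rw [show -((q:ℕ) : Fin k) + ((q:ℕ) : Fin k) = 0 by ring, hc0] at this
          exact this.symm
        intro i hi
        rw [aux i hi, hq1]
      rw [Finset.disjoint_left]
      intro x hx hxS
      rw [Aout, Finset.mem_union] at hx
      rcases hx with hx | hx
      · rw [Finset.mem_image] at hx
        obtain ⟨i, hi, rfl⟩ := hx
        rw [Finset.mem_range] at hi
        simp only at hi hxS
        have := hcl _ hxS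
        rw [carc i hi] at this
        exact one_ne_zero this
      · simp only [Finset.mem_insert, Finset.mem_singleton] at hx
        rcases hx with rfl | rfl
        · apply hq
          have heq : -(((1 + q : ℕ)) : Fin k) = -(((q:ℕ)) : Fin k) - 1 := by
            push_cast
            ring
          rw [heq]
          simpa using hxS
        · apply hf
          have heq : ((f : ℕ) : Fin k) = -(((q:ℕ)) : Fin k) + (((f + q + 1, q).1 - 1 : ℕ) : Fin k) := by
            simp only
            rw [show (f + q + 1 - 1 : ℕ) = f + q from rfl]
            push_cast
            ring
          rw [heq]
          simpa using hxS
  · -- at most one missing edge: full case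
    push_neg at hfull
    have hex : ∃ m0 : Fin k, ∀ e : Fin k, e ≠ m0 → Sum.inr e ∈ S := by
      by_cases hex2 : ∃ m : Fin k, Sum.inr m ∉ S
      · obtain ⟨m0, hm0⟩ := hex2
        refine ⟨m0, fun e he => ?_⟩
        by_contra hns
        exact he (hfull e m0 hns hm0)
      · push_neg at hex2
        exact ⟨0, fun e _ => hex2 e⟩
    obtain ⟨m0, hm0⟩ := hex
    have hstep : ∀ j : ℕ, j + 1 < k →
        c (m0 + 1 + (j : Fin k)) = c (m0 + 1 + ((j+1 : ℕ) : Fin k)) := by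
      intro j hj
      have hne : m0 + 1 + (j : Fin k) ≠ m0 := by
        intro h
        have h2 : ((j+1 : ℕ) : Fin k) = 0 := by
          push_cast
          linear_combination h
        have := congrArg Fin.val h2
        rw [Fin.val_cast_of_lt hj] at this
        simp at this
      have := hcr _ (hm0 _ hne)
      rw [this]
      congr 1
      push_cast
      ring
    have hconst : ∀ j : ℕ, j < k → c (m0 + 1 + (j : Fin k)) = c (m0 + 1) := by
      intro j
      induction j with
      | zero => intro _; norm_num
      | succ n ih =>
        intro h
        rw [← hstep n h]
        exact ih (by omega)
    have key : ∀ v : Fin k, c v = c (m0 + 1) := by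
      intro v
      have := hconst (v - (m0+1)).val (Fin.is_lt _)
      rwa [Fin.cast_val_eq_self, show m0 + 1 + (v - (m0+1)) = v by ring] at this
    have all_one : ∀ v : Fin k, c v = 1 := by
      intro v
      rw [key v, ← key 0, hc0]
    refine ⟨(k, 0), Finset.mem_insert_self _ _, ?_⟩
    rw [acond, if_pos rfl]
    constructor
    · intro x hx
      rcases x with i | i
      · exact absurd ((hcl i hx).symm.trans (all_one i)) zero_ne_one
      · exact Finset.mem_image.mpr ⟨i, Finset.mem_univ _, rfl⟩
    · have hsub : (Finset.univ.erase m0).image (Sum.inr : Fin k → Fin k ⊕ Fin k) ⊆ S := by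
        intro x hx
        rw [Finset.mem_image] at hx
        obtain ⟨j, hj, rfl⟩ := hx
        exact hm0 j (Finset.mem_erase.mp hj).1
      have hcard : ((Finset.univ.erase m0).image (Sum.inr : Fin k → Fin k ⊕ Fin k)).card = k - 1 := by
        rw [Finset.card_image_of_injective _ Sum.inr_injective,
          Finset.card_erase_of_mem (Finset.mem_univ _)]
        simp
      calc k - 1 = ((Finset.univ.erase m0).image (Sum.inr : Fin k → Fin k ⊕ Fin k)).card := hcard.symm
        _ ≤ S.card := Finset.card_le_card hsub


lemma arc_facts {len t : ℕ} {S : Finset (Fin k ⊕ Fin k)} (hlt : t < len) (hlk : len < k)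
    (hc : acond k (len, t) S) :
    (∀ m, m < len - 1 - t → Sum.inr ((m : ℕ) : Fin k) ∈ S) ∧
    Sum.inr (((len - 1 - t : ℕ)) : Fin k) ∉ S ∧
    (∀ j, j < t → Sum.inr (-((1 + j : ℕ) : Fin k)) ∈ S) ∧
    Sum.inr (-((1 + t : ℕ) : Fin k)) ∉ S := by
  rw [acond, if_neg (by simp; omega)] at hc
  obtain ⟨hin, hout⟩ := hc
  refine ⟨?_, ?_, ?_, ?_⟩
  · intro m hm
    have heq : ((m : ℕ) : Fin k) = -((t : ℕ) : Fin k) + ((t + m : ℕ) : Fin k) := by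
      push_cast
      ring
    rw [heq]
    apply hin
    rw [Ain, Finset.mem_image]
    exact ⟨t + m, Finset.mem_range.mpr (by simp; omega), rfl⟩
  · intro hmem
    apply Finset.disjoint_left.mp hout _ hmem
    rw [Aout, Finset.mem_union]
    right
    simp only [Finset.mem_insert, Finset.mem_singleton]
    right
    congr 1
    have h1 : (len - 1 - t : ℕ) = (len - 1) - t := rfl
    rw [show ((len,t).1 - 1 : ℕ) = len - 1 from rfl, h1,
      Nat.cast_sub (by omega : t ≤ len - 1)]
    ring
  · intro j hj
    have heq : -((1 + j : ℕ) : Fin k) = -((t : ℕ) : Fin k) + ((t - 1 - j : ℕ) : Fin k) := by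
      rw [show (t - 1 - j : ℕ) = t - (1 + j) from by omega, Nat.cast_sub (by omega)]
      push_cast
      ring
    rw [heq]
    apply hin
    rw [Ain, Finset.mem_image]
    exact ⟨t - 1 - j, Finset.mem_range.mpr (by simp; omega), rfl⟩
  · intro hmem
    apply Finset.disjoint_left.mp hout _ hmem
    rw [Aout, Finset.mem_union]
    right
    simp only [Finset.mem_insert, Finset.mem_singleton]
    left
    congr 1
    push_cast
    ring

lemma not_full_and_arc (hk : 2 ≤ k) {len t : ℕ} {S : Finset (Fin k ⊕ Fin k)}
    (hlt : t < len) (hlk : len < k) (harc : acond k (len, t) S)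
    (hfull : acond k (k, 0) S) : False := by
  rw [acond, if_pos rfl] at hfull
  obtain ⟨hsub, hcard⟩ := hfull
  obtain ⟨-, hx, -, hy⟩ := arc_facts hlt hlk harc
  set x : Fin k := ((len - 1 - t : ℕ) : Fin k) with hxdef
  set y : Fin k := -((1 + t : ℕ) : Fin k) with hydef
  have hxy : x ≠ y := by
    intro h
    have h2 : ((len - 1 - t + (1 + t) : ℕ) : Fin k) = 0 := by
      rw [hxdef, hydef] at h
      push_cast at h ⊢
      linear_combination h
    rw [show (len - 1 - t + (1 + t) : ℕ) = len from by omega] at h2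
    have := congrArg Fin.val h2
    rw [Fin.val_cast_of_lt hlk] at this
    simp at this
    omega
  have hSsub : S ⊆ (Finset.univ.image (Sum.inr : Fin k → Fin k ⊕ Fin k)) \ {Sum.inr x, Sum.inr y} := by
    intro z hz
    rw [Finset.mem_sdiff]
    refine ⟨hsub hz, ?_⟩
    simp only [Finset.mem_insert, Finset.mem_singleton]
    rintro (rfl | rfl)
    · exact hx hz
    · exact hy hz
  have hcard2 : ((Finset.univ.image (Sum.inr : Fin k → Fin k ⊕ Fin k)) \ {Sum.inr x, Sum.inr y}).card = k - 2 := by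
    rw [Finset.card_sdiff_of_subset]
    · rw [Finset.card_image_of_injective _ Sum.inr_injective, Finset.card_insert_of_notMem
        (by simp [hxy]), Finset.card_singleton]
      simp
    · intro z hz
      simp only [Finset.mem_insert, Finset.mem_singleton] at hz
      rcases hz with rfl | rfl <;> exact Finset.mem_image.mpr ⟨_, Finset.mem_univ _, rfl⟩
  have := Finset.card_le_card hSsub
  rw [hcard2] at this
  omega

lemma cond_unique (hk : 2 ≤ k) {p p' : ℕ × ℕ} {S : Finset (Fin k ⊕ Fin k)}
    (hp : p ∈ Pidx k) (hp' : p' ∈ Pidx k)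
    (h : acond k p S) (h' : acond k p' S) : p = p' := by
  have hmem : ∀ {r : ℕ × ℕ}, r ∈ Pidx k → r = (k, 0) ∨ (r.2 < r.1 ∧ r.1 < k) := by
    intro r hr
    rcases Finset.mem_insert.mp hr with hh | hh
    · exact Or.inl hh
    · rw [Finset.mem_filter, Finset.mem_product, Finset.mem_range, Finset.mem_range] at hh
      exact Or.inr ⟨hh.2, hh.1.1⟩
  rcases hmem hp with rfl | ⟨hlt, hlk⟩
  · rcases hmem hp' with rfl | ⟨hlt', hlk'⟩
    · rfl
    · exact (not_full_and_arc hk hlt' hlk' h' h).elim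
  · rcases hmem hp' with rfl | ⟨hlt', hlk'⟩
    · exact (not_full_and_arc hk hlt hlk h h').elim
    · obtain ⟨len, t⟩ := p
      obtain ⟨len', t'⟩ := p'
      simp only at hlt hlk hlt' hlk'
      obtain ⟨hf1, hf2, hb1, hb2⟩ := arc_facts hlt hlk h
      obtain ⟨hf1', hf2', hb1', hb2'⟩ := arc_facts hlt' hlk' h'
      have ht : t = t' := by
        rcases lt_trichotomy t t' with hh | hh | hh
        · exact absurd (hb1' t hh) hb2
        · exact hh
        · exact absurd (hb1 t' hh) hb2'
      subst ht
      have hl : len = len' := by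
        rcases lt_trichotomy len len' with hh | hh | hh
        · exact absurd (hf1' (len - 1 - t) (by omega)) hf2
        · exact hh
        · exact absurd (hf1 (len' - 1 - t) (by omega)) hf2'
      rw [hl]


end k2

section cnt
variable {α : Type*} [Fintype α] [DecidableEq α]

lemma count_filter_subset_disjoint (s : ℕ) (A B : Finset α) (hAB : Disjoint A B) :
    ((Finset.univ.powersetCard s).filter fun S => A ⊆ S ∧ Disjoint B S).card
      = if A.card ≤ s then (Fintype.card α - A.card - B.card).choose (s - A.card) else 0 := by
  split_ifs with hc
  · set C := (A ∪ B)ᶜ with hC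
    have hCcard : C.card = Fintype.card α - A.card - B.card := by
      rw [hC, Finset.card_compl, Finset.card_union_of_disjoint hAB]
      omega
    rw [← hCcard, ← Finset.card_powersetCard]
    apply Finset.card_bij' (fun S _ => S \ A) (fun T _ => T ∪ A)
    · intro S hS
      rw [Finset.mem_filter, Finset.mem_powersetCard] at hS
      obtain ⟨⟨-, hcard⟩, hA, hB⟩ := hS
      rw [Finset.mem_powersetCard]
      constructor
      · intro x hx
        rw [Finset.mem_sdiff] at hx
        rw [hC, Finset.mem_compl, Finset.mem_union]
        push_neg
        exact ⟨hx.2, fun hxB => (Finset.disjoint_left.mp hB) hxB hx.1⟩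
      · rw [Finset.card_sdiff_of_subset hA, hcard]
    · intro T hT
      rw [Finset.mem_powersetCard] at hT
      obtain ⟨hTC, hTcard⟩ := hT
      have hTA : Disjoint T A := by
        rw [Finset.disjoint_left]
        intro x hxT hxA
        have := hTC hxT
        rw [hC, Finset.mem_compl, Finset.mem_union] at this
        exact this (Or.inl hxA)
      have hTB : Disjoint T B := by
        rw [Finset.disjoint_left]
        intro x hxT hxB
        have := hTC hxT
        rw [hC, Finset.mem_compl, Finset.mem_union] at this
        exact this (Or.inr hxB)
      rw [Finset.mem_filter, Finset.mem_powersetCard]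
      refine ⟨⟨Finset.subset_univ _, ?_⟩, Finset.subset_union_right, ?_⟩
      · rw [Finset.card_union_of_disjoint hTA, hTcard]
        omega
      · exact Finset.disjoint_union_right.mpr ⟨hTB.symm, hAB.symm⟩
    · intro S hS
      rw [Finset.mem_filter] at hS
      exact Finset.sdiff_union_of_subset hS.2.1
    · intro T hT
      rw [Finset.mem_powersetCard] at hT
      apply Finset.union_sdiff_cancel_right
      rw [Finset.disjoint_left]
      intro x hxT hxA
      have := hT.1 hxT
      rw [Finset.mem_compl, Finset.mem_union] at this
      exact this (Or.inl hxA)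
  · rw [Finset.card_eq_zero, Finset.eq_empty_iff_forall_notMem]
    intro S hS
    rw [Finset.mem_filter, Finset.mem_powersetCard] at hS
    exact hc (hS.1.2 ▸ Finset.card_le_card hS.2.1)

lemma filter_subset_powersetCard (s : ℕ) (E : Finset α) :
    ((Finset.univ.powersetCard s).filter fun S => S ⊆ E).card = E.card.choose s := by
  rw [← Finset.card_powersetCard]
  congr 1
  ext S
  simp [Finset.mem_powersetCard, and_comm]

end cnt


section main
variable {k : ℕ} [NeZero k]

lemma mem_iff (hk : 2 ≤ k) (S : Finset (Fin k ⊕ Fin k)) :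
    (e0 k ∉ Submodule.span (ZMod 2) (Gfam k '' (S : Set (Fin k ⊕ Fin k)))) ↔
      ∃ p ∈ Pidx k, acond k p S := by
  rw [notmem_span_iff hk]
  constructor
  · rintro ⟨c, h0, hl, hr⟩
    exact c_to_cond hk S c h0 hl hr
  · rintro ⟨p, hp, hcond⟩
    exact cond_to_c hk S p hp hcond

end main

lemma betaF_closed {k : ℕ} (hk : 2 ≤ k) (s : ℕ) :
    betaF k s = (∑ j ∈ Finset.range (k-1),
        if j ≤ s then (j+1) * ((2*k - 2*j - 3).choose (s - j)) else 0)
      + (if k - 1 ≤ s then k.choose s else 0) := by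
  haveI : NeZero k := ⟨by omega⟩
  have h1 : betaF k s = ((Finset.univ.powersetCard s).filter fun S : Finset (Fin k ⊕ Fin k) =>
      ∃ p ∈ Pidx k, acond k p S).card := by
    rw [show betaF k s = ((Finset.univ.powersetCard s).filter
        fun S : Finset (Fin k ⊕ Fin k) => e0 k ∉ Submodule.span (ZMod 2)
          (Gfam k '' (S : Set (Fin k ⊕ Fin k)))).card from rfl]
    congr 1
    apply Finset.filter_congr
    intro S _
    exact mem_iff hk S
  rw [h1]
  have h2 : ((Finset.univ.powersetCard s).filter fun S : Finset (Fin k ⊕ Fin k) =>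
      ∃ p ∈ Pidx k, acond k p S)
      = (Pidx k).biUnion (fun p => (Finset.univ.powersetCard s).filter (acond k p)) := by
    ext S
    simp only [Finset.mem_filter, Finset.mem_biUnion]
    tauto
  rw [h2, Finset.card_biUnion]
  swap
  · intro p hp p' hp' hne
    rw [Function.onFun, Finset.disjoint_left]
    intro S hS hS'
    rw [Finset.mem_filter] at hS hS'
    exact hne (cond_unique hk hp hp' hS.2 hS'.2)
  rw [Pidx, Finset.sum_insert (by simp)]
  have hterm0 : ((Finset.univ.powersetCard s).filter (acond k (k, 0))).card
      = if k - 1 ≤ s then k.choose s else 0 := by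
    split_ifs with hks
    · rw [show ((Finset.univ.powersetCard s).filter (acond k (k, 0)))
          = ((Finset.univ.powersetCard s).filter
            fun S : Finset (Fin k ⊕ Fin k) =>
              S ⊆ Finset.univ.image Sum.inr) from ?_]
      · rw [filter_subset_powersetCard]
        congr 1
        rw [Finset.card_image_of_injective _ Sum.inr_injective]
        simp
      · apply Finset.filter_congr
        intro S hS
        rw [Finset.mem_powersetCard] at hS
        rw [acond, if_pos rfl]
        rw [hS.2]
        exact and_iff_left hks
    · rw [Finset.card_eq_zero, Finset.eq_empty_iff_forall_notMem]
      intro S hS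
      rw [Finset.mem_filter, Finset.mem_powersetCard, acond, if_pos rfl] at hS
      obtain ⟨⟨-, hcard⟩, -, hge⟩ := hS
      rw [hcard] at hge
      exact hks hge
  rw [hterm0]
  have hterm : ∀ p ∈ (Finset.range k ×ˢ Finset.range k).filter fun p : ℕ × ℕ => p.2 < p.1,
      ((Finset.univ.powersetCard s).filter (acond k p)).card
        = if p.1 - 1 ≤ s then (2*k - 2*p.1 - 1).choose (s - (p.1 - 1)) else 0 := by
    intro p hp
    rw [Finset.mem_filter, Finset.mem_product, Finset.mem_range, Finset.mem_range] at hp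
    obtain ⟨⟨hlk, htk⟩, hlt⟩ := hp
    have hcondeq : ∀ S : Finset (Fin k ⊕ Fin k),
        acond k p S ↔ (Ain k p ⊆ S ∧ Disjoint (Aout k p) S) := by
      intro S
      rw [acond, if_neg (by omega)]
    rw [Finset.filter_congr (fun S _ => hcondeq S),
      count_filter_subset_disjoint s (Ain k p) (Aout k p)
        ((disj_Ain_Aout (k := k) (len := p.1) (t := p.2) hlt hlk))]
    · rw [card_Ain (k := k) (len := p.1) (t := p.2) hlk,
        card_Aout (k := k) (len := p.1) (t := p.2) (by omega) hlk]
      have hcard : Fintype.card (Fin k ⊕ Fin k) = 2 * k := by simp; omega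
      rw [hcard]
      rw [show 2*k - (p.1 - 1) - (p.1 + 2) = 2*k - 2*p.1 - 1 from by omega]
  rw [Finset.sum_congr rfl hterm]
  rw [Finset.sum_filter, Finset.sum_product]
  have hinner : ∀ len ∈ Finset.range k,
      (∑ t ∈ Finset.range k, if t < len then
          (if len - 1 ≤ s then (2*k - 2*len - 1).choose (s - (len - 1)) else 0) else 0)
        = len * (if len - 1 ≤ s then (2*k - 2*len - 1).choose (s - (len - 1)) else 0) := by
    intro len hlen
    rw [Finset.mem_range] at hlen
    rw [← Finset.sum_filter, Finset.sum_const, smul_eq_mul]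
    congr 1
    rw [show (Finset.range k).filter (fun t => t < len) = Finset.range len from ?_]
    · exact Finset.card_range len
    · ext t
      simp only [Finset.mem_filter, Finset.mem_range]
      omega
  rw [Finset.sum_congr rfl hinner]
  have hshift := Finset.sum_range_succ' (fun len => len *
    (if len - 1 ≤ s then (2*k - 2*len - 1).choose (s - (len - 1)) else 0)) (k-1)
  rw [show k - 1 + 1 = k by omega] at hshift
  rw [hshift]
  simp only [zero_mul, add_zero]
  rw [add_comm (if k - 1 ≤ s then k.choose s else 0)]
  congr 1
  apply Finset.sum_congr rfl
  intro j hj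
  rw [Finset.mem_range] at hj
  rw [show (j + 1 - 1) = j by omega]
  split_ifs with h
  · rw [show 2*k - 2*(j+1) - 1 = 2*k - 2*j - 3 from by omega]
  · exact mul_zero _

lemma betaF_one_zero (s : ℕ) (hs : 1 ≤ s) : betaF 1 s = 0 := by
  rw [betaF, Finset.card_eq_zero, Finset.eq_empty_iff_forall_notMem]
  intro S hS
  rw [Finset.mem_filter, Finset.mem_powersetCard] at hS
  obtain ⟨⟨-, hcard⟩, hnot⟩ := hS
  have hne : S.Nonempty := by rw [← Finset.card_pos, hcard]; omega
  obtain ⟨x, hx⟩ := hne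
  apply hnot
  apply Submodule.subset_span
  refine ⟨x, hx, ?_⟩
  funext j
  have hj := j.isLt
  rcases x with i | i <;>
    · have hi := i.isLt
      simp [Gfam, show ((j:ℕ)) = 0 from by omega, show ((i:ℕ)) = 0 from by omega]

lemma sum_identity {k s : ℕ} (hk : 3 ≤ k) (hs : 2 ≤ s) :
    (∑ j ∈ Finset.range (k-1), if j ≤ s then (j+1) * ((2*k - 2*j - 3).choose (s - j)) else 0)
      + (if k - 1 ≤ s then k.choose s else 0)
    = (((∑ j ∈ Finset.range (k-1-1),
          if j ≤ s-1 then (j+1) * ((2*(k-1) - 2*j - 3).choose (s-1 - j)) else 0)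
      + (if k-1-1 ≤ s-1 then (k-1).choose (s-1) else 0))
      + (∑ j ∈ Finset.range (s+1), if 2*j+3 ≤ 2*k then (2*k-2*j-3).choose (s-j) else 0))
      + (if s = k-1 then 1 else 0) := by
  have hA : (∑ j ∈ Finset.range (k-1), if j ≤ s then (j+1) * ((2*k - 2*j - 3).choose (s - j)) else 0)
      = (∑ j ∈ Finset.range (k-1), if j ≤ s then j * ((2*k - 2*j - 3).choose (s - j)) else 0)
        + (∑ j ∈ Finset.range (k-1), if j ≤ s then (2*k - 2*j - 3).choose (s - j) else 0) := by
    rw [← Finset.sum_add_distrib]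
    apply Finset.sum_congr rfl
    intro j _
    split_ifs with h
    · ring
    · rfl
  have hB : (∑ j ∈ Finset.range (k-1), if j ≤ s then j * ((2*k - 2*j - 3).choose (s - j)) else 0)
      = ∑ j ∈ Finset.range (k-1-1),
          if j ≤ s-1 then (j+1) * ((2*(k-1) - 2*j - 3).choose (s-1 - j)) else 0 := by
    have h1 := Finset.sum_range_succ'
      (fun j => if j ≤ s then j * ((2*k - 2*j - 3).choose (s - j)) else 0) (k-2)
    rw [show k - 2 + 1 = k - 1 by omega] at h1
    rw [show k - 1 - 1 = k - 2 by omega, h1]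
    simp only [zero_mul, if_pos (Nat.zero_le s), ite_self, add_zero]
    apply Finset.sum_congr rfl
    intro j hj
    rw [Finset.mem_range] at hj
    by_cases h : j ≤ s - 1
    · rw [if_pos (by omega : j + 1 ≤ s), if_pos h]
      rw [show 2*k - 2*(j+1) - 3 = 2*(k-1) - 2*j - 3 from by omega,
        show s - (j+1) = s - 1 - j from by omega]
    · rw [if_neg (by omega : ¬ (j + 1 ≤ s)), if_neg h]
  have hC : (∑ j ∈ Finset.range (k-1), if j ≤ s then (2*k - 2*j - 3).choose (s - j) else 0)
      = ∑ j ∈ Finset.range (s+1), if 2*j+3 ≤ 2*k then (2*k-2*j-3).choose (s-j) else 0 := by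
    rw [← Finset.sum_filter, ← Finset.sum_filter]
    congr 1
    ext j
    simp only [Finset.mem_filter, Finset.mem_range]
    omega
  have hD : (if k - 1 ≤ s then k.choose s else 0)
      = (if k-1-1 ≤ s-1 then (k-1).choose (s-1) else 0) + (if s = k-1 then 1 else 0) := by
    by_cases h : k - 1 ≤ s
    · rw [if_pos h, if_pos (by omega)]
      have hsplit : k.choose s = (k-1).choose (s-1) + (k-1).choose s := by
        calc k.choose s = ((k-1)+1).choose ((s-1)+1) := by congr 1 <;> omega
          _ = (k-1).choose (s-1) + (k-1).choose ((s-1)+1) := Nat.choose_succ_succ _ _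
          _ = (k-1).choose (s-1) + (k-1).choose s := by rw [show (s-1)+1 = s by omega]
      rw [hsplit]
      congr 1
      by_cases h2 : s = k - 1
      · rw [if_pos h2, h2, Nat.choose_self]
      · rw [if_neg h2, Nat.choose_eq_zero_of_lt (by omega)]
    · rw [if_neg h, if_neg (by omega), if_neg (by omega)]
  rw [hA, hB, hC, hD]
  ring

theorem betaF_main :
    (∀ s, 1 ≤ s → betaF 1 s = 0) ∧
    (∀ k, 1 < k → betaF k 1 = 2 * k - 1) ∧
    betaF 2 2 = 1 ∧ betaF 2 3 = 0 ∧
    (∀ k s, 3 ≤ k → 2 ≤ s → s ≤ 2 * k - 3 → s ≠ k - 1 →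
      betaF k s = betaF (k - 1) (s - 1) +
        ∑ j ∈ Finset.range (s + 1),
          (if 2 * j + 3 ≤ 2 * k then (2 * k - 2 * j - 3).choose (s - j) else 0)) ∧
    (∀ k, 3 ≤ k →
      betaF k (k - 1) = betaF (k - 1) (k - 2) +
        (∑ j ∈ Finset.range k,
          (if 2 * j + 3 ≤ 2 * k then (2 * k - 2 * j - 3).choose (k - 1 - j) else 0))
        + 1) ∧
    (∀ k s, 3 ≤ k → 2 * k - 2 ≤ s → betaF k s = 0) := by
  refine ⟨betaF_one_zero, ?_, ?_, ?_, ?_, ?_, ?_⟩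
  · -- betaF k 1 = 2k - 1
    intro k hk1
    by_cases h3 : 3 ≤ k
    · rw [betaF_closed (by omega)]
      rw [if_neg (by omega : ¬ (k - 1 ≤ 1))]
      have hsub : Finset.range 2 ⊆ Finset.range (k-1) := by
        apply Finset.range_subset_range.mpr; omega
      rw [← Finset.sum_subset hsub (by
        intro x _ hnx
        rw [Finset.mem_range] at hnx
        rw [if_neg (by omega)])]
      rw [Finset.sum_range_succ, Finset.sum_range_one]
      rw [if_pos (by omega), if_pos (by omega)]
      norm_num [Nat.choose_one_right]
      omega
    · have hk2 : k = 2 := by omega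
      subst hk2
      rw [betaF_closed (by omega)]
      decide
  · rw [betaF_closed (by omega)]; decide
  · rw [betaF_closed (by omega)]; decide
  · -- general recursion
    intro k s h3 h2 _ hne
    rw [betaF_closed (by omega : 2 ≤ k), betaF_closed (by omega : 2 ≤ k - 1),
      sum_identity h3 h2, if_neg hne, add_zero]
  · -- s = k - 1 case
    intro k h3
    have hid := sum_identity (s := k - 1) h3 (by omega)
    rw [if_pos rfl] at hid
    rw [show k - 1 - 1 = k - 2 from by omega] at hid
    rw [show k - 1 + 1 = k from by omega] at hid
    rw [betaF_closed (by omega : 2 ≤ k), betaF_closed (by omega : 2 ≤ k - 1),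
      show k - 1 - 1 = k - 2 from by omega, hid]
  · -- vanishing
    intro k s h3 hs
    rw [betaF_closed (by omega : 2 ≤ k)]
    rw [Finset.sum_eq_zero, if_pos (by omega), Nat.choose_eq_zero_of_lt (by omega)]
    intro j hj
    rw [Finset.mem_range] at hj
    rw [Nat.choose_eq_zero_of_lt (by omega), mul_zero, ite_self]

/-- The recursion and base cases for the counts `β_F(G_k, s)` of `s`-subsets of
`G_k` not recovering the fundamental point `E_1`. -/
theorem stmt14 :
    (∀ s, 1 ≤ s → betaF 1 s = 0) ∧
    (∀ k, 1 < k → betaF k 1 = 2 * k - 1) ∧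
    betaF 2 2 = 1 ∧ betaF 2 3 = 0 ∧
    (∀ k s, 3 ≤ k → 2 ≤ s → s ≤ 2 * k - 3 → s ≠ k - 1 →
      betaF k s = betaF (k - 1) (s - 1) +
        ∑ j ∈ Finset.range (s + 1),
          (if 2 * j + 3 ≤ 2 * k then (2 * k - 2 * j - 3).choose (s - j) else 0)) ∧
    (∀ k, 3 ≤ k →
      betaF k (k - 1) = betaF (k - 1) (k - 2) +
        (∑ j ∈ Finset.range k,
          (if 2 * j + 3 ≤ 2 * k then (2 * k - 2 * j - 3).choose (k - 1 - j) else 0))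
        + 1) ∧
    (∀ k s, 3 ≤ k → 2 * k - 2 ≤ s → betaF k s = 0) := betaF_main
end

section
/- Let G ⊆ PG(3,2) be the 8-point set {E_1, E_2, E_3, E_4, E_1+E_2, E_2+E_3, E_3+E_4, E_4+E_1}, where E_i are the standard basis points. Then the expected number of uniform draws with replacement from G until a fixed fundamental point E_i lies in the F_2-span of the drawn points equals 403/105. -/
open scoped Classical

/-- The expected number of uniform draws with replacement from the family of
points `P` until `v` lies in the span of the drawn points, computed as
`E[τ] = ∑_{t ≥ 0} Pr[τ > t]`. -/
noncomputable def raExp {ι : Type*} [Fintype ι] {k : ℕ} {F : Type*} [Field F]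
    (P : ι → (Fin k → F)) (v : Fin k → F) : ℝ :=
  ∑' t : ℕ, (Nat.card {f : Fin t → ι //
      v ∉ Submodule.span F (Set.range (P ∘ f))} : ℝ) / (Fintype.card ι : ℝ) ^ t

/-- The 8-point set `{E_1, E_2, E_3, E_4, E_1+E_2, E_2+E_3, E_3+E_4, E_4+E_1}`
in `PG(3,2)`. -/
noncomputable def g16 : Fin 8 → (Fin 4 → ZMod 2) :=
  ![Pi.single 0 1, Pi.single 1 1, Pi.single 2 1, Pi.single 3 1,
    Pi.single 0 1 + Pi.single 1 1, Pi.single 1 1 + Pi.single 2 1,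
    Pi.single 2 1 + Pi.single 3 1, Pi.single 3 1 + Pi.single 0 1]

/-! ### Combinatorial data -/

/-- For each `i : Fin 4`, the maximal subsets `S` of the index set such that
`E_i` is not in the span of the corresponding points. -/
def MsD : Fin 4 → Fin 7 → Finset (Fin 8) :=
  ![![{1,6,7},{2,4,7},{3,4,5},{1,2,5,7},{2,3,4,6},{4,5,6,7},{1,2,3,5,6}],
    ![{0,5,6},{2,4,7},{3,4,5},{0,3,5,7},{2,3,4,6},{4,5,6,7},{0,2,3,6,7}],
    ![{0,5,6},{1,6,7},{3,4,5},{0,1,4,6},{0,3,5,7},{4,5,6,7},{0,1,3,4,7}],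
    ![{0,5,6},{1,6,7},{2,4,7},{0,1,4,6},{1,2,5,7},{4,5,6,7},{0,1,2,4,5}]]

/-- Linear functionals (given by coefficient vectors) vanishing on the
corresponding maximal bad set while being `1` on `E_i`. -/
def FnD : Fin 4 → Fin 7 → (Fin 4 → ZMod 2) :=
  ![![![1,0,1,1],![1,1,0,1],![1,1,1,0],![1,0,0,1],![1,1,0,0],![1,1,1,1],![1,0,0,0]],
    ![![0,1,1,1],![1,1,0,1],![1,1,1,0],![0,1,1,0],![1,1,0,0],![1,1,1,1],![0,1,0,0]],
    ![![0,1,1,1],![1,0,1,1],![1,1,1,0],![0,0,1,1],![0,1,1,0],![1,1,1,1],![0,0,1,0]],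
    ![![0,1,1,1],![1,0,1,1],![1,1,0,1],![0,0,1,1],![1,0,0,1],![1,1,1,1],![0,0,0,1]]]

/-- For each `i : Fin 4`, the minimal subsets whose points sum to `E_i`. -/
def GdD : Fin 4 → Fin 7 → Finset (Fin 8) :=
  ![![{0},{1,4},{3,7},{2,4,5},{2,6,7},{1,5,6,7},{3,4,5,6}],
    ![{1},{0,4},{2,5},{3,4,7},{3,5,6},{0,5,6,7},{2,4,6,7}],
    ![{2},{1,5},{3,6},{0,4,5},{0,6,7},{1,4,6,7},{3,4,5,7}],
    ![{3},{0,7},{2,6},{1,4,7},{1,5,6},{0,4,5,6},{2,4,5,7}]]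

/-! ### Decidable facts about the data -/

set_option maxRecDepth 100000 in
lemma hfn0 : ∀ (i : Fin 4) (j : Fin 7), ∀ k ∈ MsD i j, ∑ m, FnD i j m * g16 k m = 0 := by
  decide

set_option maxRecDepth 100000 in
lemma hfn1 : ∀ (i : Fin 4) (j : Fin 7),
    ∑ m, FnD i j m * (Pi.single i 1 : Fin 4 → ZMod 2) m = 1 := by decide

set_option maxRecDepth 100000 in
lemma hsum : ∀ (i : Fin 4) (g : Fin 7), ∑ j ∈ GdD i g, g16 j = Pi.single i 1 := by decide

set_option maxRecDepth 1000000 in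
lemma h2comb : ∀ (i : Fin 4) (S : Finset (Fin 8)),
    (∀ j, ¬ S ⊆ MsD i j) → ∃ g : Fin 7, GdD i g ⊆ S := by decide

set_option maxRecDepth 1000000 in
lemma hcard : ∀ (i : Fin 4) (T : Finset (Fin 7)), T.Nonempty → (T.inf (MsD i)).card < 8 := by
  decide

/-! ### Span lemmas -/

lemma not_mem_span_of_functional (a v : Fin 4 → ZMod 2) (M : Finset (Fin 8))
    (h0 : ∀ k ∈ M, ∑ m, a m * g16 k m = 0) (h1 : ∑ m, a m * v m = 1) :
    v ∉ Submodule.span (ZMod 2) (g16 '' ↑M) := by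
  intro hv
  let φ : (Fin 4 → ZMod 2) →ₗ[ZMod 2] ZMod 2 :=
    { toFun := fun x => ∑ m, a m * x m
      map_add' := by
        intro x y
        simp [mul_add, Finset.sum_add_distrib]
      map_smul' := by
        intro c x
        simp [Finset.mul_sum, mul_left_comm] }
  have hle : Submodule.span (ZMod 2) (g16 '' ↑M) ≤ LinearMap.ker φ := by
    rw [Submodule.span_le]
    rintro _ ⟨k, hk, rfl⟩
    simpa [φ] using h0 k hk
  have : φ v = 0 := hle hv
  rw [show φ v = ∑ m, a m * v m from rfl, h1] at this
  exact one_ne_zero this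

lemma mem_span_of_sum (v : Fin 4 → ZMod 2) (G : Finset (Fin 8))
    (h : ∑ j ∈ G, g16 j = v) : v ∈ Submodule.span (ZMod 2) (g16 '' ↑G) := by
  subst h
  exact Submodule.sum_mem _ fun j hj => Submodule.subset_span ⟨j, hj, rfl⟩

/-- Characterization: `E_i` is outside the span of the drawn points iff all draws
land in one of the maximal bad sets. -/
lemma charac (i : Fin 4) {t : ℕ} (f : Fin t → Fin 8) :
    (Pi.single i 1 : Fin 4 → ZMod 2) ∉ Submodule.span (ZMod 2) (Set.range (g16 ∘ f)) ↔
      ∃ j : Fin 7, ∀ x, f x ∈ MsD i j := by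
  rw [Set.range_comp]
  constructor
  · intro h
    by_contra hc
    push_neg at hc
    apply h
    have hS : ∀ j, ¬ (Finset.univ.image f ⊆ MsD i j) := by
      intro j hsub
      obtain ⟨x, hx⟩ := hc j
      exact hx (hsub (Finset.mem_image_of_mem f (Finset.mem_univ x)))
    obtain ⟨g, hg⟩ := h2comb i _ hS
    have hmem := mem_span_of_sum _ _ (hsum i g)
    refine Submodule.span_mono (Set.image_mono ?_) hmem
    intro x hx
    have : x ∈ Finset.univ.image f := hg hx
    simpa using this
  · rintro ⟨j, hj⟩ h
    refine not_mem_span_of_functional (FnD i j) _ (MsD i j) (hfn0 i j) (hfn1 i j) ?_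
    refine Submodule.span_mono (Set.image_mono ?_) h
    rintro _ ⟨x, rfl⟩
    exact hj x

/-! ### Counting -/

lemma card_fun_into (t : ℕ) (A : Finset (Fin 8)) :
    (Finset.univ.filter (fun f : Fin t → Fin 8 => ∀ x, f x ∈ A)).card = A.card ^ t := by
  classical
  rw [← Fintype.card_subtype]
  rw [Fintype.card_congr (Equiv.subtypePiEquivPi (p := fun _ b => b ∈ A))]
  simp [Fintype.card_fun]

/-- The set of nonempty index subsets for inclusion–exclusion. -/
noncomputable def P7 : Finset (Finset (Fin 7)) :=
  (Finset.univ : Finset (Fin 7)).powerset.filter (·.Nonempty)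

lemma count_bad (i : Fin 4) (t : ℕ) :
    ((Nat.card {f : Fin t → Fin 8 //
        (Pi.single i 1 : Fin 4 → ZMod 2) ∉ Submodule.span (ZMod 2) (Set.range (g16 ∘ f))}) : ℤ) =
      ∑ T ∈ P7, (-1 : ℤ) ^ (T.card + 1) * ((T.inf (MsD i)).card : ℤ) ^ t := by
  classical
  have h1 : Nat.card {f : Fin t → Fin 8 //
      (Pi.single i 1 : Fin 4 → ZMod 2) ∉ Submodule.span (ZMod 2) (Set.range (g16 ∘ f))}
      = Nat.card {f : Fin t → Fin 8 // ∃ j : Fin 7, ∀ x, f x ∈ MsD i j} :=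
    Nat.card_congr (Equiv.subtypeEquivRight fun f => charac i f)
  rw [h1, Nat.card_eq_fintype_card, Fintype.card_subtype]
  have h2 : (Finset.univ.filter (fun f : Fin t → Fin 8 => ∃ j : Fin 7, ∀ x, f x ∈ MsD i j))
      = Finset.univ.biUnion (fun j : Fin 7 =>
          Finset.univ.filter (fun f : Fin t → Fin 8 => ∀ x, f x ∈ MsD i j)) := by
    ext f; simp
  rw [h2, Finset.inclusion_exclusion_card_biUnion]
  simp only [Finset.inf'_eq_inf]
  refine Eq.trans (Finset.sum_coe_sort _ (fun T : Finset (Fin 7) =>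
      (-1 : ℤ) ^ (T.card + 1) * ((T.inf fun j : Fin 7 => Finset.filter
        (fun f : Fin t → Fin 8 => ∀ x, f x ∈ MsD i j) Finset.univ).card : ℤ))) ?_
  refine Finset.sum_congr rfl fun T hT => ?_
  have h3 : T.inf (fun j : Fin 7 => Finset.univ.filter
      (fun f : Fin t → Fin 8 => ∀ x, f x ∈ MsD i j))
      = Finset.univ.filter (fun f : Fin t → Fin 8 => ∀ x, f x ∈ T.inf (MsD i)) := by
    obtain ⟨hT1, hT2⟩ := Finset.mem_filter.1 hT
    rw [← Finset.inf'_eq_inf hT2, ← Finset.inf'_eq_inf hT2]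
    ext f
    simp only [Finset.mem_inf', Finset.mem_filter, Finset.mem_univ, true_and]
    exact ⟨fun h x j hj => h j hj x, fun h j hj x => h x j hj⟩
  rw [h3, card_fun_into]
  push_cast
  ring

/-! ### Summation -/

lemma raExp_eq (i : Fin 4) :
    raExp g16 (Pi.single i 1) =
      ∑ T ∈ P7, (-1 : ℝ) ^ (T.card + 1) * (1 - ((T.inf (MsD i)).card : ℝ) / 8)⁻¹ := by
  have hcard8 : (Fintype.card (Fin 8) : ℝ) = 8 := by norm_num
  have hterm : ∀ t : ℕ,
      ((Nat.card {f : Fin t → Fin 8 //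
        (Pi.single i 1 : Fin 4 → ZMod 2) ∉ Submodule.span (ZMod 2) (Set.range (g16 ∘ f))}) : ℝ)
        / (Fintype.card (Fin 8) : ℝ) ^ t
      = ∑ T ∈ P7, (-1 : ℝ) ^ (T.card + 1) * (((T.inf (MsD i)).card : ℝ) / 8) ^ t := by
    intro t
    have := count_bad i t
    have h8 : ((Fintype.card (Fin 8) : ℝ)) ^ t = (8 : ℝ) ^ t := by rw [hcard8]
    rw [show ((Nat.card {f : Fin t → Fin 8 //
        (Pi.single i 1 : Fin 4 → ZMod 2) ∉ Submodule.span (ZMod 2) (Set.range (g16 ∘ f))}) : ℝ)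
        = ((∑ T ∈ P7, (-1 : ℤ) ^ (T.card + 1) * ((T.inf (MsD i)).card : ℤ) ^ t : ℤ) : ℝ) by
      exact_mod_cast congrArg (Int.cast : ℤ → ℝ) this]
    push_cast
    rw [h8, Finset.sum_div]
    refine Finset.sum_congr rfl fun T hT => ?_
    rw [div_pow, mul_div_assoc]
  unfold raExp
  rw [tsum_congr hterm]
  rw [Summable.tsum_finsetSum (fun T hT => ?_)]
  · refine Finset.sum_congr rfl fun T hT => ?_
    have hr0 : (0 : ℝ) ≤ ((T.inf (MsD i)).card : ℝ) / 8 := by positivity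
    have hr1 : ((T.inf (MsD i)).card : ℝ) / 8 < 1 := by
      have := hcard i T (Finset.mem_filter.1 hT).2
      rw [div_lt_one (by norm_num)]
      exact_mod_cast this
    rw [tsum_mul_left, tsum_geometric_of_lt_one hr0 hr1]
  · have hr0 : (0 : ℝ) ≤ ((T.inf (MsD i)).card : ℝ) / 8 := by positivity
    have hr1 : ((T.inf (MsD i)).card : ℝ) / 8 < 1 := by
      have := hcard i T (Finset.mem_filter.1 hT).2
      rw [div_lt_one (by norm_num)]
      exact_mod_cast this
    exact (summable_geometric_of_lt_one hr0 hr1).mul_left _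

/-! ### Numerics -/

lemma geom_term (c : ℕ) (hc : c < 8) :
    (1 - (c : ℝ) / 8)⁻¹ = ((6720 / (8 - c) : ℕ) : ℝ) / 840 := by
  interval_cases c <;> norm_num

set_option maxRecDepth 1000000 in
lemma numeric : ∀ i : Fin 4, (∑ T ∈ P7,
    (-1 : ℤ) ^ (T.card + 1) * ((6720 / (8 - (T.inf (MsD i)).card) : ℕ) : ℤ)) = 3224 := by
  decide

/-! ### Main theorem -/

/-- The random access expectation of a fundamental point for the 8-point set in
`PG(3,2)` equals `403/105`. -/
theorem stmt16 (i : Fin 4) : raExp g16 (Pi.single i 1) = 403 / 105 := by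
  rw [raExp_eq i]
  have : ∀ T ∈ P7, (-1 : ℝ) ^ (T.card + 1) * (1 - ((T.inf (MsD i)).card : ℝ) / 8)⁻¹
      = (((-1 : ℤ) ^ (T.card + 1) * ((6720 / (8 - (T.inf (MsD i)).card) : ℕ) : ℤ) : ℤ) : ℝ) / 840 := by
    intro T hT
    rw [geom_term _ (hcard i T (Finset.mem_filter.1 hT).2), Int.cast_mul, Int.cast_pow,
      Int.cast_neg, Int.cast_one, Int.cast_natCast]
    ring
  rw [Finset.sum_congr rfl this, ← Finset.sum_div, ← Int.cast_sum, numeric i]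
  norm_num
end

section
/- As k → ∞, Σ_{s=13}^{2k−3} C(2k−7, s−3)/C(2k−1, s) is asymptotically equivalent to k/70. -/
open Finset

lemma swap_choose {m a b : ℕ} (h : a + b ≤ m) :
    m.choose a * (m - a).choose b = m.choose b * (m - b).choose a := by
  have h1 := Nat.choose_mul (n := m) (Nat.le_add_right a b)
  have h2 := Nat.choose_mul (n := m) (Nat.le_add_left b a)
  simp only [Nat.add_sub_cancel_left, Nat.add_sub_cancel] at h1 h2
  rw [← h1, ← h2, Nat.choose_symm_add]

lemma key {n s : ℕ} (h3 : 3 ≤ s) (h6 : 6 ≤ n) :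
    n.choose s * (s.choose 3 * (n - s).choose 3) =
      20 * (n.choose 6 * (n - 6).choose (s - 3)) := by
  rcases le_or_gt s (n - 3) with hs | hs
  · have hsn : s ≤ n := by omega
    have step1 : n.choose s * s.choose 3 = n.choose 3 * (n - 3).choose (s - 3) :=
      Nat.choose_mul h3
    have step2 : (n - 3).choose (s - 3) * (n - s).choose 3
        = (n - 3).choose 3 * (n - 6).choose (s - 3) := by
      have e1 : n - 3 - (s - 3) = n - s := by omega
      have e2 : n - 3 - 3 = n - 6 := by omega
      have := swap_choose (m := n - 3) (a := s - 3) (b := 3) (by omega)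
      rw [e1, e2] at this; exact this
    have step3 : n.choose 3 * (n - 3).choose 3 = 20 * n.choose 6 := by
      have := Nat.choose_mul (n := n) (k := 6) (by norm_num : 3 ≤ 6)
      rw [show Nat.choose 6 3 = 20 from by decide] at this
      norm_num at this
      omega
    calc n.choose s * (s.choose 3 * (n - s).choose 3)
        = (n.choose s * s.choose 3) * (n - s).choose 3 := by ring
      _ = n.choose 3 * ((n - 3).choose (s - 3) * (n - s).choose 3) := by rw [step1]; ring
      _ = n.choose 3 * ((n - 3).choose 3 * (n - 6).choose (s - 3)) := by rw [step2]
      _ = (n.choose 3 * (n - 3).choose 3) * (n - 6).choose (s - 3) := by ring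
      _ = 20 * (n.choose 6 * (n - 6).choose (s - 3)) := by rw [step3]; ring
  · have hr : (n - 6).choose (s - 3) = 0 := Nat.choose_eq_zero_of_lt (by omega)
    rw [hr, Nat.mul_zero, Nat.mul_zero]
    rcases le_or_gt s n with h | h
    · have : (n - s).choose 3 = 0 := Nat.choose_eq_zero_of_lt (by omega)
      rw [this]; ring
    · rw [Nat.choose_eq_zero_of_lt h]; ring

lemma vtop (a : ℕ) : ∀ (b n : ℕ),
    ∑ s ∈ range (n + 1), s.choose a * (n - s).choose b = (n + 1).choose (a + b + 1) := by
  intro b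
  induction b with
  | zero =>
    intro n
    simp only [Nat.choose_zero_right, mul_one, Nat.add_zero]
    rcases le_or_gt a n with h | h
    · rw [← Nat.sum_Icc_choose n a]
      apply (Finset.sum_subset _ _).symm
      · intro x hx; simp only [Finset.mem_Icc, Finset.mem_range] at *; omega
      · intro x hx hx'
        simp only [Finset.mem_Icc, Finset.mem_range] at *
        exact Nat.choose_eq_zero_of_lt (by omega)
    · rw [Nat.choose_eq_zero_of_lt (by omega)]
      apply Finset.sum_eq_zero
      intro x hx; simp only [Finset.mem_range] at hx
      exact Nat.choose_eq_zero_of_lt (by omega)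
  | succ b ihb =>
    intro n
    induction n with
    | zero =>
      simp only [Finset.range_one, Finset.sum_singleton, Nat.zero_sub, Nat.choose_zero_succ,
        Nat.mul_zero]
      exact (Nat.choose_eq_zero_of_lt (by omega)).symm
    | succ n ih =>
      rw [Finset.sum_range_succ]
      have hcongr : ∀ s ∈ Finset.range (n + 1),
          s.choose a * (n + 1 - s).choose (b + 1)
            = s.choose a * (n - s).choose b + s.choose a * (n - s).choose (b + 1) := by
        intro s hs
        simp only [Finset.mem_range] at hs
        have : n + 1 - s = (n - s) + 1 := by omega
        rw [this, Nat.choose_succ_succ, Nat.mul_add]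
      rw [Finset.sum_congr rfl hcongr, Finset.sum_add_distrib, ih, ihb n]
      simp only [Nat.sub_self, Nat.choose_zero_succ, Nat.mul_zero, Nat.add_zero]
      have e : a + (b + 1) + 1 = a + b + 1 + 1 := by omega
      rw [e, Nat.choose_succ_succ (n + 1)]

lemma choose_mono_right (n r : ℕ) : ∀ r', r ≤ r' → r' ≤ n / 2 → n.choose r ≤ n.choose r' := by
  intro r'
  induction r' with
  | zero => intro h _; simp [Nat.le_zero.mp h]
  | succ m ih =>
    intro h hhalf
    rcases Nat.lt_or_ge r (m + 1) with hl | hge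
    · exact le_trans (ih (by omega) (by omega))
        (Nat.choose_le_succ_of_lt_half_left (by omega))
    · have : r = m + 1 := by omega
      rw [this]

lemma closed_sum (k : ℕ) (hk : 7 ≤ k) :
    ∑ s ∈ Icc 3 (2 * k - 3), ((2 * k - 7).choose (s - 3) : ℝ) / ((2 * k - 1).choose s : ℝ)
      = (k : ℝ) / 70 := by
  have hn6 : (6 : ℕ) ≤ 2 * k - 1 := by omega
  have hC6 : 0 < (2 * k - 1).choose 6 := Nat.choose_pos hn6
  have hD : (0 : ℝ) < 20 * ((2 * k - 1).choose 6 : ℝ) := by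
    have : (0:ℝ) < ((2 * k - 1).choose 6 : ℝ) := by exact_mod_cast hC6
    linarith
  have hterm : ∀ s ∈ Icc 3 (2 * k - 3),
      ((2 * k - 7).choose (s - 3) : ℝ) / ((2 * k - 1).choose s : ℝ)
        = ((s.choose 3 * (2 * k - 1 - s).choose 3 : ℕ) : ℝ)
            / (20 * ((2 * k - 1).choose 6 : ℝ)) := by
    intro s hs
    simp only [Finset.mem_Icc] at hs
    have hsn : s ≤ 2 * k - 1 := by omega
    have hpos : (0 : ℝ) < ((2 * k - 1).choose s : ℝ) := by
      exact_mod_cast Nat.choose_pos hsn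
    rw [div_eq_div_iff hpos.ne' hD.ne']
    have hkey := key (n := 2 * k - 1) (s := s) hs.1 hn6
    rw [show 2 * k - 1 - 6 = 2 * k - 7 by omega] at hkey
    have hnat : (2 * k - 7).choose (s - 3) * (20 * ((2 * k - 1).choose 6))
        = (s.choose 3 * (2 * k - 1 - s).choose 3) * ((2 * k - 1).choose s) := by
      have h2 : (s.choose 3 * (2 * k - 1 - s).choose 3) * ((2 * k - 1).choose s)
          = 20 * ((2 * k - 1).choose 6 * (2 * k - 7).choose (s - 3)) := by
        rw [← hkey]; ring
      rw [h2]; ring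
    exact_mod_cast hnat
  rw [Finset.sum_congr rfl hterm, ← Finset.sum_div, ← Nat.cast_sum]
  have hsum : ∑ s ∈ Icc 3 (2 * k - 3), s.choose 3 * (2 * k - 1 - s).choose 3
      = (2 * k).choose 7 := by
    have hv := vtop 3 3 (2 * k - 1)
    rw [show 2 * k - 1 + 1 = 2 * k by omega] at hv
    rw [show (7:ℕ) = 3 + 3 + 1 by norm_num, ← hv]
    apply Finset.sum_subset
    · intro x hx; simp only [Finset.mem_Icc, Finset.mem_range] at *; omega
    · intro x hx hx'
      simp only [Finset.mem_Icc, Finset.mem_range, not_and, not_le] at hx hx'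
      rcases Nat.lt_or_ge x 3 with h3 | h3
      · rw [Nat.choose_eq_zero_of_lt h3, Nat.zero_mul]
      · rw [Nat.choose_eq_zero_of_lt (show 2 * k - 1 - x < 3 by omega), Nat.mul_zero]
  rw [hsum]
  have h7 := Nat.add_one_mul_choose_eq (2 * k - 1) 6
  rw [show 2 * k - 1 + 1 = 2 * k by omega, show (6:ℕ) + 1 = 7 from rfl] at h7
  have h7' : (2 * k : ℝ) * ((2 * k - 1).choose 6 : ℝ) = ((2 * k).choose 7 : ℝ) * 7 := by
    exact_mod_cast h7
  rw [div_eq_div_iff hD.ne' (by norm_num : (70:ℝ) ≠ 0)]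
  linarith

lemma term_nonneg (a b : ℕ) : (0 : ℝ) ≤ (a : ℝ) / (b : ℝ) := by positivity


/-- As `k → ∞`, `∑_{s=13}^{2k-3} C(2k-7, s-3)/C(2k-1, s)` is asymptotically
`k/70`: the sum divided by `k` tends to `1/70`. -/
theorem stmt18 :
    Filter.Tendsto (fun k : ℕ =>
      (∑ s ∈ Finset.Icc 13 (2 * k - 3),
        ((2 * k - 7).choose (s - 3) : ℝ) / ((2 * k - 1).choose s : ℝ)) / (k : ℝ))
      Filter.atTop (nhds (1 / 70)) := by
  set g : ℕ → ℝ := fun k => ∑ s ∈ Icc 3 12,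
    ((2 * k - 7).choose (s - 3) : ℝ) / ((2 * k - 1).choose s : ℝ) with hg
  have heq : (fun k : ℕ =>
      (∑ s ∈ Finset.Icc 13 (2 * k - 3),
        ((2 * k - 7).choose (s - 3) : ℝ) / ((2 * k - 1).choose s : ℝ)) / (k : ℝ))
      =ᶠ[Filter.atTop] (fun k : ℕ => 1 / 70 - g k / (k : ℝ)) := by
    filter_upwards [Filter.eventually_ge_atTop 8] with k hk
    have hu : Finset.Icc 3 12 ∪ Finset.Icc 13 (2 * k - 3) = Finset.Icc 3 (2 * k - 3) := by
      ext x; simp only [Finset.mem_union, Finset.mem_Icc]; omega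
    have hd : Disjoint (Finset.Icc 3 12) (Finset.Icc 13 (2 * k - 3)) := by
      simp only [Finset.disjoint_left, Finset.mem_Icc]; omega
    have hsplit := Finset.sum_union (f := fun s =>
        ((2 * k - 7).choose (s - 3) : ℝ) / ((2 * k - 1).choose s : ℝ)) hd
    rw [hu, closed_sum k (by omega)] at hsplit
    have hk0 : (k : ℝ) ≠ 0 := Nat.cast_ne_zero.mpr (by omega)
    have hrest : ∑ s ∈ Finset.Icc 13 (2 * k - 3),
        ((2 * k - 7).choose (s - 3) : ℝ) / ((2 * k - 1).choose s : ℝ) = (k : ℝ) / 70 - g k := by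
      rw [hg]; linarith [hsplit]
    rw [hrest, sub_div]
    congr 1
    field_simp
  have h0 : ∀ᶠ k : ℕ in Filter.atTop, 0 ≤ g k / k := by
    filter_upwards with k
    apply div_nonneg _ (Nat.cast_nonneg k)
    exact Finset.sum_nonneg fun s _ => term_nonneg _ _
  have hb : ∀ᶠ k : ℕ in Filter.atTop, g k / k ≤ 10 / k := by
    filter_upwards [Filter.eventually_ge_atTop 13] with k hk
    have hgle : g k ≤ 10 := by
      have : g k ≤ ∑ _s ∈ Icc 3 12, (1 : ℝ) := by
        apply Finset.sum_le_sum
        intro s hs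
        simp only [Finset.mem_Icc] at hs
        have hden : (0 : ℝ) < ((2 * k - 1).choose s : ℝ) := by
          exact_mod_cast Nat.choose_pos (show s ≤ 2 * k - 1 by omega)
        rw [div_le_one hden]
        have hn : (2 * k - 7).choose (s - 3) ≤ (2 * k - 1).choose s := by
          calc (2 * k - 7).choose (s - 3) ≤ (2 * k - 1).choose (s - 3) :=
                Nat.choose_le_choose _ (by omega)
            _ ≤ (2 * k - 1).choose s :=
                choose_mono_right _ _ s (by omega) (by omega)
        exact_mod_cast hn
      simpa using this
    have hkpos : (0 : ℝ) < (k : ℝ) := by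
      exact_mod_cast (by omega : 0 < k)
    gcongr
  have h10 : Filter.Tendsto (fun k : ℕ => (10 : ℝ) / k) Filter.atTop (nhds 0) :=
    tendsto_const_div_atTop_nhds_zero_nat 10
  have hgz := squeeze_zero' h0 hb h10
  have hfin := (tendsto_const_nhds (x := (1 / 70 : ℝ)) (f := Filter.atTop)).sub hgz
  rw [sub_zero] at hfin
  exact hfin.congr' heq.symm
end

section
/- Let G_k ⊆ PG(k−1,2) be the set of the k fundamental points together with the k cyclic consecutive sums E_i + E_{i+1}, and let E[τ_F(G_k)] denote the expected number of uniform draws with replacement until a fixed fundamental point is in the span of the drawn points. Then limsup_{k→∞} E[τ_F(G_k)]/k ≤ 70318847/74364290 < 0.9456. -/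
open scoped Classical

open Finset

def cval : ℕ → ℕ → ℚ
  | m, 0 => 1 / m
  | m, p + 1 => cval m p - cval (m + 1) p

lemma cval_zero (m : ℕ) : cval m 0 = 1 / m := rfl
lemma cval_succ (m p : ℕ) : cval m (p + 1) = cval m p - cval (m + 1) p := rfl

noncomputable def cnt (ι : Type*) [Fintype ι] (t : ℕ) (M P : Finset ι) : ℕ :=
  Nat.card {f : Fin t → ι // (∀ a ∈ M, a ∉ Set.range f) ∧ (∀ a ∈ P, a ∈ Set.range f)}

variable {ι : Type*} [Fintype ι]

lemma cnt_eq_filter (t : ℕ) (M P : Finset ι) :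
    cnt ι t M P = (Finset.univ.filter (fun f : Fin t → ι =>
      (∀ a ∈ M, a ∉ Set.range f) ∧ (∀ a ∈ P, a ∈ Set.range f))).card := by
  rw [cnt, Nat.card_eq_fintype_card, Fintype.card_subtype]

lemma cnt_empty (t : ℕ) (M : Finset ι) :
    cnt ι t M ∅ = (Fintype.card ι - M.card) ^ t := by
  rw [cnt]
  have h1 : ∀ f : Fin t → ι, ((∀ a ∈ M, a ∉ Set.range f) ∧ (∀ a ∈ (∅:Finset ι), a ∈ Set.range f))
      ↔ (∀ i : Fin t, f i ∉ M) := by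
    intro f
    constructor
    · rintro ⟨h, -⟩ i hi
      exact h _ hi ⟨i, rfl⟩
    · intro h
      refine ⟨fun a ha hr => ?_, by simp⟩
      obtain ⟨i, rfl⟩ := hr
      exact h i ha
  rw [Nat.card_congr (Equiv.subtypeEquivRight h1)]
  rw [Nat.card_congr (Equiv.subtypePiEquivPi (p := fun _ (x : ι) => x ∉ M))]
  rw [Nat.card_pi]
  simp only [Finset.prod_const, Finset.card_univ, Fintype.card_fin]
  congr 1
  have : Nat.card {x : ι // x ∉ M} = Fintype.card {x : ι // x ∉ M} := Nat.card_eq_fintype_card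
  rw [this]
  simpa using Fintype.card_subtype_compl (fun x : ι => x ∈ M)

lemma cnt_split (t : ℕ) (M P : Finset ι) (q : ι) (hqM : q ∉ M) (hqP : q ∉ P) :
    cnt ι t M (insert q P) + cnt ι t (insert q M) P = cnt ι t M P := by
  classical
  rw [cnt_eq_filter, cnt_eq_filter, cnt_eq_filter]
  have e1 : Finset.univ.filter (fun f : Fin t → ι =>
      (∀ a ∈ M, a ∉ Set.range f) ∧ (∀ a ∈ insert q P, a ∈ Set.range f)) =
      (Finset.univ.filter (fun f : Fin t → ι =>
      (∀ a ∈ M, a ∉ Set.range f) ∧ (∀ a ∈ P, a ∈ Set.range f))).filter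
        (fun f => q ∈ Set.range f) := by
    rw [Finset.filter_filter]
    apply Finset.filter_congr
    intro f _
    simp only [Finset.mem_insert]
    constructor
    · rintro ⟨h1, h2⟩
      exact ⟨⟨h1, fun a ha => h2 a (Or.inr ha)⟩, h2 q (Or.inl rfl)⟩
    · rintro ⟨⟨h1, h2⟩, h3⟩
      refine ⟨h1, fun a ha => ?_⟩
      rcases ha with rfl | ha
      · exact h3
      · exact h2 a ha
  have e2 : Finset.univ.filter (fun f : Fin t → ι =>
      (∀ a ∈ insert q M, a ∉ Set.range f) ∧ (∀ a ∈ P, a ∈ Set.range f)) =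
      (Finset.univ.filter (fun f : Fin t → ι =>
      (∀ a ∈ M, a ∉ Set.range f) ∧ (∀ a ∈ P, a ∈ Set.range f))).filter
        (fun f => ¬ (q ∈ Set.range f)) := by
    rw [Finset.filter_filter]
    apply Finset.filter_congr
    intro f _
    simp only [Finset.mem_insert]
    constructor
    · rintro ⟨h1, h2⟩
      exact ⟨⟨fun a ha => h1 a (Or.inr ha), h2⟩, h1 q (Or.inl rfl)⟩
    · rintro ⟨⟨h1, h2⟩, h3⟩
      refine ⟨fun a ha => ?_, h2⟩
      rcases ha with rfl | ha
      · exact h3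
      · exact h1 a ha
  rw [e1, e2]
  exact Finset.card_filter_add_card_filter_not _

lemma cnt_tsum (N : ℕ) (hN : N = Fintype.card ι) :
    ∀ (P M : Finset ι), M.Nonempty → Disjoint M P →
      Summable (fun t => (cnt ι t M P : ℝ) / (N : ℝ) ^ t) ∧
      ∑' t, (cnt ι t M P : ℝ) / (N : ℝ) ^ t = (N : ℝ) * ((cval M.card P.card : ℚ) : ℝ) := by
  intro P
  induction P using Finset.induction_on with
  | empty =>
    intro M hM hd
    have hm1 : 1 ≤ M.card := Finset.card_pos.mpr hM
    have hmN : M.card ≤ N := hN ▸ Finset.card_le_univ M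
    have hN0 : 0 < N := lt_of_lt_of_le hm1 hmN
    have hkey : ∀ t, (cnt ι t M (∅:Finset ι) : ℝ) / (N:ℝ)^t = (((N - M.card : ℕ) : ℝ)/(N:ℝ))^t := by
      intro t
      rw [cnt_empty, hN, div_pow]
      push_cast
      ring
    have hr0 : (0:ℝ) ≤ ((N - M.card : ℕ) : ℝ)/(N:ℝ) := by positivity
    have hr1 : ((N - M.card : ℕ) : ℝ)/(N:ℝ) < 1 := by
      rw [div_lt_one (by positivity)]
      have : (N - M.card : ℕ) < N := by omega
      exact_mod_cast this
    constructor
    · refine Summable.congr (summable_geometric_of_lt_one hr0 hr1) (fun t => (hkey t).symm)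
    · rw [tsum_congr hkey, tsum_geometric_of_lt_one hr0 hr1]
      rw [Finset.card_empty, cval_zero]
      have hc : ((N - M.card : ℕ) : ℝ) = (N:ℝ) - (M.card:ℝ) := by
        push_cast [Nat.cast_sub hmN]
        ring
      rw [hc]
      push_cast
      have hm0 : ((M.card:ℝ)) ≠ 0 := by positivity
      have hN0' : ((N:ℝ)) ≠ 0 := by positivity
      have h2 : (1:ℝ) - ((N:ℝ)-(M.card:ℝ))/(N:ℝ) = (M.card:ℝ)/(N:ℝ) := by field_simp; ring
      rw [h2, inv_div]
      field_simp
  | @insert q s hq ih =>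
    intro M hM hd
    have hqM : q ∉ M := fun h => (Finset.disjoint_left.mp hd h) (Finset.mem_insert_self q s)
    have hds : Disjoint M s := Finset.disjoint_left.mpr
      (fun a ha h => Finset.disjoint_left.mp hd ha (Finset.mem_insert_of_mem h))
    have hds' : Disjoint (insert q M) s := by
      rw [Finset.disjoint_left]
      intro a ha h
      rcases Finset.mem_insert.mp ha with rfl | ha'
      · exact hq h
      · exact Finset.disjoint_left.mp hds ha' h
    obtain ⟨S1, V1⟩ := ih M hM hds
    obtain ⟨S2, V2⟩ := ih (insert q M) ⟨q, Finset.mem_insert_self q M⟩ hds'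
    have hpt : ∀ t, (cnt ι t M (insert q s) : ℝ) / (N:ℝ)^t =
        (cnt ι t M s : ℝ)/(N:ℝ)^t - (cnt ι t (insert q M) s : ℝ)/(N:ℝ)^t := by
      intro t
      have := cnt_split t M s q hqM hq
      have hc : (cnt ι t M (insert q s) : ℝ) = (cnt ι t M s : ℝ) - (cnt ι t (insert q M) s : ℝ) := by
        have : (cnt ι t M (insert q s) : ℝ) + (cnt ι t (insert q M) s : ℝ) = (cnt ι t M s : ℝ) := by
          exact_mod_cast congrArg (fun x : ℕ => (x:ℝ)) this
        linarith
      rw [hc, sub_div]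
    have hsum : Summable (fun t => (cnt ι t M (insert q s) : ℝ) / (N:ℝ)^t) :=
      Summable.congr (S1.sub S2) (fun t => (hpt t).symm)
    refine ⟨hsum, ?_⟩
    rw [tsum_congr hpt, S1.tsum_sub S2, V1, V2]
    rw [Finset.card_insert_of_notMem hq, Finset.card_insert_of_notMem hqM, cval_succ]
    push_cast
    ring

open Fin.NatCast

abbrev ik (k : ℕ) := Fin k ⊕ Fin k

def eV (k : ℕ) (m : ℕ) : Fin k → ZMod 2 := fun j => if (j : ℕ) = m then 1 else 0

lemma addself {k : ℕ} (w : Fin k → ZMod 2) : w + w = 0 := by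
  funext a
  simp only [Pi.add_apply, Pi.zero_apply]
  generalize w a = x
  revert x
  decide

section geom
variable (k : ℕ) [NeZero k]

lemma Gfam_inl (m : ℕ) (hm : m < k) : Gfam k (Sum.inl ((m : Fin k))) = eV k m := by
  funext j
  simp [Gfam, eV, Fin.val_cast_of_lt hm]

lemma Gfam_inr (m : ℕ) (hm : m + 1 < k) :
    Gfam k (Sum.inr ((m : Fin k))) = eV k m + eV k (m + 1) := by
  funext j
  simp only [Gfam, Sum.elim_inr, eV, Pi.add_apply, Fin.val_cast_of_lt (by omega : m < k)]
  rw [Nat.mod_eq_of_lt hm]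
  by_cases h1 : (j : ℕ) = m
  · by_cases h2 : (j : ℕ) = m + 1
    · omega
    · simp [h1, h2]
  · by_cases h2 : (j : ℕ) = m + 1
    · simp [h1, h2]
    · simp [h1, h2]

lemma Gfam_inr_last (hk2 : 2 ≤ k) :
    Gfam k (Sum.inr (((k - 1 : ℕ) : Fin k))) = eV k (k - 1) + eV k 0 := by
  funext j
  simp only [Gfam, Sum.elim_inr, eV, Pi.add_apply,
    Fin.val_cast_of_lt (by omega : k - 1 < k)]
  rw [Nat.sub_add_cancel (by omega), Nat.mod_self]
  by_cases h1 : (j : ℕ) = k - 1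
  · by_cases h2 : (j : ℕ) = 0
    · omega
    · simp [h1, h2, if_neg (by omega : ¬(k-1 = 0))]
  · by_cases h2 : (j : ℕ) = 0
    · simp [h1, h2, if_neg (by omega : ¬((0:ℕ) = k-1))]
    · simp [h1, h2]

lemma tele_cw : ∀ j : ℕ, j < k →
    (∑ i ∈ Finset.range j, Gfam k (Sum.inr ((i : Fin k)))) = eV k 0 + eV k j := by
  intro j
  induction j with
  | zero =>
    intro _
    simp only [Finset.range_zero, Finset.sum_empty]
    exact (addself (eV k 0)).symm
  | succ n ih =>
    intro hn
    rw [Finset.sum_range_succ, ih (by omega), Gfam_inr k n (by omega)]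
    have h : eV k 0 + eV k n + (eV k n + eV k (n + 1)) =
        eV k 0 + ((eV k n + eV k n) + eV k (n + 1)) := by abel
    rw [h, addself, zero_add]

lemma tele_ccw : ∀ j : ℕ, 1 ≤ j → j < k →
    (∑ i ∈ Finset.range j, Gfam k (Sum.inr (((k - 1 - i : ℕ) : Fin k)))) =
      eV k 0 + eV k (k - j) := by
  intro j hj
  induction j, hj using Nat.le_induction with
  | base =>
    intro hk1
    rw [Finset.sum_range_one]
    have e : k - 1 - 0 = k - 1 := by omega
    rw [e, Gfam_inr_last k (by omega)]
    abel
  | succ n hn ih =>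
    intro hnk
    rw [Finset.sum_range_succ, ih (by omega)]
    have e1 : k - 1 - n + 1 = k - n := by omega
    rw [Gfam_inr k (k - 1 - n) (by omega), e1]
    have e2 : k - (n + 1) = k - 1 - n := by omega
    rw [e2]
    have h : eV k 0 + eV k (k - n) + (eV k (k - 1 - n) + eV k (k - n)) =
        eV k 0 + eV k (k - 1 - n) + (eV k (k - n) + eV k (k - n)) := by abel
    rw [h, addself, add_zero]

noncomputable def Sp {k : ℕ} {t : ℕ} (f : Fin t → ik k) : Submodule (ZMod 2) (Fin k → ZMod 2) :=
  Submodule.span (ZMod 2) (Set.range (Gfam k ∘ f))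

lemma mem_Sp {t : ℕ} (f : Fin t → ik k) {c : ik k} (hc : c ∈ Set.range f) :
    Gfam k c ∈ Sp f := by
  obtain ⟨i, rfl⟩ := hc
  exact Submodule.subset_span ⟨i, rfl⟩

lemma chain_cw {t : ℕ} (f : Fin t → ik k) (j : ℕ) (h1 : 1 ≤ j) (hjk : j + 1 < k)
    (hpre : ∀ i, i < j → Sum.inr ((i : Fin k)) ∈ Set.range f)
    (hF : Sum.inl ((j : Fin k)) ∈ Set.range f) : eV k 0 ∈ Sp f := by
  have hsum : (∑ i ∈ Finset.range j, Gfam k (Sum.inr ((i : Fin k)))) ∈ Sp f :=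
    Submodule.sum_mem _ (fun i hi => mem_Sp k f (hpre i (Finset.mem_range.mp hi)))
  have hFm : Gfam k (Sum.inl ((j : Fin k))) ∈ Sp f := mem_Sp k f hF
  have hid : eV k 0 = (∑ i ∈ Finset.range j, Gfam k (Sum.inr ((i : Fin k)))) +
      Gfam k (Sum.inl ((j : Fin k))) := by
    rw [tele_cw k j (by omega), Gfam_inl k j (by omega), add_assoc, addself, add_zero]
  rw [hid]
  exact Submodule.add_mem _ hsum hFm

lemma chain_ccw {t : ℕ} (f : Fin t → ik k) (j : ℕ) (h1 : 1 ≤ j) (hjk : j + 1 < k)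
    (hpre : ∀ i, i < j → Sum.inr (((k - 1 - i : ℕ) : Fin k)) ∈ Set.range f)
    (hF : Sum.inl (((k - j : ℕ) : Fin k)) ∈ Set.range f) : eV k 0 ∈ Sp f := by
  have hsum : (∑ i ∈ Finset.range j, Gfam k (Sum.inr (((k - 1 - i : ℕ) : Fin k)))) ∈ Sp f :=
    Submodule.sum_mem _ (fun i hi => mem_Sp k f (hpre i (Finset.mem_range.mp hi)))
  have hFm : Gfam k (Sum.inl (((k - j : ℕ) : Fin k))) ∈ Sp f := mem_Sp k f hF
  have hid : eV k 0 = (∑ i ∈ Finset.range j, Gfam k (Sum.inr (((k - 1 - i : ℕ) : Fin k)))) +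
      Gfam k (Sum.inl (((k - j : ℕ) : Fin k))) := by
    rw [tele_ccw k j h1 (by omega), Gfam_inl k (k - j) (by omega), add_assoc, addself, add_zero]
  rw [hid]
  exact Submodule.add_mem _ hsum hFm

end geom

lemma runs {Q R : ℕ → Prop} (L : ℕ) (h : ∀ j, 1 ≤ j → j ≤ L → (∀ i, i < j → Q i) → ¬ R j) :
    ∃ r, r ≤ L ∧ (∀ i, i < r → Q i) ∧ (r < L → ¬ Q r) ∧ (∀ j, 1 ≤ j → j ≤ r → ¬ R j) := by
  by_cases hall : ∀ i, i < L → Q i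
  · exact ⟨L, le_rfl, hall, fun hLL => absurd hLL (lt_irrefl L),
      fun j h1 h2 => h j h1 h2 (fun i hi => hall i (lt_of_lt_of_le hi h2))⟩
  · push_neg at hall
    obtain ⟨i0, hi0, hq0⟩ := hall
    have hex : ∃ i, ¬ Q i := ⟨i0, hq0⟩
    have hrle : Nat.find hex ≤ i0 := Nat.find_min' hex hq0
    have hpre : ∀ i, i < Nat.find hex → Q i := fun i hi => not_not.mp (Nat.find_min hex hi)
    exact ⟨Nat.find hex, by omega, hpre, fun _ => Nat.find_spec hex,
      fun j h1 h2 => h j h1 (by omega) (fun i hi => hpre i (by omega))⟩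

section msets
variable (k : ℕ) [NeZero k]

def Pset (r r' : ℕ) : Finset (ik k) :=
  ((Finset.range r).image fun i : ℕ => Sum.inr ((i : Fin k))) ∪
  ((Finset.range r').image fun i : ℕ => Sum.inr (((k - 1 - i : ℕ) : Fin k)))

def Mset (r r' : ℕ) : Finset (ik k) :=
  ({Sum.inl (((0:ℕ) : Fin k))} ∪
    ((Finset.Icc 1 r).image fun j : ℕ => Sum.inl ((j : Fin k))) ∪
    (if r < 10 then {Sum.inr ((r : Fin k))} else ∅)) ∪
  (((Finset.Icc 1 r').image fun j : ℕ => Sum.inl (((k - j : ℕ) : Fin k))) ∪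
    (if r' < 10 then {Sum.inr (((k - 1 - r' : ℕ) : Fin k))} else ∅))

lemma cast_inj_nat {a b : ℕ} (ha : a < k) (hb : b < k) (h : ((a : Fin k)) = ((b : Fin k))) :
    a = b := by
  have := congrArg Fin.val h
  rwa [Fin.val_cast_of_lt ha, Fin.val_cast_of_lt hb] at this

lemma mem_ite_singleton {α : Type*} {c : Prop} [Decidable c] {x a : α} :
    (a ∈ if c then ({x} : Finset α) else ∅) ↔ c ∧ a = x := by
  split_ifs with h <;> simp [h]

lemma mem_Pset {r r' : ℕ} {a : ik k} : a ∈ Pset k r r' ↔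
    (∃ i, i < r ∧ a = Sum.inr ((i : Fin k))) ∨
    (∃ i, i < r' ∧ a = Sum.inr (((k - 1 - i : ℕ) : Fin k))) := by
  simp only [Pset, Finset.mem_union, Finset.mem_image, Finset.mem_range]
  constructor
  · rintro (⟨i, hi, rfl⟩ | ⟨i, hi, rfl⟩)
    · exact Or.inl ⟨i, hi, rfl⟩
    · exact Or.inr ⟨i, hi, rfl⟩
  · rintro (⟨i, hi, rfl⟩ | ⟨i, hi, rfl⟩)
    · exact Or.inl ⟨i, hi, rfl⟩
    · exact Or.inr ⟨i, hi, rfl⟩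

lemma mem_Mset {r r' : ℕ} {a : ik k} : a ∈ Mset k r r' ↔
    a = Sum.inl (((0:ℕ) : Fin k)) ∨
    (∃ j, 1 ≤ j ∧ j ≤ r ∧ a = Sum.inl ((j : Fin k))) ∨
    (r < 10 ∧ a = Sum.inr ((r : Fin k))) ∨
    (∃ j, 1 ≤ j ∧ j ≤ r' ∧ a = Sum.inl (((k - j : ℕ) : Fin k))) ∨
    (r' < 10 ∧ a = Sum.inr (((k - 1 - r' : ℕ) : Fin k))) := by
  simp only [Mset, Finset.mem_union, Finset.mem_singleton, Finset.mem_image, Finset.mem_Icc,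
    mem_ite_singleton]
  constructor
  · rintro (((rfl | ⟨j, ⟨h1, h2⟩, rfl⟩) | ⟨h, rfl⟩) | (⟨j, ⟨h1, h2⟩, rfl⟩ | ⟨h, rfl⟩))
    · exact Or.inl rfl
    · exact Or.inr (Or.inl ⟨j, h1, h2, rfl⟩)
    · exact Or.inr (Or.inr (Or.inl ⟨h, rfl⟩))
    · exact Or.inr (Or.inr (Or.inr (Or.inl ⟨j, h1, h2, rfl⟩)))
    · exact Or.inr (Or.inr (Or.inr (Or.inr ⟨h, rfl⟩)))
  · rintro (rfl | ⟨j, h1, h2, rfl⟩ | ⟨h, rfl⟩ | ⟨j, h1, h2, rfl⟩ | ⟨h, rfl⟩)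
    · exact Or.inl (Or.inl (Or.inl rfl))
    · exact Or.inl (Or.inl (Or.inr ⟨j, ⟨h1, h2⟩, rfl⟩))
    · exact Or.inl (Or.inr ⟨h, rfl⟩)
    · exact Or.inr (Or.inl ⟨j, ⟨h1, h2⟩, rfl⟩)
    · exact Or.inr (Or.inr ⟨h, rfl⟩)

variable {r r' : ℕ}

lemma Pset_card (hk : 22 ≤ k) (hr : r ≤ 10) (hr' : r' ≤ 10) :
    (Pset k r r').card = r + r' := by
  rw [Pset, Finset.card_union_of_disjoint, Finset.card_image_of_injOn,
    Finset.card_image_of_injOn, Finset.card_range, Finset.card_range]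
  · intro i hi j hj h
    simp only [Finset.coe_range, Set.mem_Iio] at hi hj
    simp only [Sum.inr.injEq] at h
    have := cast_inj_nat k (by omega) (by omega) h
    omega
  · intro i hi j hj h
    simp only [Finset.coe_range, Set.mem_Iio] at hi hj
    simp only [Sum.inr.injEq] at h
    have := cast_inj_nat k (by omega) (by omega) h
    omega
  · rw [Finset.disjoint_left]
    rintro a ha hb
    simp only [Finset.mem_image, Finset.mem_range] at ha hb
    obtain ⟨i, hi, rfl⟩ := ha
    obtain ⟨j, hj, h⟩ := hb
    simp only [Sum.inr.injEq] at h
    have := cast_inj_nat k (by omega) (by omega) h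
    omega

lemma Mset_card (hk : 22 ≤ k) (hr : r ≤ 10) (hr' : r' ≤ 10) :
    (Mset k r r').card = 1 + (if r < 10 then r + 1 else r) + (if r' < 10 then r' + 1 else r') := by
  have cB : ((Finset.Icc 1 r).image fun j : ℕ => (Sum.inl ((j : Fin k)) : ik k)).card = r := by
    rw [Finset.card_image_of_injOn, Nat.card_Icc]
    · omega
    · intro i hi j hj h
      simp only [Finset.coe_Icc, Set.mem_Icc] at hi hj
      exact cast_inj_nat k (by omega) (by omega) (Sum.inl.inj h)
  have cD : ((Finset.Icc 1 r').image fun j : ℕ => (Sum.inl (((k - j : ℕ) : Fin k)) : ik k)).card = r' := by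
    rw [Finset.card_image_of_injOn, Nat.card_Icc]
    · omega
    · intro i hi j hj h
      simp only [Finset.coe_Icc, Set.mem_Icc] at hi hj
      have := cast_inj_nat k (by omega) (by omega) (Sum.inl.inj h)
      omega
  have cC : (if r < 10 then ({Sum.inr ((r : Fin k))} : Finset (ik k)) else ∅).card
      = if r < 10 then 1 else 0 := by split_ifs <;> simp
  have cE : (if r' < 10 then ({Sum.inr (((k - 1 - r' : ℕ) : Fin k))} : Finset (ik k)) else ∅).card
      = if r' < 10 then 1 else 0 := by split_ifs <;> simp
  have dAB : Disjoint ({Sum.inl (((0:ℕ) : Fin k))} : Finset (ik k))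
      ((Finset.Icc 1 r).image fun j : ℕ => Sum.inl ((j : Fin k))) := by
    rw [Finset.disjoint_left]
    rintro a ha hb
    simp only [Finset.mem_singleton] at ha
    subst ha
    simp only [Finset.mem_image, Finset.mem_Icc] at hb
    obtain ⟨j, hj, h⟩ := hb
    simp only [Sum.inl.injEq] at h
    have := cast_inj_nat k (by omega) (by omega) h
    omega
  have dABC : Disjoint (({Sum.inl (((0:ℕ) : Fin k))} : Finset (ik k)) ∪
      ((Finset.Icc 1 r).image fun j : ℕ => Sum.inl ((j : Fin k))))
      (if r < 10 then ({Sum.inr ((r : Fin k))} : Finset (ik k)) else ∅) := by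
    rw [Finset.disjoint_left]
    rintro a ha hb
    rw [mem_ite_singleton] at hb
    obtain ⟨-, rfl⟩ := hb
    simp only [Finset.mem_union, Finset.mem_singleton, Finset.mem_image] at ha
    rcases ha with h | ⟨j, _, h⟩ <;> exact absurd h (by simp)
  have dDE : Disjoint ((Finset.Icc 1 r').image fun j : ℕ => (Sum.inl (((k - j : ℕ) : Fin k)) : ik k))
      (if r' < 10 then ({Sum.inr (((k - 1 - r' : ℕ) : Fin k))} : Finset (ik k)) else ∅) := by
    rw [Finset.disjoint_left]
    rintro a ha hb
    rw [mem_ite_singleton] at hb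
    obtain ⟨-, rfl⟩ := hb
    simp only [Finset.mem_image] at ha
    obtain ⟨j, _, h⟩ := ha
    exact absurd h (by simp)
  have dLR : Disjoint (({Sum.inl (((0:ℕ) : Fin k))} : Finset (ik k)) ∪
      ((Finset.Icc 1 r).image fun j : ℕ => Sum.inl ((j : Fin k))) ∪
      (if r < 10 then ({Sum.inr ((r : Fin k))} : Finset (ik k)) else ∅))
      (((Finset.Icc 1 r').image fun j : ℕ => (Sum.inl (((k - j : ℕ) : Fin k)) : ik k)) ∪
      (if r' < 10 then ({Sum.inr (((k - 1 - r' : ℕ) : Fin k))} : Finset (ik k)) else ∅)) := by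
    rw [Finset.disjoint_left]
    rintro a ha hb
    simp only [Finset.mem_union, Finset.mem_singleton, Finset.mem_image, Finset.mem_Icc,
      mem_ite_singleton] at ha hb
    rcases ha with ((rfl | ⟨j, hj, rfl⟩) | ⟨hlt, rfl⟩) <;>
      rcases hb with (⟨j', hj', h⟩ | ⟨hlt', h⟩)
    · simp only [Sum.inl.injEq] at h
      have := cast_inj_nat k (by omega) (by omega) h
      omega
    · exact absurd h (by simp)
    · simp only [Sum.inl.injEq] at h
      have := cast_inj_nat k (by omega) (by omega) h
      omega
    · exact absurd h (by simp)
    · exact absurd h (by simp)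
    · simp only [Sum.inr.injEq] at h
      have := cast_inj_nat k (by omega) (by omega) h
      omega
  rw [Mset, Finset.card_union_of_disjoint dLR, Finset.card_union_of_disjoint dABC,
    Finset.card_union_of_disjoint dAB, Finset.card_union_of_disjoint dDE,
    Finset.card_singleton, cB, cC, cD, cE]
  split_ifs <;> omega

lemma Mset_nonempty : (Mset k r r').Nonempty :=
  ⟨Sum.inl (((0:ℕ) : Fin k)), (mem_Mset k).mpr (Or.inl rfl)⟩

lemma MP_disjoint (hk : 22 ≤ k) (hr : r ≤ 10) (hr' : r' ≤ 10) :
    Disjoint (Mset k r r') (Pset k r r') := by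
  rw [Finset.disjoint_left]
  intro a ha hb
  rw [mem_Mset] at ha
  rw [mem_Pset] at hb
  rcases ha with (rfl | ⟨j, h1, h2, rfl⟩ | ⟨hlt, rfl⟩ | ⟨j, h1, h2, rfl⟩ | ⟨hlt, rfl⟩) <;>
    rcases hb with (⟨i, hi, h⟩ | ⟨i, hi, h⟩)
  · exact absurd h (by simp)
  · exact absurd h (by simp)
  · exact absurd h (by simp)
  · exact absurd h (by simp)
  · have := cast_inj_nat k (by omega) (by omega) (Sum.inr.inj h)
    omega
  · have := cast_inj_nat k (by omega) (by omega) (Sum.inr.inj h)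
    omega
  · exact absurd h (by simp)
  · exact absurd h (by simp)
  · have := cast_inj_nat k (by omega) (by omega) (Sum.inr.inj h)
    omega
  · have := cast_inj_nat k (by omega) (by omega) (Sum.inr.inj h)
    omega

end msets

lemma cv_3_0 : cval 3 0 = (1 : ℚ) / 3 := by rw [cval_zero]; norm_num
lemma cv_4_0 : cval 4 0 = (1 : ℚ) / 4 := by rw [cval_zero]; norm_num
lemma cv_5_0 : cval 5 0 = (1 : ℚ) / 5 := by rw [cval_zero]; norm_num
lemma cv_6_0 : cval 6 0 = (1 : ℚ) / 6 := by rw [cval_zero]; norm_num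
lemma cv_7_0 : cval 7 0 = (1 : ℚ) / 7 := by rw [cval_zero]; norm_num
lemma cv_8_0 : cval 8 0 = (1 : ℚ) / 8 := by rw [cval_zero]; norm_num
lemma cv_9_0 : cval 9 0 = (1 : ℚ) / 9 := by rw [cval_zero]; norm_num
lemma cv_10_0 : cval 10 0 = (1 : ℚ) / 10 := by rw [cval_zero]; norm_num
lemma cv_11_0 : cval 11 0 = (1 : ℚ) / 11 := by rw [cval_zero]; norm_num
lemma cv_12_0 : cval 12 0 = (1 : ℚ) / 12 := by rw [cval_zero]; norm_num
lemma cv_13_0 : cval 13 0 = (1 : ℚ) / 13 := by rw [cval_zero]; norm_num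
lemma cv_14_0 : cval 14 0 = (1 : ℚ) / 14 := by rw [cval_zero]; norm_num
lemma cv_15_0 : cval 15 0 = (1 : ℚ) / 15 := by rw [cval_zero]; norm_num
lemma cv_16_0 : cval 16 0 = (1 : ℚ) / 16 := by rw [cval_zero]; norm_num
lemma cv_17_0 : cval 17 0 = (1 : ℚ) / 17 := by rw [cval_zero]; norm_num
lemma cv_18_0 : cval 18 0 = (1 : ℚ) / 18 := by rw [cval_zero]; norm_num
lemma cv_19_0 : cval 19 0 = (1 : ℚ) / 19 := by rw [cval_zero]; norm_num
lemma cv_20_0 : cval 20 0 = (1 : ℚ) / 20 := by rw [cval_zero]; norm_num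
lemma cv_21_0 : cval 21 0 = (1 : ℚ) / 21 := by rw [cval_zero]; norm_num
lemma cv_22_0 : cval 22 0 = (1 : ℚ) / 22 := by rw [cval_zero]; norm_num
lemma cv_23_0 : cval 23 0 = (1 : ℚ) / 23 := by rw [cval_zero]; norm_num
lemma cv_24_0 : cval 24 0 = (1 : ℚ) / 24 := by rw [cval_zero]; norm_num
lemma cv_25_0 : cval 25 0 = (1 : ℚ) / 25 := by rw [cval_zero]; norm_num
lemma cv_26_0 : cval 26 0 = (1 : ℚ) / 26 := by rw [cval_zero]; norm_num
lemma cv_27_0 : cval 27 0 = (1 : ℚ) / 27 := by rw [cval_zero]; norm_num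
lemma cv_28_0 : cval 28 0 = (1 : ℚ) / 28 := by rw [cval_zero]; norm_num
lemma cv_29_0 : cval 29 0 = (1 : ℚ) / 29 := by rw [cval_zero]; norm_num
lemma cv_30_0 : cval 30 0 = (1 : ℚ) / 30 := by rw [cval_zero]; norm_num
lemma cv_31_0 : cval 31 0 = (1 : ℚ) / 31 := by rw [cval_zero]; norm_num
lemma cv_32_0 : cval 32 0 = (1 : ℚ) / 32 := by rw [cval_zero]; norm_num
lemma cv_33_0 : cval 33 0 = (1 : ℚ) / 33 := by rw [cval_zero]; norm_num
lemma cv_34_0 : cval 34 0 = (1 : ℚ) / 34 := by rw [cval_zero]; norm_num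
lemma cv_35_0 : cval 35 0 = (1 : ℚ) / 35 := by rw [cval_zero]; norm_num
lemma cv_36_0 : cval 36 0 = (1 : ℚ) / 36 := by rw [cval_zero]; norm_num
lemma cv_37_0 : cval 37 0 = (1 : ℚ) / 37 := by rw [cval_zero]; norm_num
lemma cv_38_0 : cval 38 0 = (1 : ℚ) / 38 := by rw [cval_zero]; norm_num
lemma cv_39_0 : cval 39 0 = (1 : ℚ) / 39 := by rw [cval_zero]; norm_num
lemma cv_40_0 : cval 40 0 = (1 : ℚ) / 40 := by rw [cval_zero]; norm_num
lemma cv_41_0 : cval 41 0 = (1 : ℚ) / 41 := by rw [cval_zero]; norm_num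
lemma cv_4_1 : cval 4 1 = (1 : ℚ) / 20 := by
  rw [show (1:ℕ) = 0+1 from rfl, cval_succ, cv_4_0, cv_5_0]; norm_num
lemma cv_5_1 : cval 5 1 = (1 : ℚ) / 30 := by
  rw [show (1:ℕ) = 0+1 from rfl, cval_succ, cv_5_0, cv_6_0]; norm_num
lemma cv_6_1 : cval 6 1 = (1 : ℚ) / 42 := by
  rw [show (1:ℕ) = 0+1 from rfl, cval_succ, cv_6_0, cv_7_0]; norm_num
lemma cv_7_1 : cval 7 1 = (1 : ℚ) / 56 := by
  rw [show (1:ℕ) = 0+1 from rfl, cval_succ, cv_7_0, cv_8_0]; norm_num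
lemma cv_8_1 : cval 8 1 = (1 : ℚ) / 72 := by
  rw [show (1:ℕ) = 0+1 from rfl, cval_succ, cv_8_0, cv_9_0]; norm_num
lemma cv_9_1 : cval 9 1 = (1 : ℚ) / 90 := by
  rw [show (1:ℕ) = 0+1 from rfl, cval_succ, cv_9_0, cv_10_0]; norm_num
lemma cv_10_1 : cval 10 1 = (1 : ℚ) / 110 := by
  rw [show (1:ℕ) = 0+1 from rfl, cval_succ, cv_10_0, cv_11_0]; norm_num
lemma cv_11_1 : cval 11 1 = (1 : ℚ) / 132 := by
  rw [show (1:ℕ) = 0+1 from rfl, cval_succ, cv_11_0, cv_12_0]; norm_num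
lemma cv_12_1 : cval 12 1 = (1 : ℚ) / 156 := by
  rw [show (1:ℕ) = 0+1 from rfl, cval_succ, cv_12_0, cv_13_0]; norm_num
lemma cv_13_1 : cval 13 1 = (1 : ℚ) / 182 := by
  rw [show (1:ℕ) = 0+1 from rfl, cval_succ, cv_13_0, cv_14_0]; norm_num
lemma cv_14_1 : cval 14 1 = (1 : ℚ) / 210 := by
  rw [show (1:ℕ) = 0+1 from rfl, cval_succ, cv_14_0, cv_15_0]; norm_num
lemma cv_15_1 : cval 15 1 = (1 : ℚ) / 240 := by
  rw [show (1:ℕ) = 0+1 from rfl, cval_succ, cv_15_0, cv_16_0]; norm_num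
lemma cv_16_1 : cval 16 1 = (1 : ℚ) / 272 := by
  rw [show (1:ℕ) = 0+1 from rfl, cval_succ, cv_16_0, cv_17_0]; norm_num
lemma cv_17_1 : cval 17 1 = (1 : ℚ) / 306 := by
  rw [show (1:ℕ) = 0+1 from rfl, cval_succ, cv_17_0, cv_18_0]; norm_num
lemma cv_18_1 : cval 18 1 = (1 : ℚ) / 342 := by
  rw [show (1:ℕ) = 0+1 from rfl, cval_succ, cv_18_0, cv_19_0]; norm_num
lemma cv_19_1 : cval 19 1 = (1 : ℚ) / 380 := by
  rw [show (1:ℕ) = 0+1 from rfl, cval_succ, cv_19_0, cv_20_0]; norm_num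
lemma cv_20_1 : cval 20 1 = (1 : ℚ) / 420 := by
  rw [show (1:ℕ) = 0+1 from rfl, cval_succ, cv_20_0, cv_21_0]; norm_num
lemma cv_21_1 : cval 21 1 = (1 : ℚ) / 462 := by
  rw [show (1:ℕ) = 0+1 from rfl, cval_succ, cv_21_0, cv_22_0]; norm_num
lemma cv_22_1 : cval 22 1 = (1 : ℚ) / 506 := by
  rw [show (1:ℕ) = 0+1 from rfl, cval_succ, cv_22_0, cv_23_0]; norm_num
lemma cv_23_1 : cval 23 1 = (1 : ℚ) / 552 := by
  rw [show (1:ℕ) = 0+1 from rfl, cval_succ, cv_23_0, cv_24_0]; norm_num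
lemma cv_24_1 : cval 24 1 = (1 : ℚ) / 600 := by
  rw [show (1:ℕ) = 0+1 from rfl, cval_succ, cv_24_0, cv_25_0]; norm_num
lemma cv_25_1 : cval 25 1 = (1 : ℚ) / 650 := by
  rw [show (1:ℕ) = 0+1 from rfl, cval_succ, cv_25_0, cv_26_0]; norm_num
lemma cv_26_1 : cval 26 1 = (1 : ℚ) / 702 := by
  rw [show (1:ℕ) = 0+1 from rfl, cval_succ, cv_26_0, cv_27_0]; norm_num
lemma cv_27_1 : cval 27 1 = (1 : ℚ) / 756 := by
  rw [show (1:ℕ) = 0+1 from rfl, cval_succ, cv_27_0, cv_28_0]; norm_num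
lemma cv_28_1 : cval 28 1 = (1 : ℚ) / 812 := by
  rw [show (1:ℕ) = 0+1 from rfl, cval_succ, cv_28_0, cv_29_0]; norm_num
lemma cv_29_1 : cval 29 1 = (1 : ℚ) / 870 := by
  rw [show (1:ℕ) = 0+1 from rfl, cval_succ, cv_29_0, cv_30_0]; norm_num
lemma cv_30_1 : cval 30 1 = (1 : ℚ) / 930 := by
  rw [show (1:ℕ) = 0+1 from rfl, cval_succ, cv_30_0, cv_31_0]; norm_num
lemma cv_31_1 : cval 31 1 = (1 : ℚ) / 992 := by
  rw [show (1:ℕ) = 0+1 from rfl, cval_succ, cv_31_0, cv_32_0]; norm_num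
lemma cv_32_1 : cval 32 1 = (1 : ℚ) / 1056 := by
  rw [show (1:ℕ) = 0+1 from rfl, cval_succ, cv_32_0, cv_33_0]; norm_num
lemma cv_33_1 : cval 33 1 = (1 : ℚ) / 1122 := by
  rw [show (1:ℕ) = 0+1 from rfl, cval_succ, cv_33_0, cv_34_0]; norm_num
lemma cv_34_1 : cval 34 1 = (1 : ℚ) / 1190 := by
  rw [show (1:ℕ) = 0+1 from rfl, cval_succ, cv_34_0, cv_35_0]; norm_num
lemma cv_35_1 : cval 35 1 = (1 : ℚ) / 1260 := by
  rw [show (1:ℕ) = 0+1 from rfl, cval_succ, cv_35_0, cv_36_0]; norm_num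
lemma cv_36_1 : cval 36 1 = (1 : ℚ) / 1332 := by
  rw [show (1:ℕ) = 0+1 from rfl, cval_succ, cv_36_0, cv_37_0]; norm_num
lemma cv_37_1 : cval 37 1 = (1 : ℚ) / 1406 := by
  rw [show (1:ℕ) = 0+1 from rfl, cval_succ, cv_37_0, cv_38_0]; norm_num
lemma cv_38_1 : cval 38 1 = (1 : ℚ) / 1482 := by
  rw [show (1:ℕ) = 0+1 from rfl, cval_succ, cv_38_0, cv_39_0]; norm_num
lemma cv_39_1 : cval 39 1 = (1 : ℚ) / 1560 := by
  rw [show (1:ℕ) = 0+1 from rfl, cval_succ, cv_39_0, cv_40_0]; norm_num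
lemma cv_40_1 : cval 40 1 = (1 : ℚ) / 1640 := by
  rw [show (1:ℕ) = 0+1 from rfl, cval_succ, cv_40_0, cv_41_0]; norm_num
lemma cv_5_2 : cval 5 2 = (1 : ℚ) / 105 := by
  rw [show (2:ℕ) = 1+1 from rfl, cval_succ, cv_5_1, cv_6_1]; norm_num
lemma cv_6_2 : cval 6 2 = (1 : ℚ) / 168 := by
  rw [show (2:ℕ) = 1+1 from rfl, cval_succ, cv_6_1, cv_7_1]; norm_num
lemma cv_7_2 : cval 7 2 = (1 : ℚ) / 252 := by
  rw [show (2:ℕ) = 1+1 from rfl, cval_succ, cv_7_1, cv_8_1]; norm_num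
lemma cv_8_2 : cval 8 2 = (1 : ℚ) / 360 := by
  rw [show (2:ℕ) = 1+1 from rfl, cval_succ, cv_8_1, cv_9_1]; norm_num
lemma cv_9_2 : cval 9 2 = (1 : ℚ) / 495 := by
  rw [show (2:ℕ) = 1+1 from rfl, cval_succ, cv_9_1, cv_10_1]; norm_num
lemma cv_10_2 : cval 10 2 = (1 : ℚ) / 660 := by
  rw [show (2:ℕ) = 1+1 from rfl, cval_succ, cv_10_1, cv_11_1]; norm_num
lemma cv_11_2 : cval 11 2 = (1 : ℚ) / 858 := by
  rw [show (2:ℕ) = 1+1 from rfl, cval_succ, cv_11_1, cv_12_1]; norm_num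
lemma cv_12_2 : cval 12 2 = (1 : ℚ) / 1092 := by
  rw [show (2:ℕ) = 1+1 from rfl, cval_succ, cv_12_1, cv_13_1]; norm_num
lemma cv_13_2 : cval 13 2 = (1 : ℚ) / 1365 := by
  rw [show (2:ℕ) = 1+1 from rfl, cval_succ, cv_13_1, cv_14_1]; norm_num
lemma cv_14_2 : cval 14 2 = (1 : ℚ) / 1680 := by
  rw [show (2:ℕ) = 1+1 from rfl, cval_succ, cv_14_1, cv_15_1]; norm_num
lemma cv_15_2 : cval 15 2 = (1 : ℚ) / 2040 := by
  rw [show (2:ℕ) = 1+1 from rfl, cval_succ, cv_15_1, cv_16_1]; norm_num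
lemma cv_16_2 : cval 16 2 = (1 : ℚ) / 2448 := by
  rw [show (2:ℕ) = 1+1 from rfl, cval_succ, cv_16_1, cv_17_1]; norm_num
lemma cv_17_2 : cval 17 2 = (1 : ℚ) / 2907 := by
  rw [show (2:ℕ) = 1+1 from rfl, cval_succ, cv_17_1, cv_18_1]; norm_num
lemma cv_18_2 : cval 18 2 = (1 : ℚ) / 3420 := by
  rw [show (2:ℕ) = 1+1 from rfl, cval_succ, cv_18_1, cv_19_1]; norm_num
lemma cv_19_2 : cval 19 2 = (1 : ℚ) / 3990 := by
  rw [show (2:ℕ) = 1+1 from rfl, cval_succ, cv_19_1, cv_20_1]; norm_num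
lemma cv_20_2 : cval 20 2 = (1 : ℚ) / 4620 := by
  rw [show (2:ℕ) = 1+1 from rfl, cval_succ, cv_20_1, cv_21_1]; norm_num
lemma cv_21_2 : cval 21 2 = (1 : ℚ) / 5313 := by
  rw [show (2:ℕ) = 1+1 from rfl, cval_succ, cv_21_1, cv_22_1]; norm_num
lemma cv_22_2 : cval 22 2 = (1 : ℚ) / 6072 := by
  rw [show (2:ℕ) = 1+1 from rfl, cval_succ, cv_22_1, cv_23_1]; norm_num
lemma cv_23_2 : cval 23 2 = (1 : ℚ) / 6900 := by
  rw [show (2:ℕ) = 1+1 from rfl, cval_succ, cv_23_1, cv_24_1]; norm_num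
lemma cv_24_2 : cval 24 2 = (1 : ℚ) / 7800 := by
  rw [show (2:ℕ) = 1+1 from rfl, cval_succ, cv_24_1, cv_25_1]; norm_num
lemma cv_25_2 : cval 25 2 = (1 : ℚ) / 8775 := by
  rw [show (2:ℕ) = 1+1 from rfl, cval_succ, cv_25_1, cv_26_1]; norm_num
lemma cv_26_2 : cval 26 2 = (1 : ℚ) / 9828 := by
  rw [show (2:ℕ) = 1+1 from rfl, cval_succ, cv_26_1, cv_27_1]; norm_num
lemma cv_27_2 : cval 27 2 = (1 : ℚ) / 10962 := by
  rw [show (2:ℕ) = 1+1 from rfl, cval_succ, cv_27_1, cv_28_1]; norm_num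
lemma cv_28_2 : cval 28 2 = (1 : ℚ) / 12180 := by
  rw [show (2:ℕ) = 1+1 from rfl, cval_succ, cv_28_1, cv_29_1]; norm_num
lemma cv_29_2 : cval 29 2 = (1 : ℚ) / 13485 := by
  rw [show (2:ℕ) = 1+1 from rfl, cval_succ, cv_29_1, cv_30_1]; norm_num
lemma cv_30_2 : cval 30 2 = (1 : ℚ) / 14880 := by
  rw [show (2:ℕ) = 1+1 from rfl, cval_succ, cv_30_1, cv_31_1]; norm_num
lemma cv_31_2 : cval 31 2 = (1 : ℚ) / 16368 := by
  rw [show (2:ℕ) = 1+1 from rfl, cval_succ, cv_31_1, cv_32_1]; norm_num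
lemma cv_32_2 : cval 32 2 = (1 : ℚ) / 17952 := by
  rw [show (2:ℕ) = 1+1 from rfl, cval_succ, cv_32_1, cv_33_1]; norm_num
lemma cv_33_2 : cval 33 2 = (1 : ℚ) / 19635 := by
  rw [show (2:ℕ) = 1+1 from rfl, cval_succ, cv_33_1, cv_34_1]; norm_num
lemma cv_34_2 : cval 34 2 = (1 : ℚ) / 21420 := by
  rw [show (2:ℕ) = 1+1 from rfl, cval_succ, cv_34_1, cv_35_1]; norm_num
lemma cv_35_2 : cval 35 2 = (1 : ℚ) / 23310 := by
  rw [show (2:ℕ) = 1+1 from rfl, cval_succ, cv_35_1, cv_36_1]; norm_num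
lemma cv_36_2 : cval 36 2 = (1 : ℚ) / 25308 := by
  rw [show (2:ℕ) = 1+1 from rfl, cval_succ, cv_36_1, cv_37_1]; norm_num
lemma cv_37_2 : cval 37 2 = (1 : ℚ) / 27417 := by
  rw [show (2:ℕ) = 1+1 from rfl, cval_succ, cv_37_1, cv_38_1]; norm_num
lemma cv_38_2 : cval 38 2 = (1 : ℚ) / 29640 := by
  rw [show (2:ℕ) = 1+1 from rfl, cval_succ, cv_38_1, cv_39_1]; norm_num
lemma cv_39_2 : cval 39 2 = (1 : ℚ) / 31980 := by
  rw [show (2:ℕ) = 1+1 from rfl, cval_succ, cv_39_1, cv_40_1]; norm_num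
lemma cv_6_3 : cval 6 3 = (1 : ℚ) / 504 := by
  rw [show (3:ℕ) = 2+1 from rfl, cval_succ, cv_6_2, cv_7_2]; norm_num
lemma cv_7_3 : cval 7 3 = (1 : ℚ) / 840 := by
  rw [show (3:ℕ) = 2+1 from rfl, cval_succ, cv_7_2, cv_8_2]; norm_num
lemma cv_8_3 : cval 8 3 = (1 : ℚ) / 1320 := by
  rw [show (3:ℕ) = 2+1 from rfl, cval_succ, cv_8_2, cv_9_2]; norm_num
lemma cv_9_3 : cval 9 3 = (1 : ℚ) / 1980 := by
  rw [show (3:ℕ) = 2+1 from rfl, cval_succ, cv_9_2, cv_10_2]; norm_num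
lemma cv_10_3 : cval 10 3 = (1 : ℚ) / 2860 := by
  rw [show (3:ℕ) = 2+1 from rfl, cval_succ, cv_10_2, cv_11_2]; norm_num
lemma cv_11_3 : cval 11 3 = (1 : ℚ) / 4004 := by
  rw [show (3:ℕ) = 2+1 from rfl, cval_succ, cv_11_2, cv_12_2]; norm_num
lemma cv_12_3 : cval 12 3 = (1 : ℚ) / 5460 := by
  rw [show (3:ℕ) = 2+1 from rfl, cval_succ, cv_12_2, cv_13_2]; norm_num
lemma cv_13_3 : cval 13 3 = (1 : ℚ) / 7280 := by
  rw [show (3:ℕ) = 2+1 from rfl, cval_succ, cv_13_2, cv_14_2]; norm_num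
lemma cv_14_3 : cval 14 3 = (1 : ℚ) / 9520 := by
  rw [show (3:ℕ) = 2+1 from rfl, cval_succ, cv_14_2, cv_15_2]; norm_num
lemma cv_15_3 : cval 15 3 = (1 : ℚ) / 12240 := by
  rw [show (3:ℕ) = 2+1 from rfl, cval_succ, cv_15_2, cv_16_2]; norm_num
lemma cv_16_3 : cval 16 3 = (1 : ℚ) / 15504 := by
  rw [show (3:ℕ) = 2+1 from rfl, cval_succ, cv_16_2, cv_17_2]; norm_num
lemma cv_17_3 : cval 17 3 = (1 : ℚ) / 19380 := by
  rw [show (3:ℕ) = 2+1 from rfl, cval_succ, cv_17_2, cv_18_2]; norm_num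
lemma cv_18_3 : cval 18 3 = (1 : ℚ) / 23940 := by
  rw [show (3:ℕ) = 2+1 from rfl, cval_succ, cv_18_2, cv_19_2]; norm_num
lemma cv_19_3 : cval 19 3 = (1 : ℚ) / 29260 := by
  rw [show (3:ℕ) = 2+1 from rfl, cval_succ, cv_19_2, cv_20_2]; norm_num
lemma cv_20_3 : cval 20 3 = (1 : ℚ) / 35420 := by
  rw [show (3:ℕ) = 2+1 from rfl, cval_succ, cv_20_2, cv_21_2]; norm_num
lemma cv_21_3 : cval 21 3 = (1 : ℚ) / 42504 := by
  rw [show (3:ℕ) = 2+1 from rfl, cval_succ, cv_21_2, cv_22_2]; norm_num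
lemma cv_22_3 : cval 22 3 = (1 : ℚ) / 50600 := by
  rw [show (3:ℕ) = 2+1 from rfl, cval_succ, cv_22_2, cv_23_2]; norm_num
lemma cv_23_3 : cval 23 3 = (1 : ℚ) / 59800 := by
  rw [show (3:ℕ) = 2+1 from rfl, cval_succ, cv_23_2, cv_24_2]; norm_num
lemma cv_24_3 : cval 24 3 = (1 : ℚ) / 70200 := by
  rw [show (3:ℕ) = 2+1 from rfl, cval_succ, cv_24_2, cv_25_2]; norm_num
lemma cv_25_3 : cval 25 3 = (1 : ℚ) / 81900 := by
  rw [show (3:ℕ) = 2+1 from rfl, cval_succ, cv_25_2, cv_26_2]; norm_num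
lemma cv_26_3 : cval 26 3 = (1 : ℚ) / 95004 := by
  rw [show (3:ℕ) = 2+1 from rfl, cval_succ, cv_26_2, cv_27_2]; norm_num
lemma cv_27_3 : cval 27 3 = (1 : ℚ) / 109620 := by
  rw [show (3:ℕ) = 2+1 from rfl, cval_succ, cv_27_2, cv_28_2]; norm_num
lemma cv_28_3 : cval 28 3 = (1 : ℚ) / 125860 := by
  rw [show (3:ℕ) = 2+1 from rfl, cval_succ, cv_28_2, cv_29_2]; norm_num
lemma cv_29_3 : cval 29 3 = (1 : ℚ) / 143840 := by
  rw [show (3:ℕ) = 2+1 from rfl, cval_succ, cv_29_2, cv_30_2]; norm_num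
lemma cv_30_3 : cval 30 3 = (1 : ℚ) / 163680 := by
  rw [show (3:ℕ) = 2+1 from rfl, cval_succ, cv_30_2, cv_31_2]; norm_num
lemma cv_31_3 : cval 31 3 = (1 : ℚ) / 185504 := by
  rw [show (3:ℕ) = 2+1 from rfl, cval_succ, cv_31_2, cv_32_2]; norm_num
lemma cv_32_3 : cval 32 3 = (1 : ℚ) / 209440 := by
  rw [show (3:ℕ) = 2+1 from rfl, cval_succ, cv_32_2, cv_33_2]; norm_num
lemma cv_33_3 : cval 33 3 = (1 : ℚ) / 235620 := by
  rw [show (3:ℕ) = 2+1 from rfl, cval_succ, cv_33_2, cv_34_2]; norm_num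
lemma cv_34_3 : cval 34 3 = (1 : ℚ) / 264180 := by
  rw [show (3:ℕ) = 2+1 from rfl, cval_succ, cv_34_2, cv_35_2]; norm_num
lemma cv_35_3 : cval 35 3 = (1 : ℚ) / 295260 := by
  rw [show (3:ℕ) = 2+1 from rfl, cval_succ, cv_35_2, cv_36_2]; norm_num
lemma cv_36_3 : cval 36 3 = (1 : ℚ) / 329004 := by
  rw [show (3:ℕ) = 2+1 from rfl, cval_succ, cv_36_2, cv_37_2]; norm_num
lemma cv_37_3 : cval 37 3 = (1 : ℚ) / 365560 := by
  rw [show (3:ℕ) = 2+1 from rfl, cval_succ, cv_37_2, cv_38_2]; norm_num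
lemma cv_38_3 : cval 38 3 = (1 : ℚ) / 405080 := by
  rw [show (3:ℕ) = 2+1 from rfl, cval_succ, cv_38_2, cv_39_2]; norm_num
lemma cv_7_4 : cval 7 4 = (1 : ℚ) / 2310 := by
  rw [show (4:ℕ) = 3+1 from rfl, cval_succ, cv_7_3, cv_8_3]; norm_num
lemma cv_8_4 : cval 8 4 = (1 : ℚ) / 3960 := by
  rw [show (4:ℕ) = 3+1 from rfl, cval_succ, cv_8_3, cv_9_3]; norm_num
lemma cv_9_4 : cval 9 4 = (1 : ℚ) / 6435 := by
  rw [show (4:ℕ) = 3+1 from rfl, cval_succ, cv_9_3, cv_10_3]; norm_num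
lemma cv_10_4 : cval 10 4 = (1 : ℚ) / 10010 := by
  rw [show (4:ℕ) = 3+1 from rfl, cval_succ, cv_10_3, cv_11_3]; norm_num
lemma cv_11_4 : cval 11 4 = (1 : ℚ) / 15015 := by
  rw [show (4:ℕ) = 3+1 from rfl, cval_succ, cv_11_3, cv_12_3]; norm_num
lemma cv_12_4 : cval 12 4 = (1 : ℚ) / 21840 := by
  rw [show (4:ℕ) = 3+1 from rfl, cval_succ, cv_12_3, cv_13_3]; norm_num
lemma cv_13_4 : cval 13 4 = (1 : ℚ) / 30940 := by
  rw [show (4:ℕ) = 3+1 from rfl, cval_succ, cv_13_3, cv_14_3]; norm_num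
lemma cv_14_4 : cval 14 4 = (1 : ℚ) / 42840 := by
  rw [show (4:ℕ) = 3+1 from rfl, cval_succ, cv_14_3, cv_15_3]; norm_num
lemma cv_15_4 : cval 15 4 = (1 : ℚ) / 58140 := by
  rw [show (4:ℕ) = 3+1 from rfl, cval_succ, cv_15_3, cv_16_3]; norm_num
lemma cv_16_4 : cval 16 4 = (1 : ℚ) / 77520 := by
  rw [show (4:ℕ) = 3+1 from rfl, cval_succ, cv_16_3, cv_17_3]; norm_num
lemma cv_17_4 : cval 17 4 = (1 : ℚ) / 101745 := by
  rw [show (4:ℕ) = 3+1 from rfl, cval_succ, cv_17_3, cv_18_3]; norm_num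
lemma cv_18_4 : cval 18 4 = (1 : ℚ) / 131670 := by
  rw [show (4:ℕ) = 3+1 from rfl, cval_succ, cv_18_3, cv_19_3]; norm_num
lemma cv_19_4 : cval 19 4 = (1 : ℚ) / 168245 := by
  rw [show (4:ℕ) = 3+1 from rfl, cval_succ, cv_19_3, cv_20_3]; norm_num
lemma cv_20_4 : cval 20 4 = (1 : ℚ) / 212520 := by
  rw [show (4:ℕ) = 3+1 from rfl, cval_succ, cv_20_3, cv_21_3]; norm_num
lemma cv_21_4 : cval 21 4 = (1 : ℚ) / 265650 := by
  rw [show (4:ℕ) = 3+1 from rfl, cval_succ, cv_21_3, cv_22_3]; norm_num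
lemma cv_22_4 : cval 22 4 = (1 : ℚ) / 328900 := by
  rw [show (4:ℕ) = 3+1 from rfl, cval_succ, cv_22_3, cv_23_3]; norm_num
lemma cv_23_4 : cval 23 4 = (1 : ℚ) / 403650 := by
  rw [show (4:ℕ) = 3+1 from rfl, cval_succ, cv_23_3, cv_24_3]; norm_num
lemma cv_24_4 : cval 24 4 = (1 : ℚ) / 491400 := by
  rw [show (4:ℕ) = 3+1 from rfl, cval_succ, cv_24_3, cv_25_3]; norm_num
lemma cv_25_4 : cval 25 4 = (1 : ℚ) / 593775 := by
  rw [show (4:ℕ) = 3+1 from rfl, cval_succ, cv_25_3, cv_26_3]; norm_num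
lemma cv_26_4 : cval 26 4 = (1 : ℚ) / 712530 := by
  rw [show (4:ℕ) = 3+1 from rfl, cval_succ, cv_26_3, cv_27_3]; norm_num
lemma cv_27_4 : cval 27 4 = (1 : ℚ) / 849555 := by
  rw [show (4:ℕ) = 3+1 from rfl, cval_succ, cv_27_3, cv_28_3]; norm_num
lemma cv_28_4 : cval 28 4 = (1 : ℚ) / 1006880 := by
  rw [show (4:ℕ) = 3+1 from rfl, cval_succ, cv_28_3, cv_29_3]; norm_num
lemma cv_29_4 : cval 29 4 = (1 : ℚ) / 1186680 := by
  rw [show (4:ℕ) = 3+1 from rfl, cval_succ, cv_29_3, cv_30_3]; norm_num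
lemma cv_30_4 : cval 30 4 = (1 : ℚ) / 1391280 := by
  rw [show (4:ℕ) = 3+1 from rfl, cval_succ, cv_30_3, cv_31_3]; norm_num
lemma cv_31_4 : cval 31 4 = (1 : ℚ) / 1623160 := by
  rw [show (4:ℕ) = 3+1 from rfl, cval_succ, cv_31_3, cv_32_3]; norm_num
lemma cv_32_4 : cval 32 4 = (1 : ℚ) / 1884960 := by
  rw [show (4:ℕ) = 3+1 from rfl, cval_succ, cv_32_3, cv_33_3]; norm_num
lemma cv_33_4 : cval 33 4 = (1 : ℚ) / 2179485 := by
  rw [show (4:ℕ) = 3+1 from rfl, cval_succ, cv_33_3, cv_34_3]; norm_num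
lemma cv_34_4 : cval 34 4 = (1 : ℚ) / 2509710 := by
  rw [show (4:ℕ) = 3+1 from rfl, cval_succ, cv_34_3, cv_35_3]; norm_num
lemma cv_35_4 : cval 35 4 = (1 : ℚ) / 2878785 := by
  rw [show (4:ℕ) = 3+1 from rfl, cval_succ, cv_35_3, cv_36_3]; norm_num
lemma cv_36_4 : cval 36 4 = (1 : ℚ) / 3290040 := by
  rw [show (4:ℕ) = 3+1 from rfl, cval_succ, cv_36_3, cv_37_3]; norm_num
lemma cv_37_4 : cval 37 4 = (1 : ℚ) / 3746990 := by
  rw [show (4:ℕ) = 3+1 from rfl, cval_succ, cv_37_3, cv_38_3]; norm_num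
lemma cv_8_5 : cval 8 5 = (1 : ℚ) / 10296 := by
  rw [show (5:ℕ) = 4+1 from rfl, cval_succ, cv_8_4, cv_9_4]; norm_num
lemma cv_9_5 : cval 9 5 = (1 : ℚ) / 18018 := by
  rw [show (5:ℕ) = 4+1 from rfl, cval_succ, cv_9_4, cv_10_4]; norm_num
lemma cv_10_5 : cval 10 5 = (1 : ℚ) / 30030 := by
  rw [show (5:ℕ) = 4+1 from rfl, cval_succ, cv_10_4, cv_11_4]; norm_num
lemma cv_11_5 : cval 11 5 = (1 : ℚ) / 48048 := by
  rw [show (5:ℕ) = 4+1 from rfl, cval_succ, cv_11_4, cv_12_4]; norm_num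
lemma cv_12_5 : cval 12 5 = (1 : ℚ) / 74256 := by
  rw [show (5:ℕ) = 4+1 from rfl, cval_succ, cv_12_4, cv_13_4]; norm_num
lemma cv_13_5 : cval 13 5 = (1 : ℚ) / 111384 := by
  rw [show (5:ℕ) = 4+1 from rfl, cval_succ, cv_13_4, cv_14_4]; norm_num
lemma cv_14_5 : cval 14 5 = (1 : ℚ) / 162792 := by
  rw [show (5:ℕ) = 4+1 from rfl, cval_succ, cv_14_4, cv_15_4]; norm_num
lemma cv_15_5 : cval 15 5 = (1 : ℚ) / 232560 := by
  rw [show (5:ℕ) = 4+1 from rfl, cval_succ, cv_15_4, cv_16_4]; norm_num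
lemma cv_16_5 : cval 16 5 = (1 : ℚ) / 325584 := by
  rw [show (5:ℕ) = 4+1 from rfl, cval_succ, cv_16_4, cv_17_4]; norm_num
lemma cv_17_5 : cval 17 5 = (1 : ℚ) / 447678 := by
  rw [show (5:ℕ) = 4+1 from rfl, cval_succ, cv_17_4, cv_18_4]; norm_num
lemma cv_18_5 : cval 18 5 = (1 : ℚ) / 605682 := by
  rw [show (5:ℕ) = 4+1 from rfl, cval_succ, cv_18_4, cv_19_4]; norm_num
lemma cv_19_5 : cval 19 5 = (1 : ℚ) / 807576 := by
  rw [show (5:ℕ) = 4+1 from rfl, cval_succ, cv_19_4, cv_20_4]; norm_num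
lemma cv_20_5 : cval 20 5 = (1 : ℚ) / 1062600 := by
  rw [show (5:ℕ) = 4+1 from rfl, cval_succ, cv_20_4, cv_21_4]; norm_num
lemma cv_21_5 : cval 21 5 = (1 : ℚ) / 1381380 := by
  rw [show (5:ℕ) = 4+1 from rfl, cval_succ, cv_21_4, cv_22_4]; norm_num
lemma cv_22_5 : cval 22 5 = (1 : ℚ) / 1776060 := by
  rw [show (5:ℕ) = 4+1 from rfl, cval_succ, cv_22_4, cv_23_4]; norm_num
lemma cv_23_5 : cval 23 5 = (1 : ℚ) / 2260440 := by
  rw [show (5:ℕ) = 4+1 from rfl, cval_succ, cv_23_4, cv_24_4]; norm_num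
lemma cv_24_5 : cval 24 5 = (1 : ℚ) / 2850120 := by
  rw [show (5:ℕ) = 4+1 from rfl, cval_succ, cv_24_4, cv_25_4]; norm_num
lemma cv_25_5 : cval 25 5 = (1 : ℚ) / 3562650 := by
  rw [show (5:ℕ) = 4+1 from rfl, cval_succ, cv_25_4, cv_26_4]; norm_num
lemma cv_26_5 : cval 26 5 = (1 : ℚ) / 4417686 := by
  rw [show (5:ℕ) = 4+1 from rfl, cval_succ, cv_26_4, cv_27_4]; norm_num
lemma cv_27_5 : cval 27 5 = (1 : ℚ) / 5437152 := by
  rw [show (5:ℕ) = 4+1 from rfl, cval_succ, cv_27_4, cv_28_4]; norm_num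
lemma cv_28_5 : cval 28 5 = (1 : ℚ) / 6645408 := by
  rw [show (5:ℕ) = 4+1 from rfl, cval_succ, cv_28_4, cv_29_4]; norm_num
lemma cv_29_5 : cval 29 5 = (1 : ℚ) / 8069424 := by
  rw [show (5:ℕ) = 4+1 from rfl, cval_succ, cv_29_4, cv_30_4]; norm_num
lemma cv_30_5 : cval 30 5 = (1 : ℚ) / 9738960 := by
  rw [show (5:ℕ) = 4+1 from rfl, cval_succ, cv_30_4, cv_31_4]; norm_num
lemma cv_31_5 : cval 31 5 = (1 : ℚ) / 11686752 := by
  rw [show (5:ℕ) = 4+1 from rfl, cval_succ, cv_31_4, cv_32_4]; norm_num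
lemma cv_32_5 : cval 32 5 = (1 : ℚ) / 13948704 := by
  rw [show (5:ℕ) = 4+1 from rfl, cval_succ, cv_32_4, cv_33_4]; norm_num
lemma cv_33_5 : cval 33 5 = (1 : ℚ) / 16564086 := by
  rw [show (5:ℕ) = 4+1 from rfl, cval_succ, cv_33_4, cv_34_4]; norm_num
lemma cv_34_5 : cval 34 5 = (1 : ℚ) / 19575738 := by
  rw [show (5:ℕ) = 4+1 from rfl, cval_succ, cv_34_4, cv_35_4]; norm_num
lemma cv_35_5 : cval 35 5 = (1 : ℚ) / 23030280 := by
  rw [show (5:ℕ) = 4+1 from rfl, cval_succ, cv_35_4, cv_36_4]; norm_num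
lemma cv_36_5 : cval 36 5 = (1 : ℚ) / 26978328 := by
  rw [show (5:ℕ) = 4+1 from rfl, cval_succ, cv_36_4, cv_37_4]; norm_num
lemma cv_9_6 : cval 9 6 = (1 : ℚ) / 45045 := by
  rw [show (6:ℕ) = 5+1 from rfl, cval_succ, cv_9_5, cv_10_5]; norm_num
lemma cv_10_6 : cval 10 6 = (1 : ℚ) / 80080 := by
  rw [show (6:ℕ) = 5+1 from rfl, cval_succ, cv_10_5, cv_11_5]; norm_num
lemma cv_11_6 : cval 11 6 = (1 : ℚ) / 136136 := by
  rw [show (6:ℕ) = 5+1 from rfl, cval_succ, cv_11_5, cv_12_5]; norm_num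
lemma cv_12_6 : cval 12 6 = (1 : ℚ) / 222768 := by
  rw [show (6:ℕ) = 5+1 from rfl, cval_succ, cv_12_5, cv_13_5]; norm_num
lemma cv_13_6 : cval 13 6 = (1 : ℚ) / 352716 := by
  rw [show (6:ℕ) = 5+1 from rfl, cval_succ, cv_13_5, cv_14_5]; norm_num
lemma cv_14_6 : cval 14 6 = (1 : ℚ) / 542640 := by
  rw [show (6:ℕ) = 5+1 from rfl, cval_succ, cv_14_5, cv_15_5]; norm_num
lemma cv_15_6 : cval 15 6 = (1 : ℚ) / 813960 := by
  rw [show (6:ℕ) = 5+1 from rfl, cval_succ, cv_15_5, cv_16_5]; norm_num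
lemma cv_16_6 : cval 16 6 = (1 : ℚ) / 1193808 := by
  rw [show (6:ℕ) = 5+1 from rfl, cval_succ, cv_16_5, cv_17_5]; norm_num
lemma cv_17_6 : cval 17 6 = (1 : ℚ) / 1716099 := by
  rw [show (6:ℕ) = 5+1 from rfl, cval_succ, cv_17_5, cv_18_5]; norm_num
lemma cv_18_6 : cval 18 6 = (1 : ℚ) / 2422728 := by
  rw [show (6:ℕ) = 5+1 from rfl, cval_succ, cv_18_5, cv_19_5]; norm_num
lemma cv_19_6 : cval 19 6 = (1 : ℚ) / 3364900 := by
  rw [show (6:ℕ) = 5+1 from rfl, cval_succ, cv_19_5, cv_20_5]; norm_num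
lemma cv_20_6 : cval 20 6 = (1 : ℚ) / 4604600 := by
  rw [show (6:ℕ) = 5+1 from rfl, cval_succ, cv_20_5, cv_21_5]; norm_num
lemma cv_21_6 : cval 21 6 = (1 : ℚ) / 6216210 := by
  rw [show (6:ℕ) = 5+1 from rfl, cval_succ, cv_21_5, cv_22_5]; norm_num
lemma cv_22_6 : cval 22 6 = (1 : ℚ) / 8288280 := by
  rw [show (6:ℕ) = 5+1 from rfl, cval_succ, cv_22_5, cv_23_5]; norm_num
lemma cv_23_6 : cval 23 6 = (1 : ℚ) / 10925460 := by
  rw [show (6:ℕ) = 5+1 from rfl, cval_succ, cv_23_5, cv_24_5]; norm_num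
lemma cv_24_6 : cval 24 6 = (1 : ℚ) / 14250600 := by
  rw [show (6:ℕ) = 5+1 from rfl, cval_succ, cv_24_5, cv_25_5]; norm_num
lemma cv_25_6 : cval 25 6 = (1 : ℚ) / 18407025 := by
  rw [show (6:ℕ) = 5+1 from rfl, cval_succ, cv_25_5, cv_26_5]; norm_num
lemma cv_26_6 : cval 26 6 = (1 : ℚ) / 23560992 := by
  rw [show (6:ℕ) = 5+1 from rfl, cval_succ, cv_26_5, cv_27_5]; norm_num
lemma cv_27_6 : cval 27 6 = (1 : ℚ) / 29904336 := by
  rw [show (6:ℕ) = 5+1 from rfl, cval_succ, cv_27_5, cv_28_5]; norm_num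
lemma cv_28_6 : cval 28 6 = (1 : ℚ) / 37657312 := by
  rw [show (6:ℕ) = 5+1 from rfl, cval_succ, cv_28_5, cv_29_5]; norm_num
lemma cv_29_6 : cval 29 6 = (1 : ℚ) / 47071640 := by
  rw [show (6:ℕ) = 5+1 from rfl, cval_succ, cv_29_5, cv_30_5]; norm_num
lemma cv_30_6 : cval 30 6 = (1 : ℚ) / 58433760 := by
  rw [show (6:ℕ) = 5+1 from rfl, cval_succ, cv_30_5, cv_31_5]; norm_num
lemma cv_31_6 : cval 31 6 = (1 : ℚ) / 72068304 := by
  rw [show (6:ℕ) = 5+1 from rfl, cval_succ, cv_31_5, cv_32_5]; norm_num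
lemma cv_32_6 : cval 32 6 = (1 : ℚ) / 88341792 := by
  rw [show (6:ℕ) = 5+1 from rfl, cval_succ, cv_32_5, cv_33_5]; norm_num
lemma cv_33_6 : cval 33 6 = (1 : ℚ) / 107666559 := by
  rw [show (6:ℕ) = 5+1 from rfl, cval_succ, cv_33_5, cv_34_5]; norm_num
lemma cv_34_6 : cval 34 6 = (1 : ℚ) / 130504920 := by
  rw [show (6:ℕ) = 5+1 from rfl, cval_succ, cv_34_5, cv_35_5]; norm_num
lemma cv_35_6 : cval 35 6 = (1 : ℚ) / 157373580 := by
  rw [show (6:ℕ) = 5+1 from rfl, cval_succ, cv_35_5, cv_36_5]; norm_num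
lemma cv_10_7 : cval 10 7 = (1 : ℚ) / 194480 := by
  rw [show (7:ℕ) = 6+1 from rfl, cval_succ, cv_10_6, cv_11_6]; norm_num
lemma cv_11_7 : cval 11 7 = (1 : ℚ) / 350064 := by
  rw [show (7:ℕ) = 6+1 from rfl, cval_succ, cv_11_6, cv_12_6]; norm_num
lemma cv_12_7 : cval 12 7 = (1 : ℚ) / 604656 := by
  rw [show (7:ℕ) = 6+1 from rfl, cval_succ, cv_12_6, cv_13_6]; norm_num
lemma cv_13_7 : cval 13 7 = (1 : ℚ) / 1007760 := by
  rw [show (7:ℕ) = 6+1 from rfl, cval_succ, cv_13_6, cv_14_6]; norm_num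
lemma cv_14_7 : cval 14 7 = (1 : ℚ) / 1627920 := by
  rw [show (7:ℕ) = 6+1 from rfl, cval_succ, cv_14_6, cv_15_6]; norm_num
lemma cv_15_7 : cval 15 7 = (1 : ℚ) / 2558160 := by
  rw [show (7:ℕ) = 6+1 from rfl, cval_succ, cv_15_6, cv_16_6]; norm_num
lemma cv_16_7 : cval 16 7 = (1 : ℚ) / 3922512 := by
  rw [show (7:ℕ) = 6+1 from rfl, cval_succ, cv_16_6, cv_17_6]; norm_num
lemma cv_17_7 : cval 17 7 = (1 : ℚ) / 5883768 := by
  rw [show (7:ℕ) = 6+1 from rfl, cval_succ, cv_17_6, cv_18_6]; norm_num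
lemma cv_18_7 : cval 18 7 = (1 : ℚ) / 8652600 := by
  rw [show (7:ℕ) = 6+1 from rfl, cval_succ, cv_18_6, cv_19_6]; norm_num
lemma cv_19_7 : cval 19 7 = (1 : ℚ) / 12498200 := by
  rw [show (7:ℕ) = 6+1 from rfl, cval_succ, cv_19_6, cv_20_6]; norm_num
lemma cv_20_7 : cval 20 7 = (1 : ℚ) / 17760600 := by
  rw [show (7:ℕ) = 6+1 from rfl, cval_succ, cv_20_6, cv_21_6]; norm_num
lemma cv_21_7 : cval 21 7 = (1 : ℚ) / 24864840 := by
  rw [show (7:ℕ) = 6+1 from rfl, cval_succ, cv_21_6, cv_22_6]; norm_num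
lemma cv_22_7 : cval 22 7 = (1 : ℚ) / 34337160 := by
  rw [show (7:ℕ) = 6+1 from rfl, cval_succ, cv_22_6, cv_23_6]; norm_num
lemma cv_23_7 : cval 23 7 = (1 : ℚ) / 46823400 := by
  rw [show (7:ℕ) = 6+1 from rfl, cval_succ, cv_23_6, cv_24_6]; norm_num
lemma cv_24_7 : cval 24 7 = (1 : ℚ) / 63109800 := by
  rw [show (7:ℕ) = 6+1 from rfl, cval_succ, cv_24_6, cv_25_6]; norm_num
lemma cv_25_7 : cval 25 7 = (1 : ℚ) / 84146400 := by
  rw [show (7:ℕ) = 6+1 from rfl, cval_succ, cv_25_6, cv_26_6]; norm_num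
lemma cv_26_7 : cval 26 7 = (1 : ℚ) / 111073248 := by
  rw [show (7:ℕ) = 6+1 from rfl, cval_succ, cv_26_6, cv_27_6]; norm_num
lemma cv_27_7 : cval 27 7 = (1 : ℚ) / 145249632 := by
  rw [show (7:ℕ) = 6+1 from rfl, cval_succ, cv_27_6, cv_28_6]; norm_num
lemma cv_28_7 : cval 28 7 = (1 : ℚ) / 188286560 := by
  rw [show (7:ℕ) = 6+1 from rfl, cval_succ, cv_28_6, cv_29_6]; norm_num
lemma cv_29_7 : cval 29 7 = (1 : ℚ) / 242082720 := by
  rw [show (7:ℕ) = 6+1 from rfl, cval_succ, cv_29_6, cv_30_6]; norm_num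
lemma cv_30_7 : cval 30 7 = (1 : ℚ) / 308864160 := by
  rw [show (7:ℕ) = 6+1 from rfl, cval_succ, cv_30_6, cv_31_6]; norm_num
lemma cv_31_7 : cval 31 7 = (1 : ℚ) / 391227936 := by
  rw [show (7:ℕ) = 6+1 from rfl, cval_succ, cv_31_6, cv_32_6]; norm_num
lemma cv_32_7 : cval 32 7 = (1 : ℚ) / 492189984 := by
  rw [show (7:ℕ) = 6+1 from rfl, cval_succ, cv_32_6, cv_33_6]; norm_num
lemma cv_33_7 : cval 33 7 = (1 : ℚ) / 615237480 := by
  rw [show (7:ℕ) = 6+1 from rfl, cval_succ, cv_33_6, cv_34_6]; norm_num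
lemma cv_34_7 : cval 34 7 = (1 : ℚ) / 764385960 := by
  rw [show (7:ℕ) = 6+1 from rfl, cval_succ, cv_34_6, cv_35_6]; norm_num
lemma cv_11_8 : cval 11 8 = (1 : ℚ) / 831402 := by
  rw [show (8:ℕ) = 7+1 from rfl, cval_succ, cv_11_7, cv_12_7]; norm_num
lemma cv_12_8 : cval 12 8 = (1 : ℚ) / 1511640 := by
  rw [show (8:ℕ) = 7+1 from rfl, cval_succ, cv_12_7, cv_13_7]; norm_num
lemma cv_13_8 : cval 13 8 = (1 : ℚ) / 2645370 := by
  rw [show (8:ℕ) = 7+1 from rfl, cval_succ, cv_13_7, cv_14_7]; norm_num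
lemma cv_14_8 : cval 14 8 = (1 : ℚ) / 4476780 := by
  rw [show (8:ℕ) = 7+1 from rfl, cval_succ, cv_14_7, cv_15_7]; norm_num
lemma cv_15_8 : cval 15 8 = (1 : ℚ) / 7354710 := by
  rw [show (8:ℕ) = 7+1 from rfl, cval_succ, cv_15_7, cv_16_7]; norm_num
lemma cv_16_8 : cval 16 8 = (1 : ℚ) / 11767536 := by
  rw [show (8:ℕ) = 7+1 from rfl, cval_succ, cv_16_7, cv_17_7]; norm_num
lemma cv_17_8 : cval 17 8 = (1 : ℚ) / 18386775 := by
  rw [show (8:ℕ) = 7+1 from rfl, cval_succ, cv_17_7, cv_18_7]; norm_num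
lemma cv_18_8 : cval 18 8 = (1 : ℚ) / 28120950 := by
  rw [show (8:ℕ) = 7+1 from rfl, cval_succ, cv_18_7, cv_19_7]; norm_num
lemma cv_19_8 : cval 19 8 = (1 : ℚ) / 42181425 := by
  rw [show (8:ℕ) = 7+1 from rfl, cval_succ, cv_19_7, cv_20_7]; norm_num
lemma cv_20_8 : cval 20 8 = (1 : ℚ) / 62162100 := by
  rw [show (8:ℕ) = 7+1 from rfl, cval_succ, cv_20_7, cv_21_7]; norm_num
lemma cv_21_8 : cval 21 8 = (1 : ℚ) / 90135045 := by
  rw [show (8:ℕ) = 7+1 from rfl, cval_succ, cv_21_7, cv_22_7]; norm_num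
lemma cv_22_8 : cval 22 8 = (1 : ℚ) / 128764350 := by
  rw [show (8:ℕ) = 7+1 from rfl, cval_succ, cv_22_7, cv_23_7]; norm_num
lemma cv_23_8 : cval 23 8 = (1 : ℚ) / 181440675 := by
  rw [show (8:ℕ) = 7+1 from rfl, cval_succ, cv_23_7, cv_24_7]; norm_num
lemma cv_24_8 : cval 24 8 = (1 : ℚ) / 252439200 := by
  rw [show (8:ℕ) = 7+1 from rfl, cval_succ, cv_24_7, cv_25_7]; norm_num
lemma cv_25_8 : cval 25 8 = (1 : ℚ) / 347103900 := by
  rw [show (8:ℕ) = 7+1 from rfl, cval_succ, cv_25_7, cv_26_7]; norm_num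
lemma cv_26_8 : cval 26 8 = (1 : ℚ) / 472061304 := by
  rw [show (8:ℕ) = 7+1 from rfl, cval_succ, cv_26_7, cv_27_7]; norm_num
lemma cv_27_8 : cval 27 8 = (1 : ℚ) / 635467140 := by
  rw [show (8:ℕ) = 7+1 from rfl, cval_succ, cv_27_7, cv_28_7]; norm_num
lemma cv_28_8 : cval 28 8 = (1 : ℚ) / 847289520 := by
  rw [show (8:ℕ) = 7+1 from rfl, cval_succ, cv_28_7, cv_29_7]; norm_num
lemma cv_29_8 : cval 29 8 = (1 : ℚ) / 1119632580 := by
  rw [show (8:ℕ) = 7+1 from rfl, cval_succ, cv_29_7, cv_30_7]; norm_num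
lemma cv_30_8 : cval 30 8 = (1 : ℚ) / 1467104760 := by
  rw [show (8:ℕ) = 7+1 from rfl, cval_succ, cv_30_7, cv_31_7]; norm_num
lemma cv_31_8 : cval 31 8 = (1 : ℚ) / 1907236188 := by
  rw [show (8:ℕ) = 7+1 from rfl, cval_succ, cv_31_7, cv_32_7]; norm_num
lemma cv_32_8 : cval 32 8 = (1 : ℚ) / 2460949920 := by
  rw [show (8:ℕ) = 7+1 from rfl, cval_succ, cv_32_7, cv_33_7]; norm_num
lemma cv_33_8 : cval 33 8 = (1 : ℚ) / 3153092085 := by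
  rw [show (8:ℕ) = 7+1 from rfl, cval_succ, cv_33_7, cv_34_7]; norm_num
lemma cv_12_9 : cval 12 9 = (1 : ℚ) / 3527160 := by
  rw [show (9:ℕ) = 8+1 from rfl, cval_succ, cv_12_8, cv_13_8]; norm_num
lemma cv_13_9 : cval 13 9 = (1 : ℚ) / 6466460 := by
  rw [show (9:ℕ) = 8+1 from rfl, cval_succ, cv_13_8, cv_14_8]; norm_num
lemma cv_14_9 : cval 14 9 = (1 : ℚ) / 11440660 := by
  rw [show (9:ℕ) = 8+1 from rfl, cval_succ, cv_14_8, cv_15_8]; norm_num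
lemma cv_15_9 : cval 15 9 = (1 : ℚ) / 19612560 := by
  rw [show (9:ℕ) = 8+1 from rfl, cval_succ, cv_15_8, cv_16_8]; norm_num
lemma cv_16_9 : cval 16 9 = (1 : ℚ) / 32687600 := by
  rw [show (9:ℕ) = 8+1 from rfl, cval_succ, cv_16_8, cv_17_8]; norm_num
lemma cv_17_9 : cval 17 9 = (1 : ℚ) / 53117350 := by
  rw [show (9:ℕ) = 8+1 from rfl, cval_succ, cv_17_8, cv_18_8]; norm_num
lemma cv_18_9 : cval 18 9 = (1 : ℚ) / 84362850 := by
  rw [show (9:ℕ) = 8+1 from rfl, cval_succ, cv_18_8, cv_19_8]; norm_num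
lemma cv_19_9 : cval 19 9 = (1 : ℚ) / 131231100 := by
  rw [show (9:ℕ) = 8+1 from rfl, cval_succ, cv_19_8, cv_20_8]; norm_num
lemma cv_20_9 : cval 20 9 = (1 : ℚ) / 200300100 := by
  rw [show (9:ℕ) = 8+1 from rfl, cval_succ, cv_20_8, cv_21_8]; norm_num
lemma cv_21_9 : cval 21 9 = (1 : ℚ) / 300450150 := by
  rw [show (9:ℕ) = 8+1 from rfl, cval_succ, cv_21_8, cv_22_8]; norm_num
lemma cv_22_9 : cval 22 9 = (1 : ℚ) / 443521650 := by
  rw [show (9:ℕ) = 8+1 from rfl, cval_succ, cv_22_8, cv_23_8]; norm_num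
lemma cv_23_9 : cval 23 9 = (1 : ℚ) / 645122400 := by
  rw [show (9:ℕ) = 8+1 from rfl, cval_succ, cv_23_8, cv_24_8]; norm_num
lemma cv_24_9 : cval 24 9 = (1 : ℚ) / 925610400 := by
  rw [show (9:ℕ) = 8+1 from rfl, cval_succ, cv_24_8, cv_25_8]; norm_num
lemma cv_25_9 : cval 25 9 = (1 : ℚ) / 1311281400 := by
  rw [show (9:ℕ) = 8+1 from rfl, cval_succ, cv_25_8, cv_26_8]; norm_num
lemma cv_26_9 : cval 26 9 = (1 : ℚ) / 1835793960 := by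
  rw [show (9:ℕ) = 8+1 from rfl, cval_succ, cv_26_8, cv_27_8]; norm_num
lemma cv_27_9 : cval 27 9 = (1 : ℚ) / 2541868560 := by
  rw [show (9:ℕ) = 8+1 from rfl, cval_succ, cv_27_8, cv_28_8]; norm_num
lemma cv_28_9 : cval 28 9 = (1 : ℚ) / 3483301360 := by
  rw [show (9:ℕ) = 8+1 from rfl, cval_succ, cv_28_8, cv_29_8]; norm_num
lemma cv_29_9 : cval 29 9 = (1 : ℚ) / 4727337560 := by
  rw [show (9:ℕ) = 8+1 from rfl, cval_succ, cv_29_8, cv_30_8]; norm_num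
lemma cv_30_9 : cval 30 9 = (1 : ℚ) / 6357453960 := by
  rw [show (9:ℕ) = 8+1 from rfl, cval_succ, cv_30_8, cv_31_8]; norm_num
lemma cv_31_9 : cval 31 9 = (1 : ℚ) / 8476605280 := by
  rw [show (9:ℕ) = 8+1 from rfl, cval_succ, cv_31_8, cv_32_8]; norm_num
lemma cv_32_9 : cval 32 9 = (1 : ℚ) / 11210994080 := by
  rw [show (9:ℕ) = 8+1 from rfl, cval_succ, cv_32_8, cv_33_8]; norm_num
lemma cv_12_10 : cval 12 10 = (1 : ℚ) / 7759752 := by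
  rw [show (10:ℕ) = 9+1 from rfl, cval_succ, cv_12_9, cv_13_9]; norm_num
lemma cv_13_10 : cval 13 10 = (1 : ℚ) / 14872858 := by
  rw [show (10:ℕ) = 9+1 from rfl, cval_succ, cv_13_9, cv_14_9]; norm_num
lemma cv_14_10 : cval 14 10 = (1 : ℚ) / 27457584 := by
  rw [show (10:ℕ) = 9+1 from rfl, cval_succ, cv_14_9, cv_15_9]; norm_num
lemma cv_15_10 : cval 15 10 = (1 : ℚ) / 49031400 := by
  rw [show (10:ℕ) = 9+1 from rfl, cval_succ, cv_15_9, cv_16_9]; norm_num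
lemma cv_16_10 : cval 16 10 = (1 : ℚ) / 84987760 := by
  rw [show (10:ℕ) = 9+1 from rfl, cval_succ, cv_16_9, cv_17_9]; norm_num
lemma cv_17_10 : cval 17 10 = (1 : ℚ) / 143416845 := by
  rw [show (10:ℕ) = 9+1 from rfl, cval_succ, cv_17_9, cv_18_9]; norm_num
lemma cv_18_10 : cval 18 10 = (1 : ℚ) / 236215980 := by
  rw [show (10:ℕ) = 9+1 from rfl, cval_succ, cv_18_9, cv_19_9]; norm_num
lemma cv_19_10 : cval 19 10 = (1 : ℚ) / 380570190 := by
  rw [show (10:ℕ) = 9+1 from rfl, cval_succ, cv_19_9, cv_20_9]; norm_num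
lemma cv_20_10 : cval 20 10 = (1 : ℚ) / 600900300 := by
  rw [show (10:ℕ) = 9+1 from rfl, cval_succ, cv_20_9, cv_21_9]; norm_num
lemma cv_21_10 : cval 21 10 = (1 : ℚ) / 931395465 := by
  rw [show (10:ℕ) = 9+1 from rfl, cval_succ, cv_21_9, cv_22_9]; norm_num
lemma cv_22_10 : cval 22 10 = (1 : ℚ) / 1419269280 := by
  rw [show (10:ℕ) = 9+1 from rfl, cval_succ, cv_22_9, cv_23_9]; norm_num
lemma cv_23_10 : cval 23 10 = (1 : ℚ) / 2128903920 := by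
  rw [show (10:ℕ) = 9+1 from rfl, cval_succ, cv_23_9, cv_24_9]; norm_num
lemma cv_24_10 : cval 24 10 = (1 : ℚ) / 3147075360 := by
  rw [show (10:ℕ) = 9+1 from rfl, cval_succ, cv_24_9, cv_25_9]; norm_num
lemma cv_25_10 : cval 25 10 = (1 : ℚ) / 4589484900 := by
  rw [show (10:ℕ) = 9+1 from rfl, cval_succ, cv_25_9, cv_26_9]; norm_num
lemma cv_26_10 : cval 26 10 = (1 : ℚ) / 6608858256 := by
  rw [show (10:ℕ) = 9+1 from rfl, cval_succ, cv_26_9, cv_27_9]; norm_num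
lemma cv_27_10 : cval 27 10 = (1 : ℚ) / 9404913672 := by
  rw [show (10:ℕ) = 9+1 from rfl, cval_succ, cv_27_9, cv_28_9]; norm_num
lemma cv_28_10 : cval 28 10 = (1 : ℚ) / 13236545168 := by
  rw [show (10:ℕ) = 9+1 from rfl, cval_succ, cv_28_9, cv_29_9]; norm_num
lemma cv_29_10 : cval 29 10 = (1 : ℚ) / 18436616484 := by
  rw [show (10:ℕ) = 9+1 from rfl, cval_succ, cv_29_9, cv_30_9]; norm_num
lemma cv_30_10 : cval 30 10 = (1 : ℚ) / 25429815840 := by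
  rw [show (10:ℕ) = 9+1 from rfl, cval_succ, cv_30_9, cv_31_9]; norm_num
lemma cv_31_10 : cval 31 10 = (1 : ℚ) / 34754081648 := by
  rw [show (10:ℕ) = 9+1 from rfl, cval_succ, cv_31_9, cv_32_9]; norm_num
lemma cv_13_11 : cval 13 11 = (1 : ℚ) / 32449872 := by
  rw [show (11:ℕ) = 10+1 from rfl, cval_succ, cv_13_10, cv_14_10]; norm_num
lemma cv_14_11 : cval 14 11 = (1 : ℚ) / 62403600 := by
  rw [show (11:ℕ) = 10+1 from rfl, cval_succ, cv_14_10, cv_15_10]; norm_num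
lemma cv_15_11 : cval 15 11 = (1 : ℚ) / 115892400 := by
  rw [show (11:ℕ) = 10+1 from rfl, cval_succ, cv_15_10, cv_16_10]; norm_num
lemma cv_16_11 : cval 16 11 = (1 : ℚ) / 208606320 := by
  rw [show (11:ℕ) = 10+1 from rfl, cval_succ, cv_16_10, cv_17_10]; norm_num
lemma cv_17_11 : cval 17 11 = (1 : ℚ) / 365061060 := by
  rw [show (11:ℕ) = 10+1 from rfl, cval_succ, cv_17_10, cv_18_10]; norm_num
lemma cv_18_11 : cval 18 11 = (1 : ℚ) / 622751220 := by
  rw [show (11:ℕ) = 10+1 from rfl, cval_succ, cv_18_10, cv_19_10]; norm_num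
lemma cv_19_11 : cval 19 11 = (1 : ℚ) / 1037918700 := by
  rw [show (11:ℕ) = 10+1 from rfl, cval_succ, cv_19_10, cv_20_10]; norm_num
lemma cv_20_11 : cval 20 11 = (1 : ℚ) / 1693446300 := by
  rw [show (11:ℕ) = 10+1 from rfl, cval_succ, cv_20_10, cv_21_10]; norm_num
lemma cv_21_11 : cval 21 11 = (1 : ℚ) / 2709514080 := by
  rw [show (11:ℕ) = 10+1 from rfl, cval_succ, cv_21_10, cv_22_10]; norm_num
lemma cv_22_11 : cval 22 11 = (1 : ℚ) / 4257807840 := by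
  rw [show (11:ℕ) = 10+1 from rfl, cval_succ, cv_22_10, cv_23_10]; norm_num
lemma cv_23_11 : cval 23 11 = (1 : ℚ) / 6580248480 := by
  rw [show (11:ℕ) = 10+1 from rfl, cval_succ, cv_23_10, cv_24_10]; norm_num
lemma cv_24_11 : cval 24 11 = (1 : ℚ) / 10013421600 := by
  rw [show (11:ℕ) = 10+1 from rfl, cval_succ, cv_24_10, cv_25_10]; norm_num
lemma cv_25_11 : cval 25 11 = (1 : ℚ) / 15020132400 := by
  rw [show (11:ℕ) = 10+1 from rfl, cval_succ, cv_25_10, cv_26_10]; norm_num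
lemma cv_26_11 : cval 26 11 = (1 : ℚ) / 22229795952 := by
  rw [show (11:ℕ) = 10+1 from rfl, cval_succ, cv_26_10, cv_27_10]; norm_num
lemma cv_27_11 : cval 27 11 = (1 : ℚ) / 32489701776 := by
  rw [show (11:ℕ) = 10+1 from rfl, cval_succ, cv_27_10, cv_28_10]; norm_num
lemma cv_28_11 : cval 28 11 = (1 : ℚ) / 46929569232 := by
  rw [show (11:ℕ) = 10+1 from rfl, cval_succ, cv_28_10, cv_29_10]; norm_num
lemma cv_29_11 : cval 29 11 = (1 : ℚ) / 67042241760 := by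
  rw [show (11:ℕ) = 10+1 from rfl, cval_succ, cv_29_10, cv_30_10]; norm_num
lemma cv_30_11 : cval 30 11 = (1 : ℚ) / 94783859040 := by
  rw [show (11:ℕ) = 10+1 from rfl, cval_succ, cv_30_10, cv_31_10]; norm_num
lemma cv_14_12 : cval 14 12 = (1 : ℚ) / 135207800 := by
  rw [show (12:ℕ) = 11+1 from rfl, cval_succ, cv_14_11, cv_15_11]; norm_num
lemma cv_15_12 : cval 15 12 = (1 : ℚ) / 260757900 := by
  rw [show (12:ℕ) = 11+1 from rfl, cval_succ, cv_15_11, cv_16_11]; norm_num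
lemma cv_16_12 : cval 16 12 = (1 : ℚ) / 486748080 := by
  rw [show (12:ℕ) = 11+1 from rfl, cval_succ, cv_16_11, cv_17_11]; norm_num
lemma cv_17_12 : cval 17 12 = (1 : ℚ) / 882230895 := by
  rw [show (12:ℕ) = 11+1 from rfl, cval_succ, cv_17_11, cv_18_11]; norm_num
lemma cv_18_12 : cval 18 12 = (1 : ℚ) / 1556878050 := by
  rw [show (12:ℕ) = 11+1 from rfl, cval_succ, cv_18_11, cv_19_11]; norm_num
lemma cv_19_12 : cval 19 12 = (1 : ℚ) / 2681289975 := by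
  rw [show (12:ℕ) = 11+1 from rfl, cval_succ, cv_19_11, cv_20_11]; norm_num
lemma cv_20_12 : cval 20 12 = (1 : ℚ) / 4515856800 := by
  rw [show (12:ℕ) = 11+1 from rfl, cval_succ, cv_20_11, cv_21_11]; norm_num
lemma cv_21_12 : cval 21 12 = (1 : ℚ) / 7451163720 := by
  rw [show (12:ℕ) = 11+1 from rfl, cval_succ, cv_21_11, cv_22_11]; norm_num
lemma cv_22_12 : cval 22 12 = (1 : ℚ) / 12063788880 := by
  rw [show (12:ℕ) = 11+1 from rfl, cval_succ, cv_22_11, cv_23_11]; norm_num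
lemma cv_23_12 : cval 23 12 = (1 : ℚ) / 19192391400 := by
  rw [show (12:ℕ) = 11+1 from rfl, cval_succ, cv_23_11, cv_24_11]; norm_num
lemma cv_24_12 : cval 24 12 = (1 : ℚ) / 30040264800 := by
  rw [show (12:ℕ) = 11+1 from rfl, cval_succ, cv_24_11, cv_25_11]; norm_num
lemma cv_25_12 : cval 25 12 = (1 : ℚ) / 46312074900 := by
  rw [show (12:ℕ) = 11+1 from rfl, cval_succ, cv_25_11, cv_26_11]; norm_num
lemma cv_26_12 : cval 26 12 = (1 : ℚ) / 70394353848 := by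
  rw [show (12:ℕ) = 11+1 from rfl, cval_succ, cv_26_11, cv_27_11]; norm_num
lemma cv_27_12 : cval 27 12 = (1 : ℚ) / 105591530772 := by
  rw [show (12:ℕ) = 11+1 from rfl, cval_succ, cv_27_11, cv_28_11]; norm_num
lemma cv_28_12 : cval 28 12 = (1 : ℚ) / 156431897440 := by
  rw [show (12:ℕ) = 11+1 from rfl, cval_succ, cv_28_11, cv_29_11]; norm_num
lemma cv_29_12 : cval 29 12 = (1 : ℚ) / 229060992680 := by
  rw [show (12:ℕ) = 11+1 from rfl, cval_succ, cv_29_11, cv_30_11]; norm_num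
lemma cv_15_13 : cval 15 13 = (1 : ℚ) / 561632400 := by
  rw [show (13:ℕ) = 12+1 from rfl, cval_succ, cv_15_12, cv_16_12]; norm_num
lemma cv_16_13 : cval 16 13 = (1 : ℚ) / 1085822640 := by
  rw [show (13:ℕ) = 12+1 from rfl, cval_succ, cv_16_12, cv_17_12]; norm_num
lemma cv_17_13 : cval 17 13 = (1 : ℚ) / 2035917450 := by
  rw [show (13:ℕ) = 12+1 from rfl, cval_succ, cv_17_12, cv_18_12]; norm_num
lemma cv_18_13 : cval 18 13 = (1 : ℚ) / 3712555350 := by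
  rw [show (13:ℕ) = 12+1 from rfl, cval_succ, cv_18_12, cv_19_12]; norm_num
lemma cv_19_13 : cval 19 13 = (1 : ℚ) / 6600098400 := by
  rw [show (13:ℕ) = 12+1 from rfl, cval_succ, cv_19_12, cv_20_12]; norm_num
lemma cv_20_13 : cval 20 13 = (1 : ℚ) / 11463328800 := by
  rw [show (13:ℕ) = 12+1 from rfl, cval_succ, cv_20_12, cv_21_12]; norm_num
lemma cv_21_13 : cval 21 13 = (1 : ℚ) / 19487658960 := by
  rw [show (13:ℕ) = 12+1 from rfl, cval_succ, cv_21_12, cv_22_12]; norm_num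
lemma cv_22_13 : cval 22 13 = (1 : ℚ) / 32479431600 := by
  rw [show (13:ℕ) = 12+1 from rfl, cval_succ, cv_22_12, cv_23_12]; norm_num
lemma cv_23_13 : cval 23 13 = (1 : ℚ) / 53148160800 := by
  rw [show (13:ℕ) = 12+1 from rfl, cval_succ, cv_23_12, cv_24_12]; norm_num
lemma cv_24_13 : cval 24 13 = (1 : ℚ) / 85499215200 := by
  rw [show (13:ℕ) = 12+1 from rfl, cval_succ, cv_24_12, cv_25_12]; norm_num
lemma cv_25_13 : cval 25 13 = (1 : ℚ) / 135373757400 := by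
  rw [show (13:ℕ) = 12+1 from rfl, cval_succ, cv_25_12, cv_26_12]; norm_num
lemma cv_26_13 : cval 26 13 = (1 : ℚ) / 211183061544 := by
  rw [show (13:ℕ) = 12+1 from rfl, cval_succ, cv_26_12, cv_27_12]; norm_num
lemma cv_27_13 : cval 27 13 = (1 : ℚ) / 324897017760 := by
  rw [show (13:ℕ) = 12+1 from rfl, cval_succ, cv_27_12, cv_28_12]; norm_num
lemma cv_28_13 : cval 28 13 = (1 : ℚ) / 493362138080 := by
  rw [show (13:ℕ) = 12+1 from rfl, cval_succ, cv_28_12, cv_29_12]; norm_num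
lemma cv_16_14 : cval 16 14 = (1 : ℚ) / 2326762800 := by
  rw [show (14:ℕ) = 13+1 from rfl, cval_succ, cv_16_13, cv_17_13]; norm_num
lemma cv_17_14 : cval 17 14 = (1 : ℚ) / 4508102925 := by
  rw [show (14:ℕ) = 13+1 from rfl, cval_succ, cv_17_13, cv_18_13]; norm_num
lemma cv_18_14 : cval 18 14 = (1 : ℚ) / 8485840800 := by
  rw [show (14:ℕ) = 13+1 from rfl, cval_succ, cv_18_13, cv_19_13]; norm_num
lemma cv_19_14 : cval 19 14 = (1 : ℚ) / 15557374800 := by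
  rw [show (14:ℕ) = 13+1 from rfl, cval_succ, cv_19_13, cv_20_13]; norm_num
lemma cv_20_14 : cval 20 14 = (1 : ℚ) / 27839512800 := by
  rw [show (14:ℕ) = 13+1 from rfl, cval_succ, cv_20_13, cv_21_13]; norm_num
lemma cv_21_14 : cval 21 14 = (1 : ℚ) / 48719147400 := by
  rw [show (14:ℕ) = 13+1 from rfl, cval_succ, cv_21_13, cv_22_13]; norm_num
lemma cv_22_14 : cval 22 14 = (1 : ℚ) / 83518538400 := by
  rw [show (14:ℕ) = 13+1 from rfl, cval_succ, cv_22_13, cv_23_13]; norm_num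
lemma cv_23_14 : cval 23 14 = (1 : ℚ) / 140462996400 := by
  rw [show (14:ℕ) = 13+1 from rfl, cval_succ, cv_23_13, cv_24_13]; norm_num
lemma cv_24_14 : cval 24 14 = (1 : ℚ) / 232069298400 := by
  rw [show (14:ℕ) = 13+1 from rfl, cval_succ, cv_24_13, cv_25_13]; norm_num
lemma cv_25_14 : cval 25 14 = (1 : ℚ) / 377112609900 := by
  rw [show (14:ℕ) = 13+1 from rfl, cval_succ, cv_25_13, cv_26_13]; norm_num
lemma cv_26_14 : cval 26 14 = (1 : ℚ) / 603380175840 := by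
  rw [show (14:ℕ) = 13+1 from rfl, cval_succ, cv_26_13, cv_27_13]; norm_num
lemma cv_27_14 : cval 27 14 = (1 : ℚ) / 951484123440 := by
  rw [show (14:ℕ) = 13+1 from rfl, cval_succ, cv_27_13, cv_28_13]; norm_num
lemma cv_17_15 : cval 17 15 = (1 : ℚ) / 9617286240 := by
  rw [show (15:ℕ) = 14+1 from rfl, cval_succ, cv_17_14, cv_18_14]; norm_num
lemma cv_18_15 : cval 18 15 = (1 : ℚ) / 18668849760 := by
  rw [show (15:ℕ) = 14+1 from rfl, cval_succ, cv_18_14, cv_19_14]; norm_num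
lemma cv_19_15 : cval 19 15 = (1 : ℚ) / 35263382880 := by
  rw [show (15:ℕ) = 14+1 from rfl, cval_succ, cv_19_14, cv_20_14]; norm_num
lemma cv_20_15 : cval 20 15 = (1 : ℚ) / 64958863200 := by
  rw [show (15:ℕ) = 14+1 from rfl, cval_succ, cv_20_14, cv_21_14]; norm_num
lemma cv_21_15 : cval 21 15 = (1 : ℚ) / 116925953760 := by
  rw [show (15:ℕ) = 14+1 from rfl, cval_succ, cv_21_14, cv_22_14]; norm_num
lemma cv_22_15 : cval 22 15 = (1 : ℚ) / 206012394720 := by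
  rw [show (15:ℕ) = 14+1 from rfl, cval_succ, cv_22_14, cv_23_14]; norm_num
lemma cv_23_15 : cval 23 15 = (1 : ℚ) / 355839590880 := by
  rw [show (15:ℕ) = 14+1 from rfl, cval_succ, cv_23_14, cv_24_14]; norm_num
lemma cv_24_15 : cval 24 15 = (1 : ℚ) / 603380175840 := by
  rw [show (15:ℕ) = 14+1 from rfl, cval_succ, cv_24_14, cv_25_14]; norm_num
lemma cv_25_15 : cval 25 15 = (1 : ℚ) / 1005633626400 := by
  rw [show (15:ℕ) = 14+1 from rfl, cval_succ, cv_25_14, cv_26_14]; norm_num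
lemma cv_26_15 : cval 26 15 = (1 : ℚ) / 1649239147296 := by
  rw [show (15:ℕ) = 14+1 from rfl, cval_succ, cv_26_14, cv_27_14]; norm_num
lemma cv_18_16 : cval 18 16 = (1 : ℚ) / 39671305740 := by
  rw [show (16:ℕ) = 15+1 from rfl, cval_succ, cv_18_15, cv_19_15]; norm_num
lemma cv_19_16 : cval 19 16 = (1 : ℚ) / 77138650050 := by
  rw [show (16:ℕ) = 15+1 from rfl, cval_succ, cv_19_15, cv_20_15]; norm_num
lemma cv_20_16 : cval 20 16 = (1 : ℚ) / 146157442200 := by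
  rw [show (16:ℕ) = 15+1 from rfl, cval_succ, cv_20_15, cv_21_15]; norm_num
lemma cv_21_16 : cval 21 16 = (1 : ℚ) / 270391268070 := by
  rw [show (16:ℕ) = 15+1 from rfl, cval_succ, cv_21_15, cv_22_15]; norm_num
lemma cv_22_16 : cval 22 16 = (1 : ℚ) / 489279437460 := by
  rw [show (16:ℕ) = 15+1 from rfl, cval_succ, cv_22_15, cv_23_15]; norm_num
lemma cv_23_16 : cval 23 16 = (1 : ℚ) / 867359002770 := by
  rw [show (16:ℕ) = 15+1 from rfl, cval_succ, cv_23_15, cv_24_15]; norm_num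
lemma cv_24_16 : cval 24 16 = (1 : ℚ) / 1508450439600 := by
  rw [show (16:ℕ) = 15+1 from rfl, cval_succ, cv_24_15, cv_25_15]; norm_num
lemma cv_25_16 : cval 25 16 = (1 : ℚ) / 2576936167650 := by
  rw [show (16:ℕ) = 15+1 from rfl, cval_succ, cv_25_15, cv_26_15]; norm_num
lemma cv_19_17 : cval 19 17 = (1 : ℚ) / 163352435400 := by
  rw [show (17:ℕ) = 16+1 from rfl, cval_succ, cv_19_16, cv_20_16]; norm_num
lemma cv_20_17 : cval 20 17 = (1 : ℚ) / 318107374200 := by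
  rw [show (17:ℕ) = 16+1 from rfl, cval_succ, cv_20_16, cv_21_16]; norm_num
lemma cv_21_17 : cval 21 17 = (1 : ℚ) / 604404010980 := by
  rw [show (17:ℕ) = 16+1 from rfl, cval_succ, cv_21_16, cv_22_16]; norm_num
lemma cv_22_17 : cval 22 17 = (1 : ℚ) / 1122464591820 := by
  rw [show (17:ℕ) = 16+1 from rfl, cval_succ, cv_22_16, cv_23_16]; norm_num
lemma cv_23_17 : cval 23 17 = (1 : ℚ) / 2040844712400 := by
  rw [show (17:ℕ) = 16+1 from rfl, cval_succ, cv_23_16, cv_24_16]; norm_num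
lemma cv_24_17 : cval 24 17 = (1 : ℚ) / 3638027530800 := by
  rw [show (17:ℕ) = 16+1 from rfl, cval_succ, cv_24_16, cv_25_16]; norm_num
lemma cv_20_18 : cval 20 18 = (1 : ℚ) / 671560012200 := by
  rw [show (18:ℕ) = 17+1 from rfl, cval_succ, cv_20_17, cv_21_17]; norm_num
lemma cv_21_18 : cval 21 18 = (1 : ℚ) / 1309542023790 := by
  rw [show (18:ℕ) = 17+1 from rfl, cval_succ, cv_21_17, cv_22_17]; norm_num
lemma cv_22_18 : cval 22 18 = (1 : ℚ) / 2494365759600 := by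
  rw [show (18:ℕ) = 17+1 from rfl, cval_succ, cv_22_17, cv_23_17]; norm_num
lemma cv_23_18 : cval 23 18 = (1 : ℚ) / 4648590733800 := by
  rw [show (18:ℕ) = 17+1 from rfl, cval_succ, cv_23_17, cv_24_17]; norm_num
lemma cv_21_19 : cval 21 19 = (1 : ℚ) / 2756930576400 := by
  rw [show (19:ℕ) = 18+1 from rfl, cval_succ, cv_21_18, cv_22_18]; norm_num
lemma cv_22_19 : cval 22 19 = (1 : ℚ) / 5382578744400 := by
  rw [show (19:ℕ) = 18+1 from rfl, cval_succ, cv_22_18, cv_23_18]; norm_num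
lemma cv_21_20 : cval 21 20 = (1 : ℚ) / 5651707681620 := by
  rw [show (20:ℕ) = 19+1 from rfl, cval_succ, cv_21_19, cv_22_19]; norm_num

lemma BQ_le : (∑ p ∈ Finset.range 11 ×ˢ Finset.range 11,
    cval (1 + (if p.1 < 10 then p.1 + 1 else p.1) + (if p.2 < 10 then p.2 + 1 else p.2))
      (p.1 + p.2)) ≤ 70318847 / 148728580 := by
  rw [Finset.sum_product]
  norm_num [Finset.sum_range_succ, cv_3_0, cv_4_1, cv_5_2, cv_6_3, cv_7_4, cv_8_5, cv_9_6,
    cv_10_7, cv_11_8, cv_12_9, cv_12_10, cv_13_10, cv_13_11, cv_14_11, cv_14_12, cv_15_12,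
    cv_15_13, cv_16_13, cv_16_14, cv_17_14, cv_17_15, cv_18_15, cv_18_16, cv_19_16, cv_19_17,
    cv_20_17, cv_20_18, cv_21_18, cv_21_19, cv_21_20]


section final
variable (k : ℕ) [NeZero k]

lemma bad_subset (hk : 22 ≤ k) {t : ℕ} (f : Fin t → ik k) (hbad : eV k 0 ∉ Sp f) :
    ∃ r, r ≤ 10 ∧ ∃ r', r' ≤ 10 ∧
      (∀ a ∈ Mset k r r', a ∉ Set.range f) ∧ (∀ a ∈ Pset k r r', a ∈ Set.range f) := by
  have h0 : Sum.inl (((0:ℕ) : Fin k)) ∉ Set.range f := fun h =>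
    hbad ((Gfam_inl k 0 (by omega)) ▸ mem_Sp k f h)
  obtain ⟨r, hr10, hpre, hrQ, hRF⟩ := runs (Q := fun i => Sum.inr ((i : Fin k)) ∈ Set.range f)
    (R := fun j => Sum.inl ((j : Fin k)) ∈ Set.range f) 10
    (fun j h1 h2 hp hR => hbad (chain_cw k f j h1 (by omega) hp hR))
  obtain ⟨r', hr'10, hpre', hr'Q, hRF'⟩ := runs
    (Q := fun i => Sum.inr (((k - 1 - i : ℕ) : Fin k)) ∈ Set.range f)
    (R := fun j => Sum.inl (((k - j : ℕ) : Fin k)) ∈ Set.range f) 10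
    (fun j h1 h2 hp hR => hbad (chain_ccw k f j h1 (by omega) hp hR))
  refine ⟨r, hr10, r', hr'10, ?_, ?_⟩
  · intro a ha
    rw [mem_Mset] at ha
    rcases ha with rfl | ⟨j, h1, h2, rfl⟩ | ⟨hlt, rfl⟩ | ⟨j, h1, h2, rfl⟩ | ⟨hlt, rfl⟩
    · exact h0
    · exact hRF j h1 h2
    · exact hrQ hlt
    · exact hRF' j h1 h2
    · exact hr'Q hlt
  · intro a ha
    rw [mem_Pset] at ha
    rcases ha with ⟨i, hi, rfl⟩ | ⟨i, hi, rfl⟩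
    · exact hpre i hi
    · exact hpre' i hi

lemma natCard_split {α : Type*} [Finite α] (p q : α → Prop) :
    Nat.card {x // p x} ≤ Nat.card {x // q x} + Nat.card {x // p x ∧ ¬ q x} := by
  classical
  have hinj : Function.Injective (fun x : {x // p x} =>
      if h : q x.1 then (Sum.inl ⟨x.1, h⟩ : {x // q x} ⊕ {x // p x ∧ ¬ q x})
      else Sum.inr ⟨x.1, x.2, h⟩) := by
    rintro ⟨x, hx⟩ ⟨y, hy⟩ h
    by_cases h1 : q x <;> by_cases h2 : q y <;> simp [h1, h2] at h <;> exact Subtype.ext h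
  calc Nat.card {x // p x} ≤ Nat.card ({x // q x} ⊕ {x // p x ∧ ¬ q x}) :=
        Nat.card_le_card_of_injective _ hinj
    _ = _ := Nat.card_sum

lemma natCard_subtype_le_sum {α : Type*} [Finite α] {β : Type*} (s : Finset β)
    (p : α → Prop) (q : β → α → Prop) (h : ∀ x, p x → ∃ i ∈ s, q i x) :
    Nat.card {x // p x} ≤ ∑ i ∈ s, Nat.card {x // q i x} := by
  classical
  induction s using Finset.induction_on generalizing p with
  | empty =>
    have : IsEmpty {x // p x} := ⟨fun ⟨x, hx⟩ => by
      obtain ⟨i, hi, -⟩ := h x hx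
      exact absurd hi (Finset.notMem_empty i)⟩
    simp [Nat.card_of_isEmpty]
  | @insert i s hi ih =>
    have h2 : ∀ x, (p x ∧ ¬ q i x) → ∃ j ∈ s, q j x := by
      rintro x ⟨hx, hqx⟩
      obtain ⟨j, hj, hqj⟩ := h x hx
      rcases Finset.mem_insert.mp hj with rfl | hj'
      · exact absurd hqj hqx
      · exact ⟨j, hj', hqj⟩
    calc Nat.card {x // p x} ≤ Nat.card {x // q i x} + Nat.card {x // p x ∧ ¬ q i x} :=
          natCard_split p (q i)
      _ ≤ Nat.card {x // q i x} + ∑ j ∈ s, Nat.card {x // q j x} := by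
          exact Nat.add_le_add_left (ih _ h2) _
      _ = ∑ j ∈ insert i s, Nat.card {x // q j x} := by rw [Finset.sum_insert hi]

lemma card_bad_le (hk : 22 ≤ k) (t : ℕ) :
    Nat.card {f : Fin t → ik k //
        eV k 0 ∉ Submodule.span (ZMod 2) (Set.range (Gfam k ∘ f))} ≤
      ∑ p ∈ Finset.range 11 ×ˢ Finset.range 11,
        cnt (ik k) t (Mset k p.1 p.2) (Pset k p.1 p.2) := by
  refine natCard_subtype_le_sum (Finset.range 11 ×ˢ Finset.range 11)
    (fun f : Fin t → ik k => eV k 0 ∉ Submodule.span (ZMod 2) (Set.range (Gfam k ∘ f)))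
    (fun p f => (∀ a ∈ Mset k p.1 p.2, a ∉ Set.range f) ∧
      (∀ a ∈ Pset k p.1 p.2, a ∈ Set.range f)) ?_
  intro f hf
  obtain ⟨r, hr, r', hr', hM, hP⟩ := bad_subset k hk f hf
  exact ⟨(r, r'), by simp only [Finset.mem_product, Finset.mem_range]; omega, hM, hP⟩

lemma raExp_le (hk : 22 ≤ k) :
    raExp (Gfam k) (eV k 0) ≤ ((2*k : ℕ) : ℝ) *
      (((∑ p ∈ Finset.range 11 ×ˢ Finset.range 11,
        cval (1 + (if p.1 < 10 then p.1 + 1 else p.1) + (if p.2 < 10 then p.2 + 1 else p.2))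
          (p.1 + p.2) : ℚ) : ℝ)) := by
  have hcard : Fintype.card (ik k) = 2 * k := by
    simp only [Fintype.card_sum, Fintype.card_fin]
    omega
  set B := Finset.range 11 ×ˢ Finset.range 11 with hB
  set g : ℕ × ℕ → ℕ → ℝ := fun p t =>
    (cnt (ik k) t (Mset k p.1 p.2) (Pset k p.1 p.2) : ℝ) / ((2*k : ℕ) : ℝ) ^ t with hgdef
  have hg : ∀ p ∈ B, Summable (g p) ∧
      ∑' t, g p t = ((2*k : ℕ) : ℝ) *
        ((cval (1 + (if p.1 < 10 then p.1 + 1 else p.1) + (if p.2 < 10 then p.2 + 1 else p.2))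
          (p.1 + p.2) : ℚ) : ℝ) := by
    intro p hp
    have hp1 : p.1 ≤ 10 ∧ p.2 ≤ 10 := by
      simp only [hB, Finset.mem_product, Finset.mem_range] at hp
      omega
    have := cnt_tsum (ι := ik k) (2*k) hcard.symm (Pset k p.1 p.2) (Mset k p.1 p.2)
      (Mset_nonempty k) (MP_disjoint k hk hp1.1 hp1.2)
    rwa [Mset_card k hk hp1.1 hp1.2, Pset_card k hk hp1.1 hp1.2] at this
  set a : ℕ → ℝ := fun t =>
    (Nat.card {f : Fin t → ik k //
      eV k 0 ∉ Submodule.span (ZMod 2) (Set.range (Gfam k ∘ f))} : ℝ) / ((2*k : ℕ) : ℝ) ^ t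
    with hadef
  have hb : Summable (fun t => ∑ p ∈ B, g p t) :=
    summable_sum (fun p hp => (hg p hp).1)
  have hpow : ∀ t : ℕ, (0:ℝ) < ((2*k : ℕ) : ℝ) ^ t := by
    intro t
    apply pow_pos
    exact_mod_cast (by omega : 0 < 2*k)
  have hab : ∀ t, a t ≤ ∑ p ∈ B, g p t := by
    intro t
    have h1 := card_bad_le k hk t
    calc a t ≤ ((∑ p ∈ B, cnt (ik k) t (Mset k p.1 p.2) (Pset k p.1 p.2) : ℕ) : ℝ) /
        ((2*k : ℕ) : ℝ) ^ t := by
          apply (div_le_div_iff_of_pos_right (hpow t)).mpr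
          exact_mod_cast h1
      _ = ∑ p ∈ B, g p t := by
          rw [Nat.cast_sum, Finset.sum_div]
  have ha : Summable a :=
    Summable.of_nonneg_of_le (fun t => by positivity) hab hb
  have e1 : raExp (Gfam k) (eV k 0) = ∑' t, a t := by
    rw [raExp]
    exact tsum_congr (fun t => by rw [hcard])
  rw [e1]
  calc ∑' t, a t ≤ ∑' t, ∑ p ∈ B, g p t := Summable.tsum_le_tsum hab ha hb
    _ = ∑ p ∈ B, ∑' t, g p t := Summable.tsum_finsetSum (fun p hp => (hg p hp).1)
    _ = ∑ p ∈ B, ((2*k : ℕ) : ℝ) *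
        ((cval (1 + (if p.1 < 10 then p.1 + 1 else p.1) + (if p.2 < 10 then p.2 + 1 else p.2))
          (p.1 + p.2) : ℚ) : ℝ) := Finset.sum_congr rfl (fun p hp => (hg p hp).2)
    _ = _ := by
      rw [← Finset.mul_sum]
      congr 1
      rw [Rat.cast_sum]

end final


/-- `limsup_{k→∞} E[τ_F(G_k)]/k ≤ 70318847/74364290 < 0.9456`, resolving
Conjecture 1 of Bar-Lev, Kolikant, Yaakobi (2023). -/
theorem stmt19 :
    Filter.limsup (fun k : ℕ =>
      raExp (Gfam k) (fun j : Fin k => if (j : ℕ) = 0 then (1 : ZMod 2) else 0)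
        / (k : ℝ)) Filter.atTop ≤ 70318847 / 74364290 ∧
    (70318847 : ℝ) / 74364290 < 0.9456 := by
  constructor
  · have hev : ∀ᶠ (k : ℕ) in Filter.atTop,
        raExp (Gfam k) (fun j : Fin k => if (j : ℕ) = 0 then (1 : ZMod 2) else 0) / (k : ℝ)
          ≤ 70318847 / 74364290 := by
      filter_upwards [Filter.eventually_ge_atTop 22] with k hk
      haveI : NeZero k := ⟨by omega⟩
      have h1 : raExp (Gfam k) (fun j : Fin k => if (j : ℕ) = 0 then (1 : ZMod 2) else 0)
          ≤ ((2*k : ℕ) : ℝ) * (((∑ p ∈ Finset.range 11 ×ˢ Finset.range 11,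
            cval (1 + (if p.1 < 10 then p.1 + 1 else p.1) + (if p.2 < 10 then p.2 + 1 else p.2))
              (p.1 + p.2) : ℚ) : ℝ)) := raExp_le k hk
      have hC : (((∑ p ∈ Finset.range 11 ×ˢ Finset.range 11,
          cval (1 + (if p.1 < 10 then p.1 + 1 else p.1) + (if p.2 < 10 then p.2 + 1 else p.2))
            (p.1 + p.2) : ℚ) : ℝ)) ≤ 70318847 / 148728580 := by
        have h2 : ((∑ p ∈ Finset.range 11 ×ˢ Finset.range 11,
            cval (1 + (if p.1 < 10 then p.1 + 1 else p.1) + (if p.2 < 10 then p.2 + 1 else p.2))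
              (p.1 + p.2) : ℚ) : ℝ) ≤ (((70318847 : ℚ) / 148728580 : ℚ) : ℝ) :=
          Rat.cast_le.mpr BQ_le
        refine h2.trans (le_of_eq ?_)
        norm_num
      have hk0 : (0:ℝ) < (k:ℝ) := by exact_mod_cast (by omega : 0 < k)
      rw [div_le_iff₀ hk0]
      calc raExp (Gfam k) (fun j : Fin k => if (j : ℕ) = 0 then (1 : ZMod 2) else 0)
          ≤ _ := h1
        _ ≤ ((2*k : ℕ) : ℝ) * (70318847 / 148728580) := by
            apply mul_le_mul_of_nonneg_left hC (by positivity)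
        _ = 70318847 / 74364290 * (k:ℝ) := by
            push_cast
            ring
    have hnn : ∀ i : ℕ, (0:ℝ) ≤
        raExp (Gfam i) (fun j : Fin i => if (j : ℕ) = 0 then (1 : ZMod 2) else 0) / (i : ℝ) := by
      intro i
      apply div_nonneg _ (Nat.cast_nonneg i)
      apply tsum_nonneg
      intro t
      positivity
    exact Filter.limsup_le_of_le (Filter.isCoboundedUnder_le_of_le _ hnn) hev
  · norm_num
end
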